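/- arXiv:2602.14522 — 7 statements merged into one kernel-verified Lean document; each statement's English description precedes it below -/
import Mathlib

section
/- Let Ω ⊂ ℝ² be a bounded open set. Let {a_k}_{k∈ℕ} ⊂ Ω with d_k := dist(a_k, ∂Ω) → 0 as k → ∞, and for each k let P_k ∈ ∂Ω with |a_k − P_k| = d_k and let S_k = {t a_k + (1−t) P_k : t ∈ [0,1]} be the closed segment joining a_k to P_k. Let v_k, v ∈ L²(Ω) and f_k = (f_{k,1}, f_{k,2}), f = (f₁, f₂) ∈ L²(Ω, ℝ²) satisfy: (i) for every k and every i ∈ {1,2}, ∫_Ω v_k ∂φ/∂x_i dx = −∫_Ω f_{k,i} φ dx for all smooth compactly supported φ with support contained in Ω ∖ S_k; (ii) v_k ⇀ v weakly in L²(Ω) and f_k ⇀ f weakly in L²(Ω, ℝ²) as k → ∞. Then ∫_Ω v ∂φ/∂x_i dx = −∫_Ω f_i φ dx for every φ ∈ C_c^∞(Ω) and i ∈ {1,2}; that is, v has weak gradient f on all of Ω. -/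
open MeasureTheory Metric Set Filter

/-- Mosco-type convergence: if `v_k` has weak gradient `f_k` away from the segment
`S_k` joining `a_k` to its nearest boundary point `P_k`, the distances
`dist(a_k, ∂Ω) → 0`, and `v_k ⇀ v`, `f_k ⇀ f` weakly in `L²(Ω)`, then `v` has weak
gradient `f` on all of `Ω`. -/
theorem weak_gradient_of_limit
    (Ω : Set (EuclideanSpace ℝ (Fin 2))) (hΩopen : IsOpen Ω)
    (hΩbdd : Bornology.IsBounded Ω)
    (a P : ℕ → EuclideanSpace ℝ (Fin 2))
    (ha : ∀ k, a k ∈ Ω) (hP : ∀ k, P k ∈ frontier Ω)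
    (hPdist : ∀ k, dist (a k) (P k) = Metric.infDist (a k) (frontier Ω))
    (hd0 : Tendsto (fun k => Metric.infDist (a k) (frontier Ω)) atTop (nhds 0))
    (v : ℕ → EuclideanSpace ℝ (Fin 2) → ℝ) (vlim : EuclideanSpace ℝ (Fin 2) → ℝ)
    (f : ℕ → EuclideanSpace ℝ (Fin 2) → EuclideanSpace ℝ (Fin 2))
    (flim : EuclideanSpace ℝ (Fin 2) → EuclideanSpace ℝ (Fin 2))
    (hv2 : ∀ k, MemLp (v k) 2 (volume.restrict Ω))
    (hvlim2 : MemLp vlim 2 (volume.restrict Ω))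
    (hf2 : ∀ k (i : Fin 2), MemLp (fun x => f k x i) 2 (volume.restrict Ω))
    (hflim2 : ∀ i : Fin 2, MemLp (fun x => flim x i) 2 (volume.restrict Ω))
    (hweak_grad : ∀ (k : ℕ) (i : Fin 2) (φ : EuclideanSpace ℝ (Fin 2) → ℝ),
      ContDiff ℝ (⊤ : ℕ∞) φ → HasCompactSupport φ →
      tsupport φ ⊆ Ω \ segment ℝ (a k) (P k) →
      ∫ x in Ω, v k x * fderiv ℝ φ x (EuclideanSpace.single i 1)
        = -∫ x in Ω, f k x i * φ x)
    (hv_weakconv : ∀ g : EuclideanSpace ℝ (Fin 2) → ℝ,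
      MemLp g 2 (volume.restrict Ω) →
      Tendsto (fun k => ∫ x in Ω, v k x * g x) atTop
        (nhds (∫ x in Ω, vlim x * g x)))
    (hf_weakconv : ∀ g : EuclideanSpace ℝ (Fin 2) → ℝ,
      MemLp g 2 (volume.restrict Ω) → ∀ i : Fin 2,
      Tendsto (fun k => ∫ x in Ω, f k x i * g x) atTop
        (nhds (∫ x in Ω, flim x i * g x))) :
    ∀ φ : EuclideanSpace ℝ (Fin 2) → ℝ, ContDiff ℝ (⊤ : ℕ∞) φ → HasCompactSupport φ →
      tsupport φ ⊆ Ω → ∀ i : Fin 2,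
      ∫ x in Ω, vlim x * fderiv ℝ φ x (EuclideanSpace.single i 1)
        = -∫ x in Ω, flim x i * φ x := by
  intro φ hφ hφc hφΩ i
  -- handle trivial case tsupport φ = ∅
  by_cases hKne : (tsupport φ).Nonempty
  swap
  · have hφ0 : φ = 0 := by
      funext x
      by_contra hx
      exact hKne ⟨x, subset_tsupport φ hx⟩
    have h1 : ∀ x, fderiv ℝ φ x (EuclideanSpace.single i 1) = 0 := by
      intro x
      rw [hφ0, show (0 : EuclideanSpace ℝ (Fin 2) → ℝ) = fun _ => (0:ℝ) from rfl,
        fderiv_fun_const]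
      rfl
    have e1 : ∫ x in Ω, vlim x * fderiv ℝ φ x (EuclideanSpace.single i 1) = 0 := by
      simp only [h1, mul_zero, integral_zero]
    have e2 : ∫ x in Ω, flim x i * φ x = 0 := by simp [hφ0]
    rw [e1, e2, neg_zero]
  have hFne : (frontier Ω).Nonempty := ⟨P 0, hP 0⟩
  -- positive distance from tsupport φ to frontier Ω
  obtain ⟨x0, hx0K, hx0min⟩ :=
    IsCompact.exists_isMinOn hφc hKne (continuous_infDist_pt (frontier Ω)).continuousOn
  have hδpos : 0 < infDist x0 (frontier Ω) := by
    rw [← (IsClosed.notMem_iff_infDist_pos isClosed_frontier hFne)]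
    intro hx0F
    have h := hΩopen.inter_frontier_eq
    rw [Set.eq_empty_iff_forall_notMem] at h
    exact h x0 ⟨hφΩ hx0K, hx0F⟩
  set δ := infDist x0 (frontier Ω) with hδ
  -- eventually the segment avoids tsupport φ
  have hev : ∀ᶠ k in atTop, tsupport φ ⊆ Ω \ segment ℝ (a k) (P k) := by
    filter_upwards [hd0.eventually (eventually_lt_nhds hδpos)] with k hk
    intro x hx
    refine ⟨hφΩ hx, fun hxS => ?_⟩
    have hseg : segment ℝ (a k) (P k) ⊆ closedBall (P k) (dist (a k) (P k)) :=
      (convex_closedBall _ _).segment_subset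
        (mem_closedBall.mpr le_rfl) (mem_closedBall_self dist_nonneg)
    have h1 : dist x (P k) ≤ dist (a k) (P k) := hseg hxS
    have h2 : infDist x (frontier Ω) ≤ dist x (P k) := infDist_le_dist_of_mem (hP k)
    have h3 : infDist x (frontier Ω) < δ := by
      calc infDist x (frontier Ω) ≤ dist (a k) (P k) := le_trans h2 h1
        _ = infDist (a k) (frontier Ω) := hPdist k
        _ < δ := hk
    exact absurd h3 (not_lt.mpr (hx0min hx))
  -- the eventual identity
  have heq : ∀ᶠ k in atTop,
      ∫ x in Ω, v k x * fderiv ℝ φ x (EuclideanSpace.single i 1)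
        = -∫ x in Ω, f k x i * φ x := by
    filter_upwards [hev] with k hk
    exact hweak_grad k i φ hφ hφc hk
  -- Memℒp of test functions
  have hφcont : Continuous φ := hφ.continuous
  have hφmem : MemLp φ 2 (volume.restrict Ω) :=
    (hφcont.memLp_of_hasCompactSupport (μ := volume) hφc).restrict Ω
  have hgc : Continuous (fun x => fderiv ℝ φ x (EuclideanSpace.single i 1)) := by
    have : Continuous (fderiv ℝ φ) := hφ.continuous_fderiv (by simp)
    exact (ContinuousLinearMap.apply ℝ ℝ (EuclideanSpace.single i 1)).continuous.comp this
  have hgcs : HasCompactSupport (fun x => fderiv ℝ φ x (EuclideanSpace.single i 1)) := by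
    apply HasCompactSupport.intro hφc
    intro x hx
    have hev0 : φ =ᶠ[nhds x] 0 := by
      have : (tsupport φ)ᶜ ∈ nhds x :=
        (isClosed_tsupport φ).isOpen_compl.mem_nhds hx
      filter_upwards [this] with y hy
      exact image_eq_zero_of_notMem_tsupport hy
    have : fderiv ℝ φ x = fderiv ℝ (0 : EuclideanSpace ℝ (Fin 2) → ℝ) x :=
      Filter.EventuallyEq.fderiv_eq hev0
    rw [this, show (0 : EuclideanSpace ℝ (Fin 2) → ℝ) = fun _ => (0:ℝ) from rfl,
      fderiv_fun_const]
    rfl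
  have hgmem : MemLp (fun x => fderiv ℝ φ x (EuclideanSpace.single i 1)) 2
      (volume.restrict Ω) :=
    (hgc.memLp_of_hasCompactSupport (μ := volume) hgcs).restrict Ω
  have h1 := hv_weakconv _ hgmem
  have h2 := (hf_weakconv φ hφmem i).neg
  exact tendsto_nhds_unique h1 (h2.congr' (heq.mono fun k hk => hk.symm))
end

section
/- Let Ω ⊂ ℝ² be a bounded open set. Let {a_k}_{k∈ℕ} ⊂ Ω with d_k := dist(a_k, ∂Ω) → 0 as k → ∞, and for each k let P_k ∈ ∂Ω with |a_k − P_k| = d_k and let S_k = {t a_k + (1−t) P_k : t ∈ [0,1]}. Set K = ⋃_{k∈ℕ} S_k. Then K has two-dimensional Lebesgue measure zero and the set Ω ∖ K is open. -/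
open MeasureTheory Metric Set Filter

lemma segment_volume_zero (x y : EuclideanSpace ℝ (Fin 2)) :
    volume (segment ℝ x y) = 0 := by
  have hsub : segment ℝ x y ⊆ (affineSpan ℝ ({x, y} : Set (EuclideanSpace ℝ (Fin 2))) :
      Set (EuclideanSpace ℝ (Fin 2))) := by
    rw [← convexHull_pair]
    exact convexHull_subset_affineSpan _
  refine measure_mono_null hsub (MeasureTheory.Measure.addHaar_affineSubspace _ _ ?_)
  intro h
  have hd : (affineSpan ℝ ({x, y} : Set (EuclideanSpace ℝ (Fin 2)))).direction = ⊤ := by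
    rw [h]; exact AffineSubspace.direction_top _ _ _
  rw [direction_affineSpan, vectorSpan_pair] at hd
  have h1 : Module.finrank ℝ (ℝ ∙ (x - y)) ≤ 1 := by
    simpa using finrank_span_le_card ({x - y} : Set (EuclideanSpace ℝ (Fin 2)))
  rw [show ({x -ᵥ y} : Set (EuclideanSpace ℝ (Fin 2))) = {x - y} from rfl] at hd
  rw [hd] at h1
  have : Module.finrank ℝ (⊤ : Submodule ℝ (EuclideanSpace ℝ (Fin 2))) = 2 := by
    simp [finrank_euclideanSpace]
  omega

/-- The union `K` of the segments joining the poles `a_k` to their nearest boundary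
points `P_k` has two-dimensional Lebesgue measure zero, and `Ω \ K` is open. -/
theorem union_of_segments_null_and_complement_open
    (Ω : Set (EuclideanSpace ℝ (Fin 2))) (hΩopen : IsOpen Ω)
    (hΩbdd : Bornology.IsBounded Ω)
    (a P : ℕ → EuclideanSpace ℝ (Fin 2))
    (ha : ∀ k, a k ∈ Ω) (hP : ∀ k, P k ∈ frontier Ω)
    (hPdist : ∀ k, dist (a k) (P k) = Metric.infDist (a k) (frontier Ω))
    (hd0 : Tendsto (fun k => Metric.infDist (a k) (frontier Ω)) atTop (nhds 0))
    (K : Set (EuclideanSpace ℝ (Fin 2)))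
    (hK : K = ⋃ k : ℕ, segment ℝ (a k) (P k)) :
    volume K = 0 ∧ IsOpen (Ω \ K) := by
  constructor
  · rw [hK]
    exact measure_iUnion_null fun k => segment_volume_zero _ _
  · rw [isOpen_iff_mem_nhds]
    intro x hx
    obtain ⟨hxΩ, hxK⟩ := hx
    have hfr : (frontier Ω).Nonempty := ⟨P 0, hP 0⟩
    have hxfr : x ∉ frontier Ω := by
      rw [hΩopen.frontier_eq]
      exact fun h => h.2 hxΩ
    have hδ : 0 < infDist x (frontier Ω) :=
      (isClosed_frontier.notMem_iff_infDist_pos hfr).mp hxfr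
    set δ := infDist x (frontier Ω) with hδdef
    -- find N such that for k ≥ N, d_k < δ/2
    have h2 : ∀ᶠ k in atTop, infDist (a k) (frontier Ω) < δ / 2 :=
      (tendsto_order.mp hd0).2 _ (by linarith)
    obtain ⟨N, hN⟩ := eventually_atTop.mp h2
    -- the finitely many early segments form a closed set not containing x
    set F : Set (EuclideanSpace ℝ (Fin 2)) := ⋃ k ∈ Finset.range N, segment ℝ (a k) (P k)
      with hF
    have hFclosed : IsClosed F := by
      apply Set.Finite.isClosed_biUnion (Finset.finite_toSet _)
      intro k _
      have : IsCompact (segment ℝ (a k) (P k)) := by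
        rw [segment_eq_image]
        exact isCompact_Icc.image (by continuity)
      exact this.isClosed
    have hxF : x ∉ F := by
      intro hxF
      apply hxK
      rw [hK]
      obtain ⟨k, _, hk⟩ := Set.mem_iUnion₂.mp hxF
      exact Set.mem_iUnion.mpr ⟨k, hk⟩
    -- the open neighborhood
    have hU : Ω ∩ ball x (δ / 2) ∩ Fᶜ ∈ nhds x := by
      refine ((hΩopen.inter isOpen_ball).inter hFclosed.isOpen_compl).mem_nhds ?_
      exact ⟨⟨hxΩ, mem_ball_self (by linarith)⟩, hxF⟩
    refine Filter.mem_of_superset hU ?_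
    rintro y ⟨⟨hyΩ, hyb⟩, hyF⟩
    refine ⟨hyΩ, ?_⟩
    intro hyK
    rw [hK] at hyK
    obtain ⟨k, hyk⟩ := Set.mem_iUnion.mp hyK
    by_cases hkN : k < N
    · exact hyF (Set.mem_biUnion (Finset.mem_range.mpr hkN) hyk)
    · -- k ≥ N : segment k lies within δ/2 of frontier, but y is far
      have hdk : infDist (a k) (frontier Ω) < δ / 2 := hN k (le_of_not_gt hkN)
      have hseg : segment ℝ (a k) (P k) ⊆ closedBall (P k) (infDist (a k) (frontier Ω)) := by
        apply (convex_closedBall _ _).segment_subset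
        · exact mem_closedBall.mpr (le_of_eq (hPdist k))
        · exact mem_closedBall_self infDist_nonneg
      have h1 : infDist y (frontier Ω) ≤ infDist (a k) (frontier Ω) := by
        have := hseg hyk
        rw [mem_closedBall] at this
        exact le_trans (infDist_le_dist_of_mem (hP k)) this
      have h2 : δ ≤ infDist y (frontier Ω) + dist x y :=
        infDist_le_infDist_add_dist
      have h3 : dist x y < δ / 2 := by
        rw [mem_ball] at hyb
        rwa [dist_comm]
      linarith
end

section
/- Let Ω ⊂ ℂ be a bounded open set and a₀ ∈ ∂Ω. Let Φ : ℂ → ℂ and g : ℂ → ℂ be such that g is continuous and nonvanishing on the closure of Ω, and Φ is uniformly differentiable on the closure of Ω with complex-linear differential given by multiplication by g: for every ε > 0 there is δ > 0 such that |Φ(y) − Φ(x) − g(x)(y − x)| ≤ ε|y − x| whenever x, y lie in the closure of Ω and |y − x| ≤ δ. Assume Re Φ(x) > 0 for all x ∈ Ω, and that there is a neighborhood U of a₀ such that Re Φ(x) = 0 for every x ∈ ∂Ω ∩ U. Let {a_ℓ} ⊂ Ω with a_ℓ → a₀, set d_ℓ = dist(a_ℓ, ∂Ω), and assume that for each ℓ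 there exist P_ℓ, Q_ℓ ∈ ∂Ω with |a_ℓ − P_ℓ| = d_ℓ, |P_ℓ − Q_ℓ| = d_ℓ, and Re( conj(Q_ℓ − P_ℓ)·(P_ℓ − a_ℓ) )/d_ℓ² → 0 as ℓ → ∞ (the real inner product of (Q_ℓ − P_ℓ)/d_ℓ and (P_ℓ − a_ℓ)/d_ℓ tends to 0). Then log(Re Φ(a_ℓ)) = log d_ℓ + o(log d_ℓ) as ℓ → ∞; equivalently, log(Re Φ(a_ℓ))/log d_ℓ → 1. -/
open Metric Set Filter Complex

set_option maxHeartbeats 1000000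

private lemma abs_ge_of_sq_ge' {α y : ℝ} (hα : 0 ≤ α) (h : α ^ 2 ≤ y ^ 2) : α ≤ |y| := by
  by_contra hc
  push_neg at hc
  have h2 := mul_self_lt_mul_self (abs_nonneg y) hc
  have h3 : y ^ 2 = |y| * |y| := by rw [← _root_.sq_abs y]; ring
  nlinarith

private lemma aux_lower' (m dd : ℝ) (hm : 0 < m) (hdpos : 0 < dd)
    (γ V A : ℂ) (hVnorm : ‖V‖ = dd) (hAnorm : ‖A‖ = dd)
    (hx : |(γ * V).re| ≤ m / 100 * dd)
    (hγlo : 9/10 * m ≤ ‖γ‖)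
    (hs : |((starRingEnd ℂ) V * A).re| ≤ dd ^ 2 / 100) :
    m / 2 * dd ≤ |(γ * A).re| := by
  set x := (γ * V).re with hxdef
  set y := (γ * V).im with hydef
  set s := ((starRingEnd ℂ) V * A).re with hsdef
  set t := ((starRingEnd ℂ) V * A).im with htdef
  have hxy : x ^ 2 + y ^ 2 = ‖γ‖ ^ 2 * dd ^ 2 := by
    have := Complex.normSq_apply (γ * V)
    have h2 : Complex.normSq (γ * V) = ‖γ‖^2 * ‖V‖^2 := by
      rw [Complex.normSq_mul, Complex.normSq_eq_norm_sq, Complex.normSq_eq_norm_sq]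
    rw [hVnorm] at h2
    rw [this] at h2
    nlinarith [h2]
  have hst : s ^ 2 + t ^ 2 = dd ^ 2 * dd ^ 2 := by
    have := Complex.normSq_apply ((starRingEnd ℂ) V * A)
    have h2 : Complex.normSq ((starRingEnd ℂ) V * A) = ‖V‖^2 * ‖A‖^2 := by
      rw [Complex.normSq_mul, Complex.normSq_conj, Complex.normSq_eq_norm_sq,
        Complex.normSq_eq_norm_sq]
    rw [hVnorm, hAnorm] at h2
    rw [this] at h2
    nlinarith [h2]
  have hkey : x * s - y * t = dd ^ 2 * (γ * A).re := by
    have h1 : (γ * V) * ((starRingEnd ℂ) V * A) = ((dd:ℂ) ^ 2) * (γ * A) := by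
      have h2 : V * (starRingEnd ℂ) V = (Complex.normSq V : ℂ) := Complex.mul_conj V
      have h3 : (Complex.normSq V : ℝ) = dd ^ 2 := by
        rw [Complex.normSq_eq_norm_sq, hVnorm]
      calc (γ * V) * ((starRingEnd ℂ) V * A) = (V * (starRingEnd ℂ) V) * (γ * A) := by ring
        _ = (Complex.normSq V : ℂ) * (γ * A) := by rw [h2]
        _ = ((dd:ℂ)^2) * (γ * A) := by rw [h3]; push_cast; ring
    have := congrArg Complex.re h1
    rw [Complex.mul_re] at this
    have h4 : (((dd:ℂ)^2) * (γ * A)).re = dd^2 * (γ * A).re := by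
      rw [show ((dd:ℂ)^2) = ((dd^2 : ℝ) : ℂ) by norm_cast, Complex.re_ofReal_mul]
    rw [h4] at this
    exact this
  -- bounds
  have hx2 : x ^ 2 ≤ (m / 100 * dd) ^ 2 := by
    rw [← _root_.sq_abs x]; exact pow_le_pow_left₀ (abs_nonneg x) hx 2
  have hγ2 : (9/10 * m) ^ 2 ≤ ‖γ‖ ^ 2 := pow_le_pow_left₀ (by positivity) hγlo 2
  have hγdd : (9/10 * m) ^ 2 * dd ^ 2 ≤ ‖γ‖ ^ 2 * dd ^ 2 :=
    mul_le_mul_of_nonneg_right hγ2 (sq_nonneg dd)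
  have hy2 : (89/100 * m * dd) ^ 2 ≤ y ^ 2 := by nlinarith [sq_nonneg (m*dd)]
  have hy : 89/100 * m * dd ≤ |y| := abs_ge_of_sq_ge' (by positivity) hy2
  have hs2 : s ^ 2 ≤ (dd ^ 2 / 100) ^ 2 := by
    rw [← _root_.sq_abs s]; exact pow_le_pow_left₀ (abs_nonneg s) hs 2
  have ht2 : (99/100 * dd ^ 2) ^ 2 ≤ t ^ 2 := by nlinarith [sq_nonneg (dd^2)]
  have htb : 99/100 * dd ^ 2 ≤ |t| := abs_ge_of_sq_ge' (by positivity) ht2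
  have hyt : 89/100 * m * dd * (99/100 * dd ^ 2) ≤ |y * t| := by
    rw [abs_mul]
    exact mul_le_mul hy htb (by positivity) (abs_nonneg y)
  have hxs : |x * s| ≤ m / 100 * dd * (dd ^ 2 / 100) := by
    rw [abs_mul]
    exact mul_le_mul hx hs (abs_nonneg s) (by positivity)
  have habs : |y * t| - |x * s| ≤ |x * s - y * t| := by
    have := abs_sub_abs_le_abs_sub (y * t) (x * s)
    rw [abs_sub_comm] at this
    linarith
  have hfin : m / 2 * dd * dd ^ 2 ≤ |x * s - y * t| := by nlinarith
  rw [hkey, abs_mul, abs_of_pos (by positivity : (0:ℝ) < dd^2)] at hfin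
  have hdd2 : (0:ℝ) < dd ^ 2 := by positivity
  exact (mul_le_mul_iff_right₀ hdd2).mp (by linarith)

/-- As the poles `a_ℓ` approach a boundary point `a₀` of a bounded open set `Ω ⊆ ℂ`,
if `Φ` straightens the boundary near `a₀` (conformally, with nonvanishing derivative `g`)
and `Re Φ > 0` in `Ω`, `Re Φ = 0` on the boundary near `a₀`, then
`log (Re Φ(a_ℓ)) / log (dist(a_ℓ, ∂Ω)) → 1`, i.e.
`log (Re Φ(a_ℓ)) = log dist(a_ℓ, ∂Ω) + o(log dist(a_ℓ, ∂Ω))`. -/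
theorem log_re_conformal_image_asymptotics
    (Ω : Set ℂ) (hΩopen : IsOpen Ω) (hΩbdd : Bornology.IsBounded Ω)
    (a₀ : ℂ) (ha₀ : a₀ ∈ frontier Ω)
    (Φ g : ℂ → ℂ)
    (hg_cont : ContinuousOn g (closure Ω))
    (hg_ne : ∀ x ∈ closure Ω, g x ≠ 0)
    (hΦ_unif_diff : ∀ ε : ℝ, 0 < ε → ∃ δ : ℝ, 0 < δ ∧
      ∀ x ∈ closure Ω, ∀ y ∈ closure Ω, ‖y - x‖ ≤ δ →
        ‖Φ y - Φ x - g x * (y - x)‖ ≤ ε * ‖y - x‖)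
    (hΦ_pos : ∀ x ∈ Ω, 0 < (Φ x).re)
    (U : Set ℂ) (hU : U ∈ nhds a₀)
    (hΦ_bdry : ∀ x ∈ frontier Ω ∩ U, (Φ x).re = 0)
    (a : ℕ → ℂ) (ha : ∀ ℓ, a ℓ ∈ Ω) (ha_lim : Tendsto a atTop (nhds a₀))
    (d : ℕ → ℝ) (hd : ∀ ℓ, d ℓ = Metric.infDist (a ℓ) (frontier Ω))
    (P Q : ℕ → ℂ) (hPmem : ∀ ℓ, P ℓ ∈ frontier Ω) (hQmem : ∀ ℓ, Q ℓ ∈ frontier Ω)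
    (hPdist : ∀ ℓ, ‖a ℓ - P ℓ‖ = d ℓ) (hQdist : ∀ ℓ, ‖P ℓ - Q ℓ‖ = d ℓ)
    (h_ortho : Tendsto
      (fun ℓ => ((starRingEnd ℂ) (Q ℓ - P ℓ) * (P ℓ - a ℓ)).re / (d ℓ) ^ 2)
      atTop (nhds 0)) :
    Tendsto (fun ℓ => Real.log ((Φ (a ℓ)).re) / Real.log (d ℓ)) atTop (nhds 1) := by
  have ha₀cl : a₀ ∈ closure Ω := frontier_subset_closure ha₀
  set m : ℝ := ‖g a₀‖ with hmdef
  have hm : 0 < m := norm_pos_iff.mpr (hg_ne a₀ ha₀cl)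
  -- positivity of d
  have hdpos : ∀ ℓ, 0 < d ℓ := by
    intro ℓ
    rw [hd ℓ]
    have hnotin : a ℓ ∉ frontier Ω := by
      rw [hΩopen.frontier_eq]
      exact fun h => h.2 (ha ℓ)
    exact (isClosed_frontier.notMem_iff_infDist_pos ⟨a₀, ha₀⟩).mp hnotin
  -- d → 0
  have hdista : Tendsto (fun ℓ => dist (a ℓ) a₀) atTop (nhds 0) :=
    tendsto_iff_dist_tendsto_zero.mp ha_lim
  have hd0 : Tendsto d atTop (nhds 0) := by
    refine squeeze_zero (fun ℓ => (hdpos ℓ).le) (fun ℓ => ?_) hdista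
    rw [hd ℓ]
    exact Metric.infDist_le_dist_of_mem ha₀
  -- P, Q → a₀
  have hPlim : Tendsto P atTop (nhds a₀) := by
    rw [tendsto_iff_dist_tendsto_zero]
    refine squeeze_zero (fun ℓ => dist_nonneg) (fun ℓ => ?_)
      (by simpa using hd0.add hdista)
    calc dist (P ℓ) a₀ ≤ dist (P ℓ) (a ℓ) + dist (a ℓ) a₀ := dist_triangle _ _ _
      _ = d ℓ + dist (a ℓ) a₀ := by rw [dist_comm, dist_eq_norm, hPdist ℓ]
  have hQlim : Tendsto Q atTop (nhds a₀) := by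
    rw [tendsto_iff_dist_tendsto_zero]
    refine squeeze_zero (fun ℓ => dist_nonneg) (fun ℓ => ?_)
      (by simpa using hd0.add (hd0.add hdista))
    calc dist (Q ℓ) a₀ ≤ dist (Q ℓ) (P ℓ) + dist (P ℓ) a₀ := dist_triangle _ _ _
      _ ≤ dist (Q ℓ) (P ℓ) + (dist (P ℓ) (a ℓ) + dist (a ℓ) a₀) := by
          linarith [dist_triangle (P ℓ) (a ℓ) a₀]
      _ = d ℓ + (d ℓ + dist (a ℓ) a₀) := by
          rw [dist_comm (Q ℓ) (P ℓ), dist_eq_norm, hQdist ℓ,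
            dist_comm (P ℓ) (a ℓ), dist_eq_norm, hPdist ℓ]
  -- g(P ℓ) → g a₀
  have hγlim : Tendsto (fun ℓ => g (P ℓ)) atTop (nhds (g a₀)) := by
    have hPin : Tendsto P atTop (nhdsWithin a₀ (closure Ω)) :=
      tendsto_nhdsWithin_iff.mpr ⟨hPlim, Eventually.of_forall
        (fun ℓ => frontier_subset_closure (hPmem ℓ))⟩
    exact ((hg_cont a₀ ha₀cl).tendsto).comp hPin
  -- choose δ for ε = m/100
  obtain ⟨δ, hδpos, hδ⟩ := hΦ_unif_diff (m/100) (by positivity)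
  -- eventual facts
  have hPU : ∀ᶠ ℓ in atTop, P ℓ ∈ U := hPlim.eventually_mem hU
  have hQU : ∀ᶠ ℓ in atTop, Q ℓ ∈ U := hQlim.eventually_mem hU
  have hdδ : ∀ᶠ ℓ in atTop, d ℓ < δ := hd0.eventually (gt_mem_nhds hδpos)
  have hγev : ∀ᶠ ℓ in atTop, dist (g (P ℓ)) (g a₀) < m/10 :=
    Metric.tendsto_nhds.mp hγlim (m/10) (by positivity)
  have hsev : ∀ᶠ ℓ in atTop,
      |((starRingEnd ℂ) (Q ℓ - P ℓ) * (P ℓ - a ℓ)).re / (d ℓ) ^ 2| < 1/100 := by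
    filter_upwards [Metric.tendsto_nhds.mp h_ortho (1/100) (by norm_num)] with ℓ hℓ
    rwa [Real.dist_eq, sub_zero] at hℓ
  -- key two-sided estimate
  have key : ∀ᶠ ℓ in atTop,
      m/4 * d ℓ ≤ (Φ (a ℓ)).re ∧ (Φ (a ℓ)).re ≤ 2*m*d ℓ := by
    filter_upwards [hPU, hQU, hdδ, hγev, hsev] with ℓ h1 h2 h3 h4 h5
    have hdℓ : 0 < d ℓ := hdpos ℓ
    have hmd : 0 < m * d ℓ := mul_pos hm hdℓ
    have hPcl : P ℓ ∈ closure Ω := frontier_subset_closure (hPmem ℓ)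
    have hQcl : Q ℓ ∈ closure Ω := frontier_subset_closure (hQmem ℓ)
    have hacl : a ℓ ∈ closure Ω := subset_closure (ha ℓ)
    have hΦP : (Φ (P ℓ)).re = 0 := hΦ_bdry _ ⟨hPmem ℓ, h1⟩
    have hΦQ : (Φ (Q ℓ)).re = 0 := hΦ_bdry _ ⟨hQmem ℓ, h2⟩
    have hVnorm : ‖Q ℓ - P ℓ‖ = d ℓ := by rw [norm_sub_rev]; exact hQdist ℓ
    have hAnorm : ‖a ℓ - P ℓ‖ = d ℓ := hPdist ℓ
    -- error bounds
    have hE2 : ‖Φ (Q ℓ) - Φ (P ℓ) - g (P ℓ) * (Q ℓ - P ℓ)‖ ≤ m/100 * d ℓ := by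
      have := hδ (P ℓ) hPcl (Q ℓ) hQcl (by rw [hVnorm]; exact h3.le)
      rwa [hVnorm] at this
    have hE1 : ‖Φ (a ℓ) - Φ (P ℓ) - g (P ℓ) * (a ℓ - P ℓ)‖ ≤ m/100 * d ℓ := by
      have := hδ (P ℓ) hPcl (a ℓ) hacl (by rw [hAnorm]; exact h3.le)
      rwa [hAnorm] at this
    -- |Re(γ V)| small
    have hx : |(g (P ℓ) * (Q ℓ - P ℓ)).re| ≤ m/100 * d ℓ := by
      have hre : (g (P ℓ) * (Q ℓ - P ℓ)).re
          = -((Φ (Q ℓ) - Φ (P ℓ) - g (P ℓ) * (Q ℓ - P ℓ)).re) := by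
        simp [Complex.sub_re, hΦP, hΦQ]
      rw [hre, abs_neg]
      exact (Complex.abs_re_le_norm _).trans (by exact hE2)
    -- ‖g (P ℓ)‖ bounds
    have hγnorm : |‖g (P ℓ)‖ - m| ≤ m/10 := by
      have := norm_sub_norm_le (g (P ℓ)) (g a₀)
      have h4' : ‖g (P ℓ) - g a₀‖ < m/10 := by rwa [dist_eq_norm] at h4
      rw [abs_le]
      constructor
      · have := norm_sub_norm_le (g a₀) (g (P ℓ))
        rw [norm_sub_rev] at this
        linarith
      · linarith
    have hγlo : 9/10 * m ≤ ‖g (P ℓ)‖ := by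
      rw [abs_le] at hγnorm; linarith [hγnorm.1]
    have hγhi : ‖g (P ℓ)‖ ≤ 11/10 * m := by
      rw [abs_le] at hγnorm; linarith [hγnorm.2]
    -- near-orthogonality
    have hs : |((starRingEnd ℂ) (Q ℓ - P ℓ) * (a ℓ - P ℓ)).re| ≤ (d ℓ) ^ 2 / 100 := by
      have h5' : |((starRingEnd ℂ) (Q ℓ - P ℓ) * (P ℓ - a ℓ)).re| ≤ (d ℓ)^2 / 100 := by
        rw [abs_div, abs_of_pos (by positivity : (0:ℝ) < (d ℓ)^2)] at h5
        rw [div_lt_iff₀ (by positivity : (0:ℝ) < (d ℓ)^2)] at h5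
        nlinarith [h5]
      have heq : ((starRingEnd ℂ) (Q ℓ - P ℓ) * (a ℓ - P ℓ)).re
          = -(((starRingEnd ℂ) (Q ℓ - P ℓ) * (P ℓ - a ℓ)).re) := by
        have : (starRingEnd ℂ) (Q ℓ - P ℓ) * (a ℓ - P ℓ)
            = -((starRingEnd ℂ) (Q ℓ - P ℓ) * (P ℓ - a ℓ)) := by ring
        rw [this, Complex.neg_re]
      rw [heq, abs_neg]
      exact h5'
    -- main lower estimate on |Re(γ A)|
    have hlow := aux_lower' m (d ℓ) hm hdℓ (g (P ℓ)) (Q ℓ - P ℓ) (a ℓ - P ℓ)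
      hVnorm hAnorm hx hγlo hs
    -- decompose Re Φ(a)
    have hreA : (Φ (a ℓ)).re = (g (P ℓ) * (a ℓ - P ℓ)).re
        + (Φ (a ℓ) - Φ (P ℓ) - g (P ℓ) * (a ℓ - P ℓ)).re := by
      simp [Complex.sub_re, hΦP]
    have hE1re : |(Φ (a ℓ) - Φ (P ℓ) - g (P ℓ) * (a ℓ - P ℓ)).re| ≤ m/100 * d ℓ :=
      (Complex.abs_re_le_norm _).trans (by exact hE1)
    have hΦapos : 0 < (Φ (a ℓ)).re := hΦ_pos (a ℓ) (ha ℓ)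
    rw [abs_le] at hE1re
    -- sign: Re(γ A) ≥ m/2 d
    have hsign : m/2 * d ℓ ≤ (g (P ℓ) * (a ℓ - P ℓ)).re := by
      rcases le_abs.mp hlow with h | h
      · exact h
      · exfalso
        have : (g (P ℓ) * (a ℓ - P ℓ)).re ≤ -(m/2 * d ℓ) := by linarith
        nlinarith [hE1re.1, hreA, hΦapos]
    constructor
    · nlinarith [hE1re.1]
    · have hup : |(g (P ℓ) * (a ℓ - P ℓ)).re| ≤ 11/10 * m * d ℓ := by
        refine (Complex.abs_re_le_norm _).trans ?_
        rw [norm_mul, hAnorm]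
        exact mul_le_mul_of_nonneg_right hγhi hdℓ.le
      rw [abs_le] at hup
      nlinarith [hup.2, hE1re.2]
  -- endgame: logs
  set f : ℕ → ℝ := fun ℓ => Real.log ((Φ (a ℓ)).re) with hfdef
  set L : ℕ → ℝ := fun ℓ => Real.log (d ℓ) with hLdef
  have hLbot : Tendsto L atTop atBot := by
    refine Real.tendsto_log_nhdsGT_zero.comp ?_
    exact tendsto_nhdsWithin_of_tendsto_nhds_of_eventually_within d hd0
      (Eventually.of_forall fun ℓ => hdpos ℓ)
  set K : ℝ := max |Real.log (m/4)| |Real.log (2*m)| with hKdef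
  have hKb : ∀ᶠ ℓ in atTop, |f ℓ - L ℓ| ≤ K := by
    filter_upwards [key] with ℓ hkℓ
    obtain ⟨hc, hC⟩ := hkℓ
    have hdℓ : 0 < d ℓ := hdpos ℓ
    have hΦapos : 0 < (Φ (a ℓ)).re := hΦ_pos (a ℓ) (ha ℓ)
    have hdivlo : m/4 ≤ (Φ (a ℓ)).re / d ℓ := (le_div_iff₀ hdℓ).mpr hc
    have hdivhi : (Φ (a ℓ)).re / d ℓ ≤ 2*m := (div_le_iff₀ hdℓ).mpr hC
    have heq : f ℓ - L ℓ = Real.log ((Φ (a ℓ)).re / d ℓ) := by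
      rw [hfdef, hLdef]
      exact (Real.log_div hΦapos.ne' hdℓ.ne').symm
    rw [heq, abs_le]
    constructor
    · calc -K ≤ -|Real.log (m/4)| := neg_le_neg (le_max_left _ _)
        _ ≤ Real.log (m/4) := neg_abs_le _
        _ ≤ Real.log ((Φ (a ℓ)).re / d ℓ) := Real.log_le_log (by positivity) hdivlo
    · calc Real.log ((Φ (a ℓ)).re / d ℓ) ≤ Real.log (2*m) :=
          Real.log_le_log (by positivity) hdivhi
        _ ≤ |Real.log (2*m)| := le_abs_self _
        _ ≤ K := le_max_right _ _
  have habsL : Tendsto (fun ℓ => |L ℓ|) atTop atTop :=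
    tendsto_abs_atBot_atTop.comp hLbot
  have hmain : Tendsto (fun ℓ => f ℓ / L ℓ - 1) atTop (nhds 0) := by
    apply squeeze_zero_norm' (a := fun ℓ => K / |L ℓ|)
    · filter_upwards [hKb, habsL.eventually_ge_atTop 1] with ℓ hKℓ hLℓ
      have hLpos : 0 < |L ℓ| := by linarith
      have hLne : L ℓ ≠ 0 := fun h => by rw [h] at hLpos; simp at hLpos
      have heq : f ℓ / L ℓ - 1 = (f ℓ - L ℓ) / L ℓ := by field_simp
      rw [Real.norm_eq_abs, heq, abs_div]
      exact (div_le_div_iff_of_pos_right hLpos).mpr hKℓ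
    · exact tendsto_const_nhds.div_atTop habsL
  have := hmain.add (tendsto_const_nhds (x := (1:ℝ)))
  simp only [zero_add] at this
  refine this.congr (fun ℓ => ?_)
  ring
end

section
/- Let L > 0 and γ ∈ (1, 2). Then there exists a constant C > 0 such that for every ε ∈ (0, L/2), with ξ_ε = arcsinh(L/ε), both of the following hold: ε² ∫₀^{ξ_ε} ∫_{−π/2}^{π/2} e^{2γξ}(cosh²ξ − cos²η)^{1−γ} dη dξ ≤ C and ε² ∫₀^{ξ_ε} ∫_{−π/2}^{π/2} e^{−2γξ}(cosh²ξ − cos²η)^{1+γ} dη dξ ≤ C. (These double integrals equal, respectively, the γ-th powers of the L^γ(E_ε(L)) norms of the weight ρ_ε and of its reciprocal, after the conformal change to elliptic coordinates, whose Jacobian determinant is ε²(cosh²ξ − cos²η).) -/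
open Real Set intervalIntegral MeasureTheory

private lemma base_eq (x y : ℝ) :
    Real.cosh x ^ 2 - Real.cos y ^ 2 = Real.sinh x ^ 2 + Real.sin y ^ 2 := by
  have h := Real.sin_sq_add_cos_sq y
  have h2 := Real.cosh_sq x
  linarith

private lemma base_nonneg (x y : ℝ) : 0 ≤ Real.cosh x ^ 2 - Real.cos y ^ 2 := by
  rw [base_eq]; positivity

private lemma my_cosh_le_exp {x : ℝ} (hx : 0 ≤ x) : Real.cosh x ≤ Real.exp x := by
  have h1 : Real.exp (-x) ≤ Real.exp x := Real.exp_le_exp.2 (by linarith)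
  rw [Real.cosh_eq]; linarith

private lemma my_sinh_ge {x : ℝ} (hx : 1 ≤ x) : Real.exp x / 4 ≤ Real.sinh x := by
  have h1 : Real.exp (-x) ≤ 1 := Real.exp_le_one_iff.2 (by linarith)
  have h3 : Real.exp 1 ≤ Real.exp x := Real.exp_le_exp.2 hx
  have h2 : (2 : ℝ) ≤ Real.exp x := by
    have := Real.exp_one_gt_d9
    linarith
  rw [Real.sinh_eq]; linarith

/-- integrability of `|x| ^ r` on `[0, a]`. -/
private lemma abs_rpow_ii_right {r : ℝ} (hr : -1 < r) {a : ℝ} (ha : 0 ≤ a) :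
    IntervalIntegrable (fun x : ℝ => |x| ^ r) MeasureTheory.volume 0 a := by
  rw [intervalIntegrable_iff]
  refine (intervalIntegrable_iff.1
    (intervalIntegrable_rpow' hr (a := 0) (b := a))).congr_fun ?_ measurableSet_uIoc
  intro x hx
  rw [uIoc_of_le ha] at hx
  show x ^ r = |x| ^ r
  rw [abs_of_pos hx.1]

private lemma abs_rpow_ii_left {r : ℝ} (hr : -1 < r) {a : ℝ} (ha : 0 ≤ a) :
    IntervalIntegrable (fun x : ℝ => |x| ^ r) MeasureTheory.volume (-a) 0 := by
  have h1 := ((IntervalIntegrable.iff_comp_neg (f := fun x : ℝ => |x| ^ r)).1 (abs_rpow_ii_right hr ha))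
  simp only [abs_neg, neg_zero] at h1
  exact h1.symm

private lemma abs_rpow_ii {r : ℝ} (hr : -1 < r) {a : ℝ} (ha : 0 ≤ a) :
    IntervalIntegrable (fun x : ℝ => |x| ^ r) MeasureTheory.volume (-a) a :=
  (abs_rpow_ii_left hr ha).trans (abs_rpow_ii_right hr ha)

private lemma abs_rpow_integral {r : ℝ} (hr : -1 < r) (hrr : r < 0) {a : ℝ} (ha : 0 ≤ a) :
    ∫ x in (-a)..a, |x| ^ r = 2 * (a ^ (r + 1) / (r + 1)) := by
  have hr1 : (0:ℝ) < r + 1 := by linarith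
  have h0 : ∫ x in (0:ℝ)..a, |x| ^ r = a ^ (r + 1) / (r + 1) := by
    rw [show (∫ x in (0:ℝ)..a, |x| ^ r) = ∫ x in (0:ℝ)..a, x ^ r from
      integral_congr (fun x hx => by
        rw [uIcc_of_le ha] at hx; rw [abs_of_nonneg hx.1])]
    rw [integral_rpow (Or.inl hr), Real.zero_rpow hr1.ne', sub_zero]
  have hneg : ∫ x in (-a)..(0:ℝ), |x| ^ r = a ^ (r + 1) / (r + 1) := by
    have h2 := intervalIntegral.integral_comp_neg (a := 0) (b := a) (fun x : ℝ => |x| ^ r)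
    simp only [abs_neg, neg_zero] at h2
    rw [← h2, h0]
  rw [← intervalIntegral.integral_add_adjacent_intervals
    (abs_rpow_ii_left hr ha) (abs_rpow_ii_right hr ha), h0, hneg]
  ring

/-- a nonneg function bounded by `M` on the half-period has integral at most `π * M`. -/
private lemma inner_le {f : ℝ → ℝ} (hf : ∀ η, 0 ≤ f η) {M : ℝ}
    (h : ∀ η ∈ Ioc (-(π/2)) (π/2), f η ≤ M) :
    (∫ η in (-(π/2))..(π/2), f η) ≤ π * M := by
  have hπ := Real.pi_pos
  rw [intervalIntegral.integral_of_le (by linarith : -(π/2) ≤ π/2)]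
  calc (∫ η in Ioc (-(π/2)) (π/2), f η)
      ≤ ∫ _η in Ioc (-(π/2)) (π/2), M := by
        refine integral_mono_of_nonneg (Filter.Eventually.of_forall fun η => hf η)
          (integrableOn_const (by rw [Real.volume_Ioc]; exact ENNReal.ofReal_ne_top))
          ?_
        exact (ae_restrict_iff' measurableSet_Ioc).2 (Filter.Eventually.of_forall h)
    _ = π * M := by
        rw [setIntegral_const, Real.volume_real_Ioc_of_le (by linarith), smul_eq_mul]
        ring_nf

set_option maxHeartbeats 2000000

/-- Uniform bounds, with respect to `ε ∈ (0, L/2)`, for the `L^γ` norms (to the power `γ`)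
of the weight `ρ_ε` and of its reciprocal over the halved ellipse `E_ε(L)`, written in
elliptic coordinates: the Jacobian determinant of the change of coordinates is
`ε²(cosh²ξ − cos²η)`. -/
theorem weight_Lgamma_bounds
    (L γ : ℝ) (hL : 0 < L) (hγ : γ ∈ Set.Ioo (1 : ℝ) 2) :
    ∃ C : ℝ, 0 < C ∧ ∀ ε : ℝ, 0 < ε → ε < L / 2 →
      (ε ^ 2 * ∫ ξ in (0 : ℝ)..(Real.arsinh (L / ε)),
        ∫ η in (-(π / 2))..(π / 2),
          Real.exp (2 * γ * ξ) * (Real.cosh ξ ^ 2 - Real.cos η ^ 2) ^ ((1 : ℝ) - γ))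
        ≤ C ∧
      (ε ^ 2 * ∫ ξ in (0 : ℝ)..(Real.arsinh (L / ε)),
        ∫ η in (-(π / 2))..(π / 2),
          Real.exp (-(2 * γ * ξ)) * (Real.cosh ξ ^ 2 - Real.cos η ^ 2) ^ ((1 : ℝ) + γ))
        ≤ C := by
  classical
  obtain ⟨hγ1, hγ2⟩ := hγ
  have hπ := Real.pi_pos
  have h2π := Real.two_le_pi
  set r : ℝ := 1 - γ with hr_def
  have hr1 : -1 < r := by rw [hr_def]; linarith
  have hrr : r < 0 := by rw [hr_def]; linarith
  have hr1' : (0:ℝ) < r + 1 := by linarith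
  -- constants
  set K : ℝ := Real.exp 4 * (π / 2) with hK_def
  have hK0 : 0 < K := by positivity
  set cJ : ℝ := 2 * ((π/2) ^ (r+1) / (r+1)) with hcJ_def
  have hcJ0 : 0 < cJ := by
    have := Real.rpow_pos_of_pos (show (0:ℝ) < π/2 by linarith) (r+1)
    positivity
  refine ⟨(L/2)^2 * (K * cJ / (r+1)) + 144 * π * L^2 + 9 * π * L^2, by positivity, ?_⟩
  intro ε hε hεL
  set b := Real.arsinh (L / ε) with hb_def
  have hLε : 2 < L / ε := by rw [lt_div_iff₀ hε]; linarith
  have hb1 : 1 ≤ b := by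
    have h1 : Real.sinh 1 < L / ε := by
      rw [Real.sinh_eq]
      have := Real.exp_one_lt_d9
      have h2 : 0 < Real.exp (-1) := Real.exp_pos _
      nlinarith
    calc (1:ℝ) = Real.arsinh (Real.sinh 1) := (Real.arsinh_sinh 1).symm
      _ ≤ b := Real.arsinh_le_arsinh.2 h1.le
  have hb0 : (0:ℝ) < b := by linarith
  have hexpb : Real.exp b ≤ 3 * (L / ε) := by
    rw [hb_def, Real.exp_arsinh]
    have h1 : Real.sqrt (1 + (L/ε)^2) ≤ 1 + L/ε := by
      rw [show (1:ℝ) + L/ε = Real.sqrt ((1 + L/ε)^2) from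
        (Real.sqrt_sq (by positivity)).symm]
      apply Real.sqrt_le_sqrt
      nlinarith
    linarith
  have hexpb2 : Real.exp b * Real.exp b ≤ 9 * L^2 / ε^2 := by
    have h0 : (0:ℝ) < Real.exp b := Real.exp_pos b
    have h1 : Real.exp b * Real.exp b ≤ (3 * (L/ε)) * (3 * (L/ε)) :=
      mul_le_mul hexpb hexpb h0.le (by positivity)
    calc Real.exp b * Real.exp b ≤ (3 * (L/ε)) * (3 * (L/ε)) := h1
      _ = 9 * L^2 / ε^2 := by field_simp; ring
  constructor
  · -- first bound
    set F : ℝ → ℝ := fun ξ => ∫ η in (-(π/2))..(π/2),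
      Real.exp (2 * γ * ξ) * (Real.cosh ξ ^ 2 - Real.cos η ^ 2) ^ ((1:ℝ) - γ) with hF_def
    have hFnonneg : ∀ ξ, 0 ≤ F ξ := by
      intro ξ
      apply intervalIntegral.integral_nonneg (by linarith : -(π/2) ≤ π/2)
      intro η _
      exact mul_nonneg (Real.exp_pos _).le (Real.rpow_nonneg (base_nonneg ξ η) _)
    have hFmeas : StronglyMeasurable F := by
      have hm : StronglyMeasurable (Function.uncurry fun (ξ η : ℝ) =>
          Real.exp (2 * γ * ξ) * (Real.cosh ξ ^ 2 - Real.cos η ^ 2) ^ ((1:ℝ) - γ)) := by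
        apply Measurable.stronglyMeasurable
        fun_prop
      have := hm.integral_prod_right
        (ν := MeasureTheory.volume.restrict (Ioc (-(π/2)) (π/2)))
      convert this using 1
      funext ξ
      rw [hF_def]
      exact intervalIntegral.integral_of_le (by linarith : -(π/2) ≤ π/2)
    -- Bound A on (0,1]
    have hA : ∀ ξ ∈ Ioc (0:ℝ) 1, F ξ ≤ K * cJ * ξ ^ r := by
      intro ξ hξ
      have hξ0 : 0 < ξ := hξ.1
      have hJint : IntegrableOn (fun η : ℝ => K * ξ ^ r * |η| ^ r)
          (Ioc (-(π/2)) (π/2)) := by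
        have := (abs_rpow_ii hr1 (show (0:ℝ) ≤ π/2 by linarith)).const_mul (K * ξ ^ r)
        rw [intervalIntegrable_iff_integrableOn_Ioc_of_le (by linarith : -(π/2) ≤ π/2)] at this
        exact this
      have hptw : ∀ η ∈ Ioc (-(π/2)) (π/2), η ≠ 0 →
          Real.exp (2 * γ * ξ) * (Real.cosh ξ ^ 2 - Real.cos η ^ 2) ^ ((1:ℝ) - γ)
            ≤ K * ξ ^ r * |η| ^ r := by
        intro η hη hη0
        have habs : |η| ≤ π/2 := abs_le.2 ⟨hη.1.le, hη.2⟩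
        have habs0 : 0 < |η| := abs_pos.2 hη0
        have hsin : 2/π * |η| ≤ |Real.sin η| := Real.mul_abs_le_abs_sin habs
        have hsinh : ξ ≤ Real.sinh ξ := Real.self_le_sinh_iff.2 hξ0.le
        have hlow : 0 < 2/π * (ξ * |η|) := by positivity
        have hbase : 2/π * (ξ * |η|) ≤ Real.cosh ξ ^ 2 - Real.cos η ^ 2 := by
          rw [base_eq]
          have hmul : ξ * (2/π * |η|) ≤ Real.sinh ξ * |Real.sin η| :=
            mul_le_mul hsinh hsin (by positivity) (by linarith)
          nlinarith [sq_nonneg (Real.sinh ξ - |Real.sin η|), sq_abs (Real.sin η),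
            mul_nonneg (by linarith : (0:ℝ) ≤ Real.sinh ξ) (abs_nonneg (Real.sin η))]
        have hpow : (Real.cosh ξ ^ 2 - Real.cos η ^ 2) ^ ((1:ℝ) - γ)
            ≤ (2/π * (ξ * |η|)) ^ r :=
          Real.rpow_le_rpow_of_nonpos hlow hbase (le_of_lt hrr)
        have hsplit : (2/π * (ξ * |η|)) ^ r = (2/π) ^ r * (ξ ^ r * |η| ^ r) := by
          rw [Real.mul_rpow (by positivity) (by positivity),
            Real.mul_rpow hξ0.le (abs_nonneg η)]
        have h2pi : ((2:ℝ)/π) ^ r ≤ π/2 := by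
          have := Real.rpow_le_rpow_of_exponent_ge (by positivity : (0:ℝ) < 2/π)
            (by rw [div_le_one hπ]; linarith) (by linarith : (-1:ℝ) ≤ r)
          calc ((2:ℝ)/π) ^ r ≤ ((2:ℝ)/π) ^ (-1:ℝ) := this
            _ = π/2 := by rw [Real.rpow_neg_one, inv_div]
        have hexp : Real.exp (2 * γ * ξ) ≤ Real.exp 4 :=
          Real.exp_le_exp.2 (by nlinarith [hξ.2])
        calc Real.exp (2 * γ * ξ) * (Real.cosh ξ ^ 2 - Real.cos η ^ 2) ^ ((1:ℝ) - γ)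
            ≤ Real.exp 4 * ((2/π * (ξ * |η|)) ^ r) := by
              apply mul_le_mul hexp ?_ (Real.rpow_nonneg (base_nonneg ξ η) _)
                (Real.exp_pos 4).le
              exact hpow
          _ = Real.exp 4 * ((2/π) ^ r * (ξ ^ r * |η| ^ r)) := by rw [hsplit]
          _ ≤ Real.exp 4 * ((π/2) * (ξ ^ r * |η| ^ r)) := by
              apply mul_le_mul_of_nonneg_left ?_ (Real.exp_pos 4).le
              apply mul_le_mul_of_nonneg_right h2pi
              positivity
          _ = K * ξ ^ r * |η| ^ r := by rw [hK_def]; ring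
      have hstep : F ξ ≤ ∫ η in Ioc (-(π/2)) (π/2), K * ξ ^ r * |η| ^ r := by
        rw [hF_def]
        simp only
        rw [intervalIntegral.integral_of_le (by linarith : -(π/2) ≤ π/2)]
        refine integral_mono_of_nonneg (Filter.Eventually.of_forall fun η =>
          mul_nonneg (Real.exp_pos _).le (Real.rpow_nonneg (base_nonneg ξ η) _)) hJint ?_
        have hzero : ∀ᵐ η ∂(MeasureTheory.volume.restrict (Ioc (-(π/2)) (π/2))), η ≠ (0:ℝ) := by
          refine ae_restrict_of_ae ?_
          refine (MeasureTheory.ae_iff).2 ?_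
          have hset : {a : ℝ | ¬ a ≠ 0} = {0} := by ext x; simp
          rw [hset, Real.volume_singleton]
        filter_upwards [ae_restrict_mem measurableSet_Ioc, hzero] with η hη hη0
        exact hptw η hη hη0
      have hJval : (∫ η in Ioc (-(π/2)) (π/2), K * ξ ^ r * |η| ^ r) = K * ξ ^ r * cJ := by
        rw [MeasureTheory.integral_const_mul]
        congr 1
        rw [← intervalIntegral.integral_of_le (by linarith : -(π/2) ≤ π/2),
          abs_rpow_integral hr1 hrr (by linarith : (0:ℝ) ≤ π/2), hcJ_def]
      calc F ξ ≤ ∫ η in Ioc (-(π/2)) (π/2), K * ξ ^ r * |η| ^ r := hstep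
        _ = K * ξ ^ r * cJ := hJval
        _ = K * cJ * ξ ^ r := by ring
    -- Bound B on [1, b]
    have hB : ∀ ξ : ℝ, 1 ≤ ξ → F ξ ≤ π * (16 * Real.exp (2 * ξ)) := by
      intro ξ hξ1
      rw [hF_def]
      apply inner_le
      · intro η
        exact mul_nonneg (Real.exp_pos _).le (Real.rpow_nonneg (base_nonneg ξ η) _)
      · intro η _
        have hξ0 : (0:ℝ) < ξ := by linarith
        have hsinh : Real.exp ξ / 4 ≤ Real.sinh ξ := my_sinh_ge hξ1
        have hsinh0 : 0 < Real.exp ξ / 4 := by positivity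
        have hlog16 : (0:ℝ) ≤ Real.log 16 := Real.log_nonneg (by norm_num)
        have hlow : 0 < Real.exp (2*ξ - Real.log 16) := Real.exp_pos _
        have hbase : Real.exp (2*ξ - Real.log 16) ≤ Real.cosh ξ ^ 2 - Real.cos η ^ 2 := by
          rw [base_eq]
          have h1 : Real.exp (2*ξ - Real.log 16) = (Real.exp ξ)^2 / 16 := by
            rw [Real.exp_sub, Real.exp_log (by norm_num : (0:ℝ) < 16), sq, ← Real.exp_add,
              two_mul]
          rw [h1]
          nlinarith [sq_nonneg (Real.sin η), sq_nonneg (Real.exp ξ)]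
        have hpow : (Real.cosh ξ ^ 2 - Real.cos η ^ 2) ^ ((1:ℝ) - γ)
            ≤ Real.exp ((2*ξ - Real.log 16) * r) := by
          have := Real.rpow_le_rpow_of_nonpos hlow hbase (le_of_lt hrr)
          rwa [← Real.exp_mul] at this
        calc Real.exp (2 * γ * ξ) * (Real.cosh ξ ^ 2 - Real.cos η ^ 2) ^ ((1:ℝ) - γ)
            ≤ Real.exp (2 * γ * ξ) * Real.exp ((2*ξ - Real.log 16) * r) :=
              mul_le_mul_of_nonneg_left hpow (Real.exp_pos _).le
          _ = Real.exp (2 * γ * ξ + (2*ξ - Real.log 16) * r) := by rw [← Real.exp_add]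
          _ ≤ 16 * Real.exp (2 * ξ) := by
              rw [show (16:ℝ) * Real.exp (2*ξ) = Real.exp (2*ξ + Real.log 16) by
                rw [Real.exp_add, Real.exp_log (by norm_num : (0:ℝ) < 16)]; ring]
              apply Real.exp_le_exp.2
              rw [hr_def]
              nlinarith
    -- integrability of F
    have hI1 : IntervalIntegrable F MeasureTheory.volume 0 1 := by
      rw [intervalIntegrable_iff_integrableOn_Ioc_of_le zero_le_one]
      have hg : IntegrableOn (fun ξ : ℝ => K * cJ * ξ ^ r) (Ioc (0:ℝ) 1) := by
        have := (intervalIntegrable_rpow' hr1 (a := 0) (b := 1)).const_mul (K * cJ)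
        rwa [intervalIntegrable_iff_integrableOn_Ioc_of_le zero_le_one] at this
      refine hg.mono' hFmeas.aestronglyMeasurable ?_
      filter_upwards [ae_restrict_mem measurableSet_Ioc] with ξ hξ
      rw [Real.norm_eq_abs, abs_of_nonneg (hFnonneg ξ)]
      exact hA ξ hξ
    have hI2 : IntervalIntegrable F MeasureTheory.volume 1 b := by
      rw [intervalIntegrable_iff_integrableOn_Ioc_of_le hb1]
      have hg : IntegrableOn (fun _ : ℝ => π * (16 * Real.exp (2 * b)))
          (Ioc (1:ℝ) b) :=
        integrableOn_const (by rw [Real.volume_Ioc]; exact ENNReal.ofReal_ne_top)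
      refine hg.mono' hFmeas.aestronglyMeasurable ?_
      filter_upwards [ae_restrict_mem measurableSet_Ioc] with ξ hξ
      rw [Real.norm_eq_abs, abs_of_nonneg (hFnonneg ξ)]
      calc F ξ ≤ π * (16 * Real.exp (2 * ξ)) := hB ξ hξ.1.le
        _ ≤ π * (16 * Real.exp (2 * b)) := by
            have := Real.exp_le_exp.2 (by linarith [hξ.2] : 2 * ξ ≤ 2 * b)
            nlinarith [Real.exp_pos (2*ξ)]
    -- bound the two pieces
    have hpart1 : (∫ ξ in (0:ℝ)..1, F ξ) ≤ K * cJ / (r + 1) := by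
      rw [intervalIntegral.integral_of_le zero_le_one]
      have hg : IntegrableOn (fun ξ : ℝ => K * cJ * ξ ^ r) (Ioc (0:ℝ) 1) := by
        have := (intervalIntegrable_rpow' hr1 (a := 0) (b := 1)).const_mul (K * cJ)
        rwa [intervalIntegrable_iff_integrableOn_Ioc_of_le zero_le_one] at this
      calc (∫ ξ in Ioc (0:ℝ) 1, F ξ) ≤ ∫ ξ in Ioc (0:ℝ) 1, K * cJ * ξ ^ r := by
            refine integral_mono_of_nonneg
              (Filter.Eventually.of_forall fun ξ => hFnonneg ξ) hg ?_
            filter_upwards [ae_restrict_mem measurableSet_Ioc] with ξ hξ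
            exact hA ξ hξ
        _ = K * cJ / (r + 1) := by
            rw [MeasureTheory.integral_const_mul,
              ← intervalIntegral.integral_of_le zero_le_one,
              integral_rpow (Or.inl hr1)]
            rw [Real.one_rpow, Real.zero_rpow hr1'.ne', sub_zero]
            ring
    have hpart2 : (∫ ξ in (1:ℝ)..b, F ξ) ≤ 16 * π * (Real.exp b * Real.exp b) := by
      rw [intervalIntegral.integral_of_le hb1]
      have hg : IntegrableOn (fun ξ : ℝ => 16 * π * Real.exp b * Real.exp ξ)
          (Ioc (1:ℝ) b) := by
        apply MeasureTheory.Integrable.const_mul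
        exact (Real.continuous_exp.integrableOn_Ioc)
      calc (∫ ξ in Ioc (1:ℝ) b, F ξ)
          ≤ ∫ ξ in Ioc (1:ℝ) b, 16 * π * Real.exp b * Real.exp ξ := by
            refine integral_mono_of_nonneg
              (Filter.Eventually.of_forall fun ξ => hFnonneg ξ) hg ?_
            filter_upwards [ae_restrict_mem measurableSet_Ioc] with ξ hξ
            calc F ξ ≤ π * (16 * Real.exp (2 * ξ)) := hB ξ hξ.1.le
              _ = 16 * π * Real.exp ξ * Real.exp ξ := by
                  rw [show (2:ℝ) * ξ = ξ + ξ by ring, Real.exp_add]; ring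
              _ ≤ 16 * π * Real.exp b * Real.exp ξ := by gcongr; exact hξ.2
        _ = 16 * π * Real.exp b * (Real.exp b - Real.exp 1) := by
            rw [MeasureTheory.integral_const_mul,
              ← intervalIntegral.integral_of_le hb1, integral_exp]
        _ ≤ 16 * π * (Real.exp b * Real.exp b) := by
            have h0 : (0:ℝ) ≤ 16 * π * Real.exp b * Real.exp 1 := by positivity
            nlinarith
    have hsplit : (∫ ξ in (0:ℝ)..b, F ξ) = (∫ ξ in (0:ℝ)..1, F ξ) + ∫ ξ in (1:ℝ)..b, F ξ :=
      (intervalIntegral.integral_add_adjacent_intervals hI1 hI2).symm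
    have hεL2 : ε^2 ≤ (L/2)^2 := by nlinarith
    have htot : ε ^ 2 * ∫ ξ in (0:ℝ)..b, F ξ
        ≤ (L/2)^2 * (K * cJ / (r+1)) + 144 * π * L^2 := by
      rw [hsplit, mul_add]
      have e1 : ε^2 * (∫ ξ in (0:ℝ)..1, F ξ) ≤ (L/2)^2 * (K * cJ / (r+1)) := by
        have h1 : 0 ≤ (∫ ξ in (0:ℝ)..1, F ξ) :=
          intervalIntegral.integral_nonneg zero_le_one (fun ξ _ => hFnonneg ξ)
        have h2 : (0:ℝ) < K * cJ / (r+1) := by positivity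
        nlinarith [hpart1, sq_nonneg ε]
      have e2 : ε^2 * (∫ ξ in (1:ℝ)..b, F ξ) ≤ 144 * π * L^2 := by
        have h1 : 0 ≤ (∫ ξ in (1:ℝ)..b, F ξ) :=
          intervalIntegral.integral_nonneg hb1 (fun ξ _ => hFnonneg ξ)
        have h3 : ε^2 * (∫ ξ in (1:ℝ)..b, F ξ) ≤ ε^2 * (16 * π * (9 * L^2 / ε^2)) := by
          apply mul_le_mul_of_nonneg_left ?_ (sq_nonneg ε)
          calc (∫ ξ in (1:ℝ)..b, F ξ) ≤ 16 * π * (Real.exp b * Real.exp b) := hpart2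
            _ ≤ 16 * π * (9 * L^2 / ε^2) := by
                apply mul_le_mul_of_nonneg_left hexpb2 (by positivity)
        calc ε^2 * (∫ ξ in (1:ℝ)..b, F ξ) ≤ ε^2 * (16 * π * (9 * L^2 / ε^2)) := h3
          _ = 144 * π * L^2 := by field_simp; ring
      linarith
    calc ε ^ 2 * ∫ ξ in (0:ℝ)..b, F ξ ≤ (L/2)^2 * (K * cJ / (r+1)) + 144 * π * L^2 := htot
      _ ≤ (L/2)^2 * (K * cJ / (r+1)) + 144 * π * L^2 + 9 * π * L^2 := by
          have h1 : (0:ℝ) ≤ (L/2)^2 * (K * cJ / (r+1)) := by positivity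
          have h2 : (0:ℝ) ≤ 144 * π * L^2 := by positivity
          have h3 : (0:ℝ) ≤ 9 * π * L^2 := by positivity
          linarith
  · -- second bound
    set G : ℝ → ℝ := fun ξ => ∫ η in (-(π/2))..(π/2),
      Real.exp (-(2 * γ * ξ)) * (Real.cosh ξ ^ 2 - Real.cos η ^ 2) ^ ((1:ℝ) + γ) with hG_def
    have hGnonneg : ∀ ξ, 0 ≤ G ξ := by
      intro ξ
      apply intervalIntegral.integral_nonneg (by linarith : -(π/2) ≤ π/2)
      intro η _
      exact mul_nonneg (Real.exp_pos _).le (Real.rpow_nonneg (base_nonneg ξ η) _)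
    have hGb : ∀ ξ : ℝ, 0 ≤ ξ → G ξ ≤ π * Real.exp (2 * ξ) := by
      intro ξ hξ0
      have := inner_le (f := fun η => Real.exp (-(2 * γ * ξ)) *
          (Real.cosh ξ ^ 2 - Real.cos η ^ 2) ^ ((1:ℝ) + γ)) (M := Real.exp (2 * ξ))
        (fun η => mul_nonneg (Real.exp_pos _).le (Real.rpow_nonneg (base_nonneg ξ η) _))
        ?_
      · exact this
      · intro η _
        have h1 : Real.cosh ξ ^ 2 - Real.cos η ^ 2 ≤ Real.exp (2*ξ) := by
          have h2 : Real.cosh ξ ≤ Real.exp ξ := my_cosh_le_exp hξ0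
          have h3 : Real.exp (2*ξ) = Real.exp ξ * Real.exp ξ := by
            rw [← Real.exp_add]; congr 1; ring
          have hc : 0 < Real.cosh ξ := Real.cosh_pos ξ
          nlinarith [sq_nonneg (Real.cos η)]
        have h5 := Real.rpow_le_rpow (base_nonneg ξ η) h1 (by linarith : (0:ℝ) ≤ 1 + γ)
        have h6 : Real.exp (2*ξ) ^ ((1:ℝ)+γ) = Real.exp ((2*ξ)*(1+γ)) := by
          rw [← Real.exp_mul]
        calc Real.exp (-(2 * γ * ξ)) * (Real.cosh ξ ^ 2 - Real.cos η ^ 2) ^ ((1:ℝ) + γ)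
            ≤ Real.exp (-(2 * γ * ξ)) * Real.exp ((2*ξ)*(1+γ)) := by
              rw [← h6]
              exact mul_le_mul_of_nonneg_left h5 (Real.exp_pos _).le
          _ = Real.exp (2 * ξ) := by rw [← Real.exp_add]; congr 1; ring
    have hgI : IntegrableOn (fun ξ : ℝ => π * Real.exp b * Real.exp ξ) (Ioc (0:ℝ) b) := by
      apply MeasureTheory.Integrable.const_mul
      exact Real.continuous_exp.integrableOn_Ioc
    have hmain : (∫ ξ in (0:ℝ)..b, G ξ) ≤ π * Real.exp b * (Real.exp b - 1) := by
      rw [intervalIntegral.integral_of_le hb0.le]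
      calc (∫ ξ in Ioc (0:ℝ) b, G ξ)
          ≤ ∫ ξ in Ioc (0:ℝ) b, π * Real.exp b * Real.exp ξ := by
            refine integral_mono_of_nonneg
              (Filter.Eventually.of_forall fun ξ => hGnonneg ξ) hgI ?_
            filter_upwards [ae_restrict_mem measurableSet_Ioc] with ξ hξ
            calc G ξ ≤ π * Real.exp (2 * ξ) := hGb ξ hξ.1.le
              _ = π * Real.exp ξ * Real.exp ξ := by
                  rw [show (2:ℝ) * ξ = ξ + ξ by ring, Real.exp_add]; ring
              _ ≤ π * Real.exp b * Real.exp ξ := by gcongr; exact hξ.2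
        _ = π * Real.exp b * (Real.exp b - 1) := by
            rw [MeasureTheory.integral_const_mul,
              ← intervalIntegral.integral_of_le hb0.le, integral_exp, Real.exp_zero]
    have h9 : ε ^ 2 * ∫ ξ in (0:ℝ)..b, G ξ ≤ 9 * π * L^2 := by
      have h1 : (∫ ξ in (0:ℝ)..b, G ξ) ≤ π * (9 * L^2 / ε^2) := by
        calc (∫ ξ in (0:ℝ)..b, G ξ) ≤ π * Real.exp b * (Real.exp b - 1) := hmain
          _ ≤ π * (Real.exp b * Real.exp b) := by nlinarith [Real.exp_pos b]
          _ ≤ π * (9 * L^2 / ε^2) := mul_le_mul_of_nonneg_left hexpb2 hπ.le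
      calc ε ^ 2 * ∫ ξ in (0:ℝ)..b, G ξ ≤ ε^2 * (π * (9 * L^2 / ε^2)) := by
            apply mul_le_mul_of_nonneg_left h1 (sq_nonneg ε)
        _ = 9 * π * L^2 := by field_simp
    calc ε ^ 2 * ∫ ξ in (0:ℝ)..b, G ξ ≤ 9 * π * L^2 := h9
      _ ≤ (L/2)^2 * (K * cJ / (r+1)) + 144 * π * L^2 + 9 * π * L^2 := by
          have h1 : (0:ℝ) ≤ (L/2)^2 * (K * cJ / (r+1)) := by positivity
          have h2 : (0:ℝ) ≤ 144 * π * L^2 := by positivity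
          have h3 : (0:ℝ) ≤ 9 * π * L^2 := by positivity
          linarith
end

section
/- Let T > 0, let q : [0, T] → ℝ be continuous with q(ξ) > 0 for every ξ ∈ [0, T], and let A ∈ ℝ. Then there exists a unique twice continuously differentiable function u : [0, T] → ℝ such that u''(ξ) = q(ξ) u(ξ) for all ξ ∈ [0, T], u(0) = A, and u'(T) = 0. -/
open Set

lemma hasDerivWithinAt_singleton'' {f : ℝ → ℝ × ℝ} {x : ℝ} (y : ℝ × ℝ) :
    HasDerivWithinAt f y {x} x := by
  rw [hasDerivWithinAt_iff_tendsto_slope]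
  simp [Set.diff_self]

/-- Glue two solutions of an ODE on adjacent intervals. -/
lemma glue_solutions (V : ℝ → ℝ × ℝ → ℝ × ℝ) {a b c : ℝ} (hab : a ≤ b) (hbc : b ≤ c)
    (f g : ℝ → ℝ × ℝ) (hfg : f b = g b)
    (hf : ∀ t ∈ Icc a b, HasDerivWithinAt f (V t (f t)) (Icc a b) t)
    (hg : ∀ t ∈ Icc b c, HasDerivWithinAt g (V t (g t)) (Icc b c) t) :
    ∃ F : ℝ → ℝ × ℝ, F a = f a ∧
      ∀ t ∈ Icc a c, HasDerivWithinAt F (V t (F t)) (Icc a c) t := by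
  classical
  refine ⟨fun t => if t ≤ b then f t else g t, by simp [hab], ?_⟩
  set F : ℝ → ℝ × ℝ := fun t => if t ≤ b then f t else g t with hF
  have hF1 : Set.EqOn F f (Icc a b) := fun t ht => by simp [hF, ht.2]
  have hF2 : Set.EqOn F g (Icc b c) := by
    intro t ht
    by_cases h : t ≤ b
    · have : t = b := le_antisymm h ht.1
      simp [hF, this, hfg]
    · simp [hF, h]
  intro t ht
  have hunion : Icc a b ∪ Icc b c = Icc a c := Set.Icc_union_Icc_eq_Icc hab hbc
  have h1 : HasDerivWithinAt F (V t (F t)) (Icc a b) t := by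
    by_cases h : t ∈ Icc a b
    · have := (hf t h).congr (fun x hx => hF1 hx) (hF1 h)
      rwa [hF1 h]
    · exact HasFDerivWithinAt.of_notMem_closure (by rwa [closure_Icc])
  have h2 : HasDerivWithinAt F (V t (F t)) (Icc b c) t := by
    by_cases h : t ∈ Icc b c
    · have := (hg t h).congr (fun x hx => hF2 hx) (hF2 h)
      rwa [hF2 h]
    · exact HasFDerivWithinAt.of_notMem_closure (by rwa [closure_Icc])
  rw [← hunion]
  exact h1.union h2

/-- Global existence for an IVP with a linearly bounded, globally Lipschitz vector field. -/
lemma ivp_global (V : ℝ → ℝ × ℝ → ℝ × ℝ) (K : NNReal) (hK : 1 ≤ (K : ℝ))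
    (hlip : ∀ t, LipschitzWith K (V t))
    (hcont : ∀ x, Continuous fun t => V t x)
    (hnorm : ∀ t x, ‖V t x‖ ≤ K * ‖x‖)
    (T : ℝ) (hT : 0 ≤ T) (x₀ : ℝ × ℝ) :
    ∃ f : ℝ → ℝ × ℝ, f 0 = x₀ ∧
      ∀ t ∈ Icc 0 T, HasDerivWithinAt f (V t (f t)) (Icc 0 T) t := by
  have hKpos : (0:ℝ) < K := lt_of_lt_of_le one_pos hK
  set δ : ℝ := 1 / (2 * K) with hδdef
  have hδpos : 0 < δ := by positivity
  have step : ∀ t₀ ∈ Icc 0 T, ∀ a : ℝ × ℝ,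
      ∃ g : ℝ → ℝ × ℝ, g t₀ = a ∧
        ∀ t ∈ Icc t₀ (min T (t₀ + δ)),
          HasDerivWithinAt g (V t (g t)) (Icc t₀ (min T (t₀ + δ))) t := by
    intro t₀ ht₀ a
    have hb : t₀ ≤ min T (t₀ + δ) := le_min ht₀.2 (by linarith)
    have ht₀mem : t₀ ∈ Icc t₀ (min T (t₀ + δ)) := ⟨le_refl _, hb⟩
    have hpl : IsPicardLindelof V (tmin := t₀) (tmax := min T (t₀ + δ)) ⟨t₀, ht₀mem⟩ a
        (‖a‖₊ + 1) 0 (K * (2 * ‖a‖₊ + 1)) K := by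
      refine ⟨fun t _ => (hlip t).lipschitzOnWith,
        fun x _ => (hcont x).continuousOn, ?_, ?_⟩
      · intro t _ x hx
        have h1 : ‖x‖ ≤ 2 * ‖a‖ + 1 := by
          have hd : dist x a ≤ ‖a‖ + 1 := by simpa using Metric.mem_closedBall.mp hx
          have := norm_sub_norm_le x a
          rw [← dist_eq_norm] at this
          linarith
        push_cast
        calc ‖V t x‖ ≤ K * ‖x‖ := hnorm t x
          _ ≤ K * (2 * ‖a‖ + 1) := by nlinarith [norm_nonneg x]
      · have h1 : min T (t₀ + δ) - t₀ ≤ δ := by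
          have := min_le_right T (t₀ + δ); linarith
        have h2 : max (min T (t₀ + δ) - t₀) (t₀ - t₀) ≤ δ :=
          max_le h1 (by linarith)
        have key : (K:ℝ) * (2 * ‖a‖ + 1) * max (min T (t₀ + δ) - t₀) (t₀ - t₀) ≤ ‖a‖ + 1 :=
          calc (K:ℝ) * (2 * ‖a‖ + 1) * max (min T (t₀ + δ) - t₀) (t₀ - t₀)
              ≤ K * (2 * ‖a‖ + 1) * δ := by
                apply mul_le_mul_of_nonneg_left h2; positivity
            _ = (2 * ‖a‖ + 1) / 2 := by rw [hδdef]; field_simp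
            _ ≤ ‖a‖ + 1 := by nlinarith [norm_nonneg a]
        push_cast
        simpa using key
    exact hpl.exists_eq_forall_mem_Icc_hasDerivWithinAt₀
  have main : ∀ n : ℕ, ∃ f : ℝ → ℝ × ℝ, f 0 = x₀ ∧
      ∀ t ∈ Icc 0 (min T (n * δ)), HasDerivWithinAt f (V t (f t)) (Icc 0 (min T (n * δ))) t := by
    intro n
    induction n with
    | zero =>
      refine ⟨fun _ => x₀, rfl, ?_⟩
      intro t ht
      simp only [Nat.cast_zero, zero_mul, min_eq_right hT] at ht ⊢
      rw [Set.Icc_self] at ht ⊢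
      rw [Set.mem_singleton_iff] at ht
      subst ht
      exact hasDerivWithinAt_singleton'' _
    | succ n ih =>
      obtain ⟨f, hf0, hf⟩ := ih
      by_cases hcase : T ≤ n * δ
      · have e1 : min T ((n:ℝ) * δ) = T := min_eq_left hcase
        have e2 : min T (((n:ℕ)+1 : ℕ) * δ) = T := by
          apply min_eq_left
          push_cast
          nlinarith
        refine ⟨f, hf0, ?_⟩
        rw [e2, ← e1]
        exact hf
      · push_neg at hcase
        have hnδ : (0:ℝ) ≤ n * δ := by positivity
        have e1 : min T ((n:ℝ) * δ) = (n:ℝ) * δ := min_eq_right hcase.le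
        obtain ⟨g, hg0, hg⟩ := step ((n:ℝ) * δ) ⟨hnδ, hcase.le⟩ (f ((n:ℝ) * δ))
        have e2 : min T ((n:ℝ) * δ + δ) = min T ((((n:ℕ)+1:ℕ)) * δ) := by
          push_cast; ring_nf
        rw [e2] at hg
        have hbc : (n:ℝ) * δ ≤ min T ((((n:ℕ)+1:ℕ)) * δ) := by
          apply le_min hcase.le
          push_cast
          nlinarith
        rw [e1] at hf
        obtain ⟨F, hF0, hF⟩ := glue_solutions V hnδ hbc f g hg0.symm hf hg
        exact ⟨F, by rw [hF0, hf0], hF⟩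
  obtain ⟨f, hf0, hf⟩ := main ⌈T / δ⌉₊
  have : min T ((⌈T / δ⌉₊ : ℝ) * δ) = T := by
    apply min_eq_left
    rw [← div_le_iff₀ hδpos] at *
    exact Nat.le_ceil _
  rw [this] at hf
  exact ⟨f, hf0, hf⟩

/-- Existence of solutions of the IVP for `u'' = q u` on `[0, T]`. -/
lemma scalar_ivp (T : ℝ) (hT : 0 < T) (q : ℝ → ℝ)
    (hq_cont : ContinuousOn q (Set.Icc 0 T)) (a b : ℝ) :
    ∃ u u' : ℝ → ℝ, u 0 = a ∧ u' 0 = b ∧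
      (∀ ξ ∈ Set.Icc 0 T, HasDerivWithinAt u (u' ξ) (Set.Icc 0 T) ξ) ∧
      (∀ ξ ∈ Set.Icc 0 T, HasDerivWithinAt u' (q ξ * u ξ) (Set.Icc 0 T) ξ) := by
  set Q : ℝ → ℝ := fun t => q (Set.projIcc 0 T hT.le t) with hQdef
  have hQcont : Continuous Q :=
    hq_cont.comp_continuous (continuous_subtype_val.comp (continuous_projIcc))
      (fun t => (Set.projIcc 0 T hT.le t).2)
  have hQeq : ∀ ξ ∈ Set.Icc 0 T, Q ξ = q ξ := by
    intro ξ hξ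
    simp [hQdef, Set.projIcc_of_mem hT.le hξ]
  obtain ⟨M, hM⟩ := isCompact_Icc.exists_bound_of_continuousOn hq_cont
  have hQbd : ∀ t, |Q t| ≤ M := fun t => by
    simpa using hM _ (Set.projIcc 0 T hT.le t).2
  have hMnn : 0 ≤ M := le_trans (abs_nonneg _) (hQbd 0)
  set K : NNReal := ⟨max M 1, le_trans zero_le_one (le_max_right M 1)⟩ with hKdef
  have hKcoe : (K : ℝ) = max M 1 := rfl
  have hK1 : 1 ≤ (K : ℝ) := by rw [hKcoe]; exact le_max_right M 1
  have hKM : M ≤ (K : ℝ) := by rw [hKcoe]; exact le_max_left M 1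
  set V : ℝ → ℝ × ℝ → ℝ × ℝ := fun t p => (p.2, Q t * p.1) with hVdef
  have hlip : ∀ t, LipschitzWith K (V t) := by
    intro t
    rw [lipschitzWith_iff_dist_le_mul]
    intro p p'
    rw [Prod.dist_eq, Prod.dist_eq]
    simp only [hVdef, Real.dist_eq]
    have hd1 : |p.1 - p'.1| ≤ max |p.1 - p'.1| |p.2 - p'.2| := le_max_left _ _
    have hd2 : |p.2 - p'.2| ≤ max |p.1 - p'.1| |p.2 - p'.2| := le_max_right _ _
    have hdnn : 0 ≤ max |p.1 - p'.1| |p.2 - p'.2| := le_trans (abs_nonneg _) hd1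
    apply max_le
    · nlinarith
    · rw [← mul_sub, abs_mul]
      have := hQbd t
      have := abs_nonneg (p.1 - p'.1)
      nlinarith
  have hnorm : ∀ t x, ‖V t x‖ ≤ K * ‖x‖ := by
    intro t x
    rw [Prod.norm_def, Prod.norm_def]
    simp only [hVdef, Real.norm_eq_abs]
    have hd1 : |x.1| ≤ max |x.1| |x.2| := le_max_left _ _
    have hd2 : |x.2| ≤ max |x.1| |x.2| := le_max_right _ _
    have hdnn : 0 ≤ max |x.1| |x.2| := le_trans (abs_nonneg _) hd1
    apply max_le
    · nlinarith
    · rw [abs_mul]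
      have := hQbd t
      have := abs_nonneg x.1
      nlinarith
  have hcont : ∀ x, Continuous fun t => V t x := by
    intro x
    exact continuous_const.prodMk ((hQcont.mul continuous_const))
  obtain ⟨f, hf0, hf⟩ := ivp_global V K hK1 hlip hcont hnorm T hT.le (a, b)
  refine ⟨fun ξ => (f ξ).1, fun ξ => (f ξ).2, by simp [hf0], by simp [hf0], ?_, ?_⟩
  · intro ξ hξ
    have h := hf ξ hξ
    have := (ContinuousLinearMap.fst ℝ ℝ ℝ).hasFDerivAt.comp_hasDerivWithinAt ξ h
    exact this
  · intro ξ hξ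
    have h := hf ξ hξ
    have h2 := (ContinuousLinearMap.snd ℝ ℝ ℝ).hasFDerivAt.comp_hasDerivWithinAt ξ h
    have : (ContinuousLinearMap.snd ℝ ℝ ℝ) (V ξ (f ξ)) = q ξ * (f ξ).1 := by
      simp [hVdef, hQeq ξ hξ]
    rw [this] at h2
    exact h2

/-- Uniqueness (homogeneous version): the only solution of `u'' = q u`, `u 0 = 0`, `u' T = 0`
with `q ≥ 0` is the zero function. -/
lemma bvp_unique_zero (T : ℝ) (hT : 0 < T) (q : ℝ → ℝ)
    (hq : ∀ ξ ∈ Set.Icc 0 T, 0 ≤ q ξ)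
    (u u' : ℝ → ℝ)
    (hd1 : ∀ ξ ∈ Set.Icc 0 T, HasDerivWithinAt u (u' ξ) (Set.Icc 0 T) ξ)
    (hd2 : ∀ ξ ∈ Set.Icc 0 T, HasDerivWithinAt u' (q ξ * u ξ) (Set.Icc 0 T) ξ)
    (h0 : u 0 = 0) (hT0 : u' T = 0) :
    ∀ ξ ∈ Set.Icc 0 T, u ξ = 0 := by
  have h0T : (0:ℝ) ∈ Set.Icc 0 T := ⟨le_refl _, hT.le⟩
  have hTT : T ∈ Set.Icc 0 T := ⟨hT.le, le_refl _⟩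
  have hcu : ContinuousOn u (Set.Icc 0 T) := fun ξ hξ => (hd1 ξ hξ).continuousWithinAt
  have hcu' : ContinuousOn u' (Set.Icc 0 T) := fun ξ hξ => (hd2 ξ hξ).continuousWithinAt
  have hderivs : ∀ ξ ∈ Set.Ioo 0 T,
      HasDerivAt u (u' ξ) ξ ∧ HasDerivAt u' (q ξ * u ξ) ξ := by
    intro ξ hξ
    have hmem := Set.Ioo_subset_Icc_self hξ
    have hnb : Set.Icc 0 T ∈ nhds ξ := Icc_mem_nhds hξ.1 hξ.2
    exact ⟨(hd1 ξ hmem).hasDerivAt hnb, (hd2 ξ hmem).hasDerivAt hnb⟩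
  set g : ℝ → ℝ := fun ξ => u ξ * u' ξ with hgdef
  have hmono : MonotoneOn g (Set.Icc 0 T) := by
    apply monotoneOn_of_hasDerivWithinAt_nonneg (convex_Icc 0 T) (hcu.mul hcu')
      (f' := fun ξ => u' ξ * u' ξ + u ξ * (q ξ * u ξ))
    · intro ξ hξ
      rw [interior_Icc] at hξ ⊢
      exact (((hderivs ξ hξ).1.mul (hderivs ξ hξ).2)).hasDerivWithinAt
    · intro ξ hξ
      rw [interior_Icc] at hξ
      have := hq ξ (Set.Ioo_subset_Icc_self hξ)
      nlinarith [mul_self_nonneg (u ξ), mul_self_nonneg (u' ξ)]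
  have hgzero : ∀ ξ ∈ Set.Icc 0 T, u ξ * u' ξ = 0 := by
    intro ξ hξ
    have l1 := hmono h0T hξ hξ.1
    have l2 := hmono hξ hTT hξ.2
    simp only [hgdef, h0, hT0, zero_mul, mul_zero] at l1 l2
    linarith
  set h : ℝ → ℝ := fun ξ => u ξ * u ξ with hhdef
  have hhd : ∀ ξ ∈ interior (Set.Icc 0 T),
      HasDerivWithinAt h ((fun _ => (0:ℝ)) ξ) (interior (Set.Icc 0 T)) ξ := by
    intro ξ hξ
    rw [interior_Icc] at hξ ⊢
    have hder := ((hderivs ξ hξ).1.mul (hderivs ξ hξ).1).hasDerivWithinAt (s := Set.Ioo 0 T)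
    have key : u' ξ * u ξ + u ξ * u' ξ = (0:ℝ) := by
      have := hgzero ξ (Set.Ioo_subset_Icc_self hξ)
      nlinarith
    rwa [key] at hder
  have hm1 : MonotoneOn h (Set.Icc 0 T) :=
    monotoneOn_of_hasDerivWithinAt_nonneg (convex_Icc 0 T) (hcu.mul hcu) hhd
      (fun ξ _ => le_refl 0)
  have hm2 : AntitoneOn h (Set.Icc 0 T) :=
    antitoneOn_of_hasDerivWithinAt_nonpos (convex_Icc 0 T) (hcu.mul hcu) hhd
      (fun ξ _ => le_refl 0)
  intro ξ hξ
  have l1 := hm1 h0T hξ hξ.1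
  have l2 := hm2 h0T hξ hξ.1
  have : h ξ = h 0 := le_antisymm l2 l1
  simp only [hhdef, h0, mul_zero] at this
  exact mul_self_eq_zero.mp this

/-- If `u` vanishes on `[0,T]` then so does its derivative. -/
lemma deriv_zero_of_zero (T : ℝ) (hT : 0 < T) (u u' : ℝ → ℝ)
    (hd : ∀ ξ ∈ Set.Icc 0 T, HasDerivWithinAt u (u' ξ) (Set.Icc 0 T) ξ)
    (hu : ∀ ξ ∈ Set.Icc 0 T, u ξ = 0) :
    ∀ ξ ∈ Set.Icc 0 T, u' ξ = 0 := by
  intro ξ hξ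
  have h1 : HasDerivWithinAt (fun _ : ℝ => (0:ℝ)) (u' ξ) (Set.Icc 0 T) ξ :=
    (hd ξ hξ).congr (fun x hx => (hu x hx).symm) ((hu ξ hξ).symm)
  have h2 : HasDerivWithinAt (fun _ : ℝ => (0:ℝ)) 0 (Set.Icc 0 T) ξ :=
    hasDerivWithinAt_const ξ _ 0
  have e1 := h1.derivWithin (uniqueDiffOn_Icc hT ξ hξ)
  have e2 := h2.derivWithin (uniqueDiffOn_Icc hT ξ hξ)
  rw [e1] at e2
  exact e2.symm ▸ rfl

/-- `u`, with derivative `u'`, is a twice continuously differentiable solution on `[0, T]`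
of the mixed Dirichlet–Neumann boundary value problem `u'' = q u`, `u 0 = A`, `u' T = 0`.
(The second derivative `q ξ * u ξ` is automatically continuous, so any such pair gives a
`C²` solution.) -/
def IsDirichletNeumannSolution (T A : ℝ) (q u u' : ℝ → ℝ) : Prop :=
  (∀ ξ ∈ Set.Icc 0 T, HasDerivWithinAt u (u' ξ) (Set.Icc 0 T) ξ) ∧
  (∀ ξ ∈ Set.Icc 0 T, HasDerivWithinAt u' (q ξ * u ξ) (Set.Icc 0 T) ξ) ∧
  u 0 = A ∧ u' T = 0

/-- Uniqueness for the boundary value problem, via the homogeneous case. -/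
lemma bvp_unique (T A : ℝ) (hT : 0 < T) (q : ℝ → ℝ)
    (hq : ∀ ξ ∈ Set.Icc 0 T, 0 ≤ q ξ)
    (u₁ u₁' u₂ u₂' : ℝ → ℝ)
    (h₁ : IsDirichletNeumannSolution T A q u₁ u₁')
    (h₂ : IsDirichletNeumannSolution T A q u₂ u₂') :
    ∀ ξ ∈ Set.Icc 0 T, u₁ ξ = u₂ ξ := by
  obtain ⟨hd1, hd2, h10, h1T⟩ := h₁
  obtain ⟨hd1', hd2', h20, h2T⟩ := h₂
  have key := bvp_unique_zero T hT q hq (fun ξ => u₁ ξ - u₂ ξ) (fun ξ => u₁' ξ - u₂' ξ)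
    (fun ξ hξ => (hd1 ξ hξ).sub (hd1' ξ hξ))
    (fun ξ hξ => by
      have := (hd2 ξ hξ).sub (hd2' ξ hξ)
      rwa [← mul_sub] at this)
    (by simp [h10, h20])
    (by simp [h1T, h2T])
  intro ξ hξ
  have := key ξ hξ
  linarith

/-- Existence and uniqueness for the mixed Dirichlet–Neumann boundary value problem
`u'' = q u` on `[0, T]`, `u(0) = A`, `u'(T) = 0`, with `q` continuous and strictly
positive on `[0, T]`. -/
theorem dirichlet_neumann_bvp_exists_unique
    (T A : ℝ) (hT : 0 < T) (q : ℝ → ℝ)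
    (hq_cont : ContinuousOn q (Set.Icc 0 T))
    (hq_pos : ∀ ξ ∈ Set.Icc 0 T, 0 < q ξ) :
    (∃ u u' : ℝ → ℝ, IsDirichletNeumannSolution T A q u u') ∧
    (∀ u₁ u₁' u₂ u₂' : ℝ → ℝ,
      IsDirichletNeumannSolution T A q u₁ u₁' →
      IsDirichletNeumannSolution T A q u₂ u₂' →
      ∀ ξ ∈ Set.Icc 0 T, u₁ ξ = u₂ ξ) := by
  have hq : ∀ ξ ∈ Set.Icc 0 T, 0 ≤ q ξ := fun ξ hξ => (hq_pos ξ hξ).le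
  constructor
  · -- existence
    obtain ⟨w, w', hw0, hw'0, hwd, hwd2⟩ := scalar_ivp T hT q hq_cont A 0
    obtain ⟨v, v', hv0, hv'0, hvd, hvd2⟩ := scalar_ivp T hT q hq_cont 0 1
    have hTT : T ∈ Set.Icc 0 T := ⟨hT.le, le_refl _⟩
    have h0T : (0:ℝ) ∈ Set.Icc 0 T := ⟨le_refl _, hT.le⟩
    have hvT : v' T ≠ 0 := by
      intro hcontra
      have vsol : IsDirichletNeumannSolution T 0 q v v' := ⟨hvd, hvd2, hv0, hcontra⟩
      have zsol : IsDirichletNeumannSolution T 0 q (fun _ => 0) (fun _ => 0) := by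
        refine ⟨fun ξ hξ => hasDerivWithinAt_const ξ _ 0,
          fun ξ hξ => by simpa using hasDerivWithinAt_const (𝕜 := ℝ) ξ (Set.Icc 0 T) (0:ℝ),
          rfl, rfl⟩
      have hveq := bvp_unique T 0 hT q hq v v' _ _ vsol zsol
      have hv'eq := deriv_zero_of_zero T hT v v' hvd hveq
      have := hv'eq 0 h0T
      rw [hv'0] at this
      exact one_ne_zero this
    set c : ℝ := w' T / v' T with hcdef
    refine ⟨fun ξ => w ξ - c * v ξ, fun ξ => w' ξ - c * v' ξ, ?_, ?_, ?_, ?_⟩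
    · exact fun ξ hξ => (hwd ξ hξ).sub ((hvd ξ hξ).const_mul c)
    · intro ξ hξ
      have := (hwd2 ξ hξ).sub ((hvd2 ξ hξ).const_mul c)
      exact this.congr_deriv (by beta_reduce; ring)
    · simp [hw0, hv0]
    · dsimp only
      rw [div_mul_cancel₀ _ hvT, sub_self]
  · intro u₁ u₁' u₂ u₂' h₁ h₂
    exact bvp_unique T A hT q hq u₁ u₁' u₂ u₂' h₁ h₂
end

section
/- Let L > 0 and α ∈ ℝ ∖ {0}. For every ε ∈ (0, L/2), set ξ_ε = arcsinh(L/ε) and let a_ε : [0, ξ_ε] → ℝ be the unique twice continuously differentiable function with a_ε''(ξ) = ε² e^{2ξ} a_ε(ξ) for all ξ ∈ [0, ξ_ε], a_ε(0) = 2α, and a_ε'(ξ_ε) = 0. Then ∫₀^{ξ_ε} (a_ε'(ξ))² dξ = 4α²/|log ε| + o(1/|log ε|) as ε → 0⁺; equivalently, |log ε| · ∫₀^{ξ_ε} (a_ε'(ξ))² dξ → 4α² as ε → 0⁺. -/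
open Real Set Filter intervalIntegral

open MeasureTheory Topology


lemma ftc_icc {X : ℝ} {u u' : ℝ → ℝ}
    (hu : ∀ ξ ∈ Icc 0 X, HasDerivWithinAt u (u' ξ) (Icc 0 X) ξ)
    (hu' : ContinuousOn u' (Icc 0 X))
    {x y : ℝ} (hx : 0 ≤ x) (hxy : x ≤ y) (hy : y ≤ X) :
    ∫ s in x..y, u' s = u y - u x := by
  have hsub : Icc x y ⊆ Icc 0 X := Icc_subset_Icc hx hy
  apply intervalIntegral.integral_eq_sub_of_hasDeriv_right_of_le hxy
  · exact fun t ht => ((hu t (hsub ht)).continuousWithinAt).mono hsub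
  · intro t ht
    have htX : t ∈ Ioo 0 X := ⟨lt_of_le_of_lt hx ht.1, lt_of_lt_of_le ht.2 hy⟩
    have : HasDerivAt u (u' t) t :=
      (hu t (Ioo_subset_Icc_self htX)).hasDerivAt (Icc_mem_nhds htX.1 htX.2)
    exact this.hasDerivWithinAt
  · exact (hu'.mono (by rw [uIcc_of_le hxy]; exact hsub)).intervalIntegrable

lemma pos_aux (α ε X : ℝ) (hα : 0 < α) (hε : 0 < ε) (hX0 : 0 ≤ X)
    (f f' : ℝ → ℝ)
    (hf : ∀ ξ ∈ Icc 0 X, HasDerivWithinAt f (f' ξ) (Icc 0 X) ξ)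
    (hf' : ∀ ξ ∈ Icc 0 X, HasDerivWithinAt f' (ε^2 * Real.exp (2*ξ) * f ξ) (Icc 0 X) ξ)
    (hf0 : f 0 = 2*α) (hfX : f' X = 0) :
    ∀ ξ ∈ Icc 0 X, 0 ≤ f ξ := by
  have hfc : ContinuousOn f (Icc 0 X) := fun x hx => (hf x hx).continuousWithinAt
  have hf'c : ContinuousOn f' (Icc 0 X) := fun x hx => (hf' x hx).continuousWithinAt
  have hqc : ContinuousOn (fun ξ => ε^2 * Real.exp (2*ξ) * f ξ) (Icc 0 X) :=
    (Continuous.continuousOn (by continuity)).mul hfc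
  have hint : ∀ (g : ℝ → ℝ), ContinuousOn g (Icc 0 X) → ∀ x y, 0 ≤ x → x ≤ y → y ≤ X →
      IntervalIntegrable g volume x y := fun g hg x y hx hxy hy =>
    (hg.mono (by rw [uIcc_of_le hxy]; exact Icc_subset_Icc hx hy)).intervalIntegrable
  by_contra hcon
  push_neg at hcon
  obtain ⟨ξ₁, hξ₁I, hξ₁⟩ := hcon
  rcases eq_or_ne (f X) 0 with hfX0 | hfX0
  · -- Gronwall : f X = 0, f' X = 0 forces f ≡ 0, contradicting f 0 = 2α > 0
    set C : ℝ := 1 + ε^2 * Real.exp (2*X) with hC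
    have hC1 : 1 ≤ C := by
      have := Real.exp_pos (2*X)
      nlinarith [sq_nonneg ε]
    set H : ℝ → ℝ := fun ξ => (f ξ^2 + f' ξ^2) * Real.exp (C*ξ) with hH
    set D : ℝ → ℝ := fun ξ =>
      (2*f ξ*f' ξ + 2*f' ξ*(ε^2*Real.exp (2*ξ)*f ξ) + C*(f ξ^2 + f' ξ^2)) * Real.exp (C*ξ)
      with hD
    have hHd : ∀ ξ ∈ Icc 0 X, HasDerivWithinAt H (D ξ) (Icc 0 X) ξ := by
      intro ξ hξ
      have h1 : HasDerivWithinAt (fun t => f t^2 + f' t^2)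
          (2*f ξ*f' ξ + 2*f' ξ*(ε^2*Real.exp (2*ξ)*f ξ)) (Icc 0 X) ξ := by
        have h1' := ((hf ξ hξ).pow 2).add ((hf' ξ hξ).pow 2)
        refine h1'.congr_deriv ?_
        push_cast
        ring
      have h2 : HasDerivAt (fun t : ℝ => Real.exp (C*t)) (Real.exp (C*ξ) * C) ξ := by
        have := ((hasDerivAt_id ξ).const_mul C).exp
        simpa using this
      have h3 := h1.mul (h2.hasDerivWithinAt)
      refine h3.congr_deriv ?_
      ring
    have hDc : ContinuousOn D (Icc 0 X) := by
      apply ContinuousOn.mul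
      · apply ContinuousOn.add
        · exact ((continuousOn_const.mul hfc).mul hf'c).add
            ((continuousOn_const.mul hf'c).mul hqc)
        · exact continuousOn_const.mul ((hfc.pow 2).add (hf'c.pow 2))
      · exact Continuous.continuousOn (by continuity)
    have hDpos : ∀ ξ ∈ Icc 0 X, 0 ≤ D ξ := by
      intro ξ hξ
      have hq0 : 0 ≤ ε^2 * Real.exp (2*ξ) := by positivity
      have hqC : 1 + ε^2 * Real.exp (2*ξ) ≤ C := by
        have : Real.exp (2*ξ) ≤ Real.exp (2*X) :=
          Real.exp_le_exp.2 (by nlinarith [hξ.2])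
        nlinarith [sq_nonneg ε]
      have hexp : 0 < Real.exp (C*ξ) := Real.exp_pos _
      apply mul_nonneg _ hexp.le
      nlinarith [sq_nonneg (f ξ + f' ξ), sq_nonneg (f ξ - f' ξ), sq_nonneg (f ξ), sq_nonneg (f' ξ)]
    have hI : ∫ s in (0:ℝ)..X, D s = H X - H 0 := ftc_icc hHd hDc le_rfl hX0 le_rfl
    have hI0 : 0 ≤ ∫ s in (0:ℝ)..X, D s :=
      intervalIntegral.integral_nonneg hX0 (fun u hu => hDpos u hu)
    have hHX : H X = 0 := by
      simp only [hH]
      rw [hfX0, hfX]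
      ring
    have hH0 : H 0 = 4*α^2 + f' 0^2 := by
      simp only [hH]
      rw [hf0]
      simp only [mul_zero, Real.exp_zero]
      ring
    nlinarith [sq_nonneg (f' 0), sq_nonneg α, hα]
  · -- f X ≠ 0 : largest-zero argument
    have hf0pos : 0 < f 0 := by rw [hf0]; linarith
    -- a zero exists below ξ₁
    have hzero : ∃ z₀ ∈ Icc 0 ξ₁, f z₀ = 0 := by
      have hsub : Icc (0:ℝ) ξ₁ ⊆ Icc 0 X := Icc_subset_Icc le_rfl hξ₁I.2
      have := intermediate_value_Icc' hξ₁I.1 (hfc.mono hsub)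
      have h0m : (0:ℝ) ∈ Icc (f ξ₁) (f 0) := ⟨hξ₁.le, hf0pos.le⟩
      obtain ⟨z₀, hz₀, hz₀0⟩ := this h0m
      exact ⟨z₀, hz₀, hz₀0⟩
    obtain ⟨z₀, hz₀I, hz₀⟩ := hzero
    set Z : Set ℝ := Icc 0 X ∩ f ⁻¹' {0} with hZ
    have hZne : Z.Nonempty := ⟨z₀, ⟨⟨hz₀I.1, hz₀I.2.trans hξ₁I.2⟩, hz₀⟩⟩
    have hZc : IsClosed Z := hfc.preimage_isClosed_of_isClosed isClosed_Icc isClosed_singleton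
    have hZcomp : IsCompact Z := isCompact_Icc.of_isClosed_subset hZc inter_subset_left
    set z : ℝ := sSup Z with hz
    have hzZ : z ∈ Z := hZcomp.sSup_mem hZne
    have hzI : z ∈ Icc 0 X := hzZ.1
    have hfz : f z = 0 := hzZ.2
    have hzX : z < X := lt_of_le_of_ne hzI.2 (fun h => hfX0 (h ▸ hfz))
    have hnozero : ∀ t ∈ Ioc z X, f t ≠ 0 := by
      intro t ht h0
      have htI : t ∈ Icc 0 X := ⟨hzI.1.trans ht.1.le, ht.2⟩
      have : t ≤ z := le_csSup hZcomp.bddAbove ⟨htI, h0⟩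
      exact absurd this (not_le.2 ht.1)
    have hsign : ∀ t ∈ Ioc z X, 0 < f t * f X := by
      intro t ht
      rcases lt_trichotomy (f t * f X) 0 with hneg | hzero' | hpos'
      · exfalso
        have htI : t ∈ Icc 0 X := ⟨hzI.1.trans ht.1.le, ht.2⟩
        have hsub : uIcc t X ⊆ Icc 0 X := by
          rw [uIcc_of_le ht.2]; exact Icc_subset_Icc htI.1 le_rfl
        have h0m : (0:ℝ) ∈ uIcc (f t) (f X) := by
          rcases mul_neg_iff.1 hneg with ⟨h1, h2⟩ | ⟨h1, h2⟩
          · exact Set.mem_uIcc.2 (Or.inr ⟨h2.le, h1.le⟩)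
          · exact Set.mem_uIcc.2 (Or.inl ⟨h1.le, h2.le⟩)
        obtain ⟨t', ht', hft'⟩ := intermediate_value_uIcc (hfc.mono hsub) h0m
        rw [uIcc_of_le ht.2] at ht'
        exact hnozero t' ⟨lt_of_lt_of_le ht.1 ht'.1, ht'.2⟩ hft'
      · exact absurd hzero' (mul_ne_zero (hnozero t ht) hfX0)
      · exact hpos'
    have hkey : ∀ t, z ≤ t → t < X → 0 < (f' X - f' t) * f X := by
      intro t hzt htX
      have htI : t ∈ Icc 0 X := ⟨hzI.1.trans hzt, htX.le⟩
      have hFTC : ∫ s in t..X, ε^2 * Real.exp (2*s) * f s = f' X - f' t :=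
        ftc_icc hf' hqc htI.1 htX.le le_rfl
      have : 0 < ∫ s in t..X, (ε^2 * Real.exp (2*s) * f s) * f X := by
        apply intervalIntegral_pos_of_pos_on
        · exact (hint _ hqc t X htI.1 htX.le le_rfl).mul_const (f X)
        · intro x hx
          have hs := hsign x ⟨lt_of_le_of_lt hzt hx.1, hx.2.le⟩
          have h1 : 0 < ε^2*Real.exp (2*x) := by positivity
          nlinarith [mul_pos h1 hs]
        · exact htX
      rw [intervalIntegral.integral_mul_const, hFTC] at this
      exact this
    have hneg : 0 < ∫ s in z..X, -(f' s * f X) := by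
      apply intervalIntegral_pos_of_pos_on
      · exact ((hint f' hf'c z X hzI.1 hzX.le le_rfl).mul_const (f X)).neg
      · intro x hx
        have := hkey x hx.1.le hx.2
        rw [hfX] at this
        nlinarith
      · exact hzX
    rw [intervalIntegral.integral_neg, intervalIntegral.integral_mul_const,
      ftc_icc hf hf'c hzI.1 hzX.le le_rfl, hfz] at hneg
    nlinarith [sq_nonneg (f X), hneg]

lemma int_exp2 (e x y : ℝ) :
    ∫ s in x..y, e^2 * Real.exp (2*s) = e^2/2 * Real.exp (2*y) - e^2/2 * Real.exp (2*x) := by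
  have h : ∀ s : ℝ, HasDerivAt (fun s => e^2/2 * Real.exp (2*s)) (e^2 * Real.exp (2*s)) s := by
    intro s
    have := ((hasDerivAt_id s).const_mul (2:ℝ)).exp.const_mul (e^2/2)
    refine this.congr_deriv ?_ <;> simp [id] <;> ring_nf
  rw [intervalIntegral.integral_eq_sub_of_hasDerivAt (fun s _ => h s)]
  exact (Continuous.intervalIntegrable (by continuity) x y)

lemma int_lin (X : ℝ) : ∫ s in (X-1)..X, (X - s) = 1/2 := by
  have h : ∀ s : ℝ, HasDerivAt (fun s => X*s - s^2/2) (X - s) s := by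
    intro s
    have := ((hasDerivAt_id s).const_mul X).sub (((hasDerivAt_id s).pow 2).div_const 2)
    refine this.congr_deriv ?_ <;> simp [id] <;> ring_nf
  rw [intervalIntegral.integral_eq_sub_of_hasDerivAt (fun s _ => h s)]
  · ring
  · exact (Continuous.intervalIntegrable (by continuity) _ _)

lemma m_facts {X : ℝ} (hX : 16 ≤ X) :
    2 ≤ Real.sqrt (Real.sqrt X) ∧ (Real.sqrt (Real.sqrt X))^4 = X ∧
      Real.sqrt (Real.sqrt X) ≤ X/2 := by
  have hX0 : (0:ℝ) ≤ X := by linarith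
  have h1 : Real.sqrt X ^ 2 = X := Real.sq_sqrt hX0
  have h2 : (Real.sqrt (Real.sqrt X))^2 = Real.sqrt X := Real.sq_sqrt (Real.sqrt_nonneg X)
  have hm4 : (Real.sqrt (Real.sqrt X))^4 = X := by
    have : (Real.sqrt (Real.sqrt X))^4 = ((Real.sqrt (Real.sqrt X))^2)^2 := by ring
    rw [this, h2, h1]
  have h16 : Real.sqrt 16 = 4 := by
    rw [show (16:ℝ) = 4^2 by norm_num, Real.sqrt_sq (by norm_num)]
  have h4 : Real.sqrt 4 = 2 := by
    rw [show (4:ℝ) = 2^2 by norm_num, Real.sqrt_sq (by norm_num)]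
  have hm2 : 2 ≤ Real.sqrt (Real.sqrt X) := by
    calc (2:ℝ) = Real.sqrt (Real.sqrt 16) := by rw [h16, h4]
    _ ≤ Real.sqrt (Real.sqrt X) := Real.sqrt_le_sqrt (Real.sqrt_le_sqrt hX)
  refine ⟨hm2, hm4, ?_⟩
  set t := Real.sqrt (Real.sqrt X) with ht
  have h3 : 2*2*2 ≤ t*t*t := by nlinarith [hm2]
  nlinarith [hm4, hm2, h3]

lemma le_sqrt_sqrt {b X : ℝ} (hb : 0 ≤ b) (h : b^4 ≤ X) : b ≤ Real.sqrt (Real.sqrt X) := by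
  have : b = Real.sqrt (Real.sqrt (b^4)) := by
    rw [show b^4 = (b^2)^2 by ring, Real.sqrt_sq (sq_nonneg b), Real.sqrt_sq hb]
  rw [this]
  exact Real.sqrt_le_sqrt (Real.sqrt_le_sqrt h)


lemma ar1 {a e E : ℝ} (ha : 0 ≤ a) (he : 0 ≤ e) :
    (e/2*E - e/2)*(2*a) ≤ a*(e*E) := by nlinarith [mul_nonneg ha he]

lemma ar2 {a e E : ℝ} (ha : 0 ≤ a) (he : 0 ≤ e) :
    a*(e/2*E - e/2) ≤ a/2*(e*E) := by nlinarith [mul_nonneg ha he]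

lemma ar3 {K q e : ℝ} (he : 0 < e) (h : 2*e ≤ K*(q*e)) : 2 ≤ K*q := by nlinarith

lemma ar4 {K q c fX : ℝ} (hq : 0 < q) (hc : 0 ≤ c) (hfX : 0 ≤ fX)
    (h1 : q*fX ≤ 2*c) (h2 : 2 ≤ K*q) : fX ≤ K*c := by
  nlinarith [mul_le_mul_of_nonneg_left h2 hc]

lemma ar5 {a e E : ℝ} (he : 0 ≤ e) :
    (e/2*E - e/2)*(2*a)^2 ≤ (e*E)*(2*a^2) := by nlinarith [mul_nonneg (sq_nonneg a) he]

set_option maxHeartbeats 1000000 in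
lemma per_eps (α ε X CT K₁ : ℝ) (hα : 0 < α) (hε : 0 < ε) (hX : 16 ≤ X)
    (hCT : (ε * Real.exp X)^2 ≤ CT)
    (hK₁ : 2 * Real.exp 2 ≤ K₁ * (ε * Real.exp X)^2) (hK₁0 : 0 ≤ K₁)
    (f f' : ℝ → ℝ)
    (hf : ∀ ξ ∈ Icc 0 X, HasDerivWithinAt f (f' ξ) (Icc 0 X) ξ)
    (hf' : ∀ ξ ∈ Icc 0 X, HasDerivWithinAt f' (ε^2 * Real.exp (2*ξ) * f ξ) (Icc 0 X) ξ)
    (hf0 : f 0 = 2*α) (hfX : f' X = 0) :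
    0 ≤ -f' 0 ∧
    (-f' 0) * (X - Real.sqrt (Real.sqrt X))
      ≤ 2*α + α/2 * CT * Real.exp (-(2*Real.sqrt (Real.sqrt X))) ∧
    2*α ≤ (-f' 0) * (X + K₁) ∧
    (∫ ξ in (0:ℝ)..X, f' ξ^2) ≤ 2*α*(-f' 0) ∧
    2*α*(-f' 0) - 2*α^2*CT*Real.exp (-(2*Real.sqrt (Real.sqrt X)))
        - ((-f' 0)*(K₁+Real.sqrt (Real.sqrt X)))^2 * CT/2 ≤ ∫ ξ in (0:ℝ)..X, f' ξ^2 := by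
  have hX0 : (0:ℝ) ≤ X := by linarith
  have cexp : Continuous (fun s : ℝ => ε^2 * Real.exp (2*s)) :=
    continuous_const.mul (Real.continuous_exp.comp (continuous_const.mul continuous_id))
  have hfc : ContinuousOn f (Icc 0 X) := fun x hx => (hf x hx).continuousWithinAt
  have hf'c : ContinuousOn f' (Icc 0 X) := fun x hx => (hf' x hx).continuousWithinAt
  have hqc : ContinuousOn (fun ξ => ε^2 * Real.exp (2*ξ) * f ξ) (Icc 0 X) :=
    (cexp.continuousOn).mul hfc
  have hint : ∀ (g : ℝ → ℝ), ContinuousOn g (Icc 0 X) → ∀ x y, 0 ≤ x → x ≤ y → y ≤ X →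
      IntervalIntegrable g volume x y := fun g hg x y hx hxy hy =>
    (hg.mono (by rw [uIcc_of_le hxy]; exact Icc_subset_Icc hx hy)).intervalIntegrable
  have hpos := pos_aux α ε X hα hε hX0 f f' hf hf' hf0 hfX
  obtain ⟨hm2, hm4, hmX2⟩ := m_facts hX
  set m : ℝ := Real.sqrt (Real.sqrt X) with hm
  have hm0 : (0:ℝ) ≤ m := Real.sqrt_nonneg _
  set c : ℝ := -f' 0 with hc
  have hf'0 : f' 0 = -c := by rw [hc]; ring
  have hf'mono : ∀ x y, 0 ≤ x → x ≤ y → y ≤ X → f' x ≤ f' y := by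
    intro x y hx hxy hy
    have h1 : ∫ s in x..y, ε^2 * Real.exp (2*s) * f s = f' y - f' x := ftc_icc hf' hqc hx hxy hy
    have h2 : 0 ≤ ∫ s in x..y, ε^2 * Real.exp (2*s) * f s :=
      intervalIntegral.integral_nonneg hxy (fun u hu =>
        mul_nonneg (by positivity) (hpos u ⟨hx.trans hu.1, hu.2.trans hy⟩))
    linarith
  have hf'le : ∀ ξ ∈ Icc 0 X, f' ξ ≤ 0 := fun ξ hξ => by
    have := hf'mono ξ X hξ.1 hξ.2 le_rfl
    rw [hfX] at this; exact this
  have hc0 : 0 ≤ c := by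
    have := hf'le 0 ⟨le_rfl, hX0⟩; rw [hf'0] at this; linarith
  have hf'ge : ∀ ξ ∈ Icc 0 X, -c ≤ f' ξ := fun ξ hξ => by
    have := hf'mono 0 ξ le_rfl hξ.1 hξ.2; rw [hf'0] at this; linarith
  have hfmono : ∀ x y, 0 ≤ x → x ≤ y → y ≤ X → f y ≤ f x := by
    intro x y hx hxy hy
    have h1 : ∫ s in x..y, f' s = f y - f x := ftc_icc hf hf'c hx hxy hy
    have h2 : 0 ≤ ∫ s in x..y, -f' s := intervalIntegral.integral_nonneg hxy
      (fun u hu => by have := hf'le u ⟨hx.trans hu.1, hu.2.trans hy⟩; linarith)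
    rw [intervalIntegral.integral_neg] at h2
    linarith
  have hfle : ∀ ξ ∈ Icc 0 X, f ξ ≤ 2*α := fun ξ hξ => by
    have := hfmono 0 ξ le_rfl hξ.1 hξ.2; rw [hf0] at this; exact this
  have hexp_mono : ∀ x y : ℝ, x ≤ y → Real.exp (2*x) ≤ Real.exp (2*y) := fun x y h =>
    Real.exp_le_exp.2 (by linarith)
  have h6 : ∀ ξ ∈ Icc 0 X, f' ξ ≤ -c + α*(ε^2*Real.exp (2*ξ)) := by
    intro ξ hξ
    have h1 : ∫ s in (0:ℝ)..ξ, ε^2 * Real.exp (2*s) * f s = f' ξ - f' 0 :=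
      ftc_icc hf' hqc le_rfl hξ.1 hξ.2
    have h2 : (∫ s in (0:ℝ)..ξ, ε^2 * Real.exp (2*s) * f s)
        ≤ ∫ s in (0:ℝ)..ξ, ε^2 * Real.exp (2*s) * (2*α) := by
      apply intervalIntegral.integral_mono_on hξ.1 (hint _ hqc 0 ξ le_rfl hξ.1 hξ.2)
        (Continuous.intervalIntegrable (cexp.mul continuous_const) _ _)
      intro u hu
      exact mul_le_mul_of_nonneg_left (hfle u ⟨hu.1, hu.2.trans hξ.2⟩) (by positivity)
    have h3 : ∫ s in (0:ℝ)..ξ, ε^2 * Real.exp (2*s) * (2*α)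
        = (ε^2/2 * Real.exp (2*ξ) - ε^2/2 * Real.exp (2*0)) * (2*α) := by
      rw [intervalIntegral.integral_mul_const, int_exp2]
    rw [hf'0] at h1
    have he0 : Real.exp (2*(0:ℝ)) = 1 := by norm_num
    rw [he0] at h3
    have har := ar1 hα.le (sq_nonneg ε) (E := Real.exp (2*ξ))
    linarith
  -- geometric quantities
  have hmX : m ≤ X/2 := hmX2
  have hy0 : (0:ℝ) ≤ X - m := by linarith
  have hyX : X - m ≤ X := by linarith
  have hyX1 : X - m ≤ X - 1 := by linarith
  have hX1 : (0:ℝ) ≤ X - 1 := by linarith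
  have hT2 : ε^2 * Real.exp (2*X) = (ε * Real.exp X)^2 := by
    rw [mul_pow, sq (Real.exp X), ← Real.exp_add]
    ring_nf
  have hEm : ε^2 * Real.exp (2*(X-m)) ≤ CT * Real.exp (-(2*m)) := by
    have hsplit : Real.exp (2*(X-m)) = Real.exp (2*X) * Real.exp (-(2*m)) := by
      rw [← Real.exp_add]; ring_nf
    calc ε^2 * Real.exp (2*(X-m)) = (ε^2 * Real.exp (2*X)) * Real.exp (-(2*m)) := by
          rw [hsplit]; ring
    _ ≤ CT * Real.exp (-(2*m)) := by
          apply mul_le_mul_of_nonneg_right _ (Real.exp_pos _).le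
          rw [hT2]; exact hCT
  have hCT0 : 0 ≤ CT := le_trans (sq_nonneg _) hCT
  -- Step 7 : upper bound on c
  have hstep7 : c * (X - m) ≤ 2*α + α/2 * CT * Real.exp (-(2*m)) := by
    have hIy : ∫ s in (0:ℝ)..(X-m), f' s = f (X-m) - f 0 := ftc_icc hf hf'c le_rfl hy0 hyX
    have hub : (∫ s in (0:ℝ)..(X-m), f' s)
        ≤ ∫ s in (0:ℝ)..(X-m), (-c + α*(ε^2*Real.exp (2*s))) := by
      apply intervalIntegral.integral_mono_on hy0 (hint f' hf'c 0 (X-m) le_rfl hy0 hyX)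
        (Continuous.intervalIntegrable (continuous_const.add (continuous_const.mul cexp)) _ _)
      intro u hu
      exact h6 u ⟨hu.1, hu.2.trans hyX⟩
    have hcomp : ∫ s in (0:ℝ)..(X-m), (-c + α*(ε^2*Real.exp (2*s)))
        = (X - m - 0) * (-c) + α*(ε^2/2 * Real.exp (2*(X-m)) - ε^2/2 * Real.exp (2*0)) := by
      rw [intervalIntegral.integral_add intervalIntegrable_const
        (Continuous.intervalIntegrable (u := fun s => α*(ε^2*Real.exp (2*s))) (continuous_const.mul cexp) _ _),
        intervalIntegral.integral_const, intervalIntegral.integral_const_mul, int_exp2,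
        smul_eq_mul]
    have hfy0 : 0 ≤ f (X-m) := hpos (X-m) ⟨hy0, hyX⟩
    have he0 : Real.exp (2*(0:ℝ)) = 1 := by norm_num
    rw [he0] at hcomp
    rw [hf0] at hIy
    have e2 : (X - m - 0) * (-c) = -(c*(X-m)) := by ring
    have e3 : α*(ε^2/2*Real.exp (2*(X-m)) - ε^2/2) ≤ α/2*(ε^2*Real.exp (2*(X-m))) :=
      ar2 hα.le (sq_nonneg ε)
    have e4 := mul_le_mul_of_nonneg_left hEm (by linarith : (0:ℝ) ≤ α/2)
    have e5 : α/2*(CT*Real.exp (-(2*m))) = α/2*CT*Real.exp (-(2*m)) := by ring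
    linarith
  -- Step 8 : f X ≤ K₁ c
  set q₀ : ℝ := ε^2 * Real.exp (2*(X-1)) with hq₀
  have hq₀pos : 0 < q₀ := by rw [hq₀]; positivity
  have h8a : ∀ ξ, X-1 ≤ ξ → ξ ≤ X → f' ξ ≤ -(q₀ * f X * (X - ξ)) := by
    intro ξ hξ1 hξX
    have hξ0 : (0:ℝ) ≤ ξ := by linarith
    have hFTC : ∫ s in ξ..X, ε^2*Real.exp (2*s)*f s = f' X - f' ξ :=
      ftc_icc hf' hqc hξ0 hξX le_rfl
    have hlb : (∫ _ in ξ..X, (q₀ * f X : ℝ)) ≤ ∫ s in ξ..X, ε^2*Real.exp (2*s)*f s := by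
      apply intervalIntegral.integral_mono_on hξX intervalIntegrable_const
        (hint _ hqc ξ X hξ0 hξX le_rfl)
      intro u hu
      have hu0 : (0:ℝ) ≤ u := by linarith [hu.1]
      have hq : q₀ ≤ ε^2*Real.exp (2*u) := by
        rw [hq₀]
        exact mul_le_mul_of_nonneg_left (hexp_mono _ _ (by linarith [hu.1])) (sq_nonneg ε)
      have hfu : f X ≤ f u := hfmono u X hu0 hu.2 le_rfl
      exact mul_le_mul hq hfu (hpos X ⟨hX0, le_rfl⟩) (by positivity)
    rw [intervalIntegral.integral_const, hFTC, hfX, smul_eq_mul] at hlb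
    have e1 : (X - ξ) * (q₀ * f X) = q₀ * f X * (X - ξ) := by ring
    linarith
  have h8b : q₀ * f X / 2 ≤ f (X-1) - f X := by
    have hFTC : ∫ s in (X-1)..X, f' s = f X - f (X-1) :=
      ftc_icc hf hf'c hX1 (by linarith) le_rfl
    have hub : (∫ s in (X-1)..X, f' s) ≤ ∫ s in (X-1)..X, (-(q₀ * f X)) * (X - s) := by
      apply intervalIntegral.integral_mono_on (by linarith)
        (hint f' hf'c _ _ hX1 (by linarith) le_rfl)
        (Continuous.intervalIntegrable (continuous_const.mul (continuous_const.sub continuous_id)) _ _)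
      intro u hu
      calc f' u ≤ -(q₀ * f X * (X - u)) := h8a u hu.1 hu.2
      _ = (-(q₀ * f X)) * (X - u) := by ring
    rw [intervalIntegral.integral_const_mul, int_lin] at hub
    have e1 : -(q₀ * f X) * (1/2) = -(q₀ * f X / 2) := by ring
    linarith
  have h8c : f (X-1) - f X ≤ c := by
    have hFTC : ∫ s in (X-1)..X, f' s = f X - f (X-1) :=
      ftc_icc hf hf'c hX1 (by linarith) le_rfl
    have hlb : (∫ _ in (X-1)..X, (-c : ℝ)) ≤ ∫ s in (X-1)..X, f' s := by
      apply intervalIntegral.integral_mono_on (by linarith) intervalIntegrable_const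
        (hint f' hf'c _ _ hX1 (by linarith) le_rfl)
      intro u hu
      exact hf'ge u ⟨by linarith [hu.1], hu.2⟩
    rw [intervalIntegral.integral_const, smul_eq_mul] at hlb
    have e1 : (X - (X-1)) * (-c) = -c := by ring
    linarith
  have h8d : q₀ * f X ≤ 2*c := by linarith
  have hqe : q₀ * Real.exp 2 = (ε * Real.exp X)^2 := by
    have h1 : Real.exp (2*(X-1)) * Real.exp 2 = Real.exp (2*X) := by
      rw [← Real.exp_add]; ring_nf
    calc q₀ * Real.exp 2 = ε^2 * (Real.exp (2*(X-1)) * Real.exp 2) := by rw [hq₀]; ring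
    _ = ε^2 * Real.exp (2*X) := by rw [h1]
    _ = (ε*Real.exp X)^2 := hT2
  have hq₀K : 2 ≤ K₁ * q₀ := by
    have hK₁' : 2 * Real.exp 2 ≤ K₁ * (q₀ * Real.exp 2) := by rw [hqe]; exact hK₁
    exact ar3 (Real.exp_pos 2) hK₁'
  have hfXK : f X ≤ K₁ * c := ar4 hq₀pos hc0 (hpos X ⟨hX0, le_rfl⟩) h8d hq₀K
  -- Step 9
  have h9 : f (X-m) ≤ f (X-1) + (m-1)*c := by
    have hFTC : ∫ s in (X-m)..(X-1), f' s = f (X-1) - f (X-m) :=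
      ftc_icc hf hf'c hy0 hyX1 (by linarith)
    have hlb : (∫ _ in (X-m)..(X-1), (-c : ℝ)) ≤ ∫ s in (X-m)..(X-1), f' s := by
      apply intervalIntegral.integral_mono_on hyX1 intervalIntegrable_const
        (hint f' hf'c _ _ hy0 hyX1 (by linarith))
      intro u hu
      exact hf'ge u ⟨by linarith [hu.1], by linarith [hu.2]⟩
    rw [intervalIntegral.integral_const, smul_eq_mul] at hlb
    have e1 : (X - 1 - (X-m)) * (-c) = -((m-1)*c) := by ring
    linarith
  have hA : f (X-m) ≤ c*(K₁+m) := by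
    have e1 : c*(K₁+m) = K₁*c + c + (m-1)*c := by ring
    linarith
  have hA0 : 0 ≤ f (X-m) := hpos (X-m) ⟨hy0, hyX⟩
  -- Step 10 : lower bound on c
  have h10 : 2*α ≤ c * (X + K₁) := by
    have hFTC : ∫ s in (0:ℝ)..(X-m), f' s = f (X-m) - f 0 := ftc_icc hf hf'c le_rfl hy0 hyX
    have hlb : (∫ _ in (0:ℝ)..(X-m), (-c : ℝ)) ≤ ∫ s in (0:ℝ)..(X-m), f' s := by
      apply intervalIntegral.integral_mono_on hy0 intervalIntegrable_const
        (hint f' hf'c _ _ le_rfl hy0 hyX)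
      intro u hu
      exact hf'ge u ⟨hu.1, hu.2.trans hyX⟩
    rw [intervalIntegral.integral_const, smul_eq_mul] at hlb
    rw [hf0] at hFTC
    have e1 : (X - m - 0) * (-c) = -((X-m)*c) := by ring
    have e2 : c*(X+K₁) = c*(K₁+m) + (X-m)*c := by ring
    linarith
  -- Step 11 : energy identity
  have hprod : ∀ ξ ∈ Icc 0 X, HasDerivWithinAt (fun t => f t * f' t)
      (f' ξ * f' ξ + f ξ * (ε^2*Real.exp (2*ξ) * f ξ)) (Icc 0 X) ξ :=
    fun ξ hξ => (hf ξ hξ).mul (hf' ξ hξ)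
  have hprodc : ContinuousOn (fun ξ => f' ξ * f' ξ + f ξ * (ε^2*Real.exp (2*ξ) * f ξ))
      (Icc 0 X) := (hf'c.mul hf'c).add (hfc.mul hqc)
  have hEI : ∫ s in (0:ℝ)..X, (f' s * f' s + f s * (ε^2*Real.exp (2*s) * f s)) = 2*α*c := by
    rw [ftc_icc hprod hprodc le_rfl hX0 le_rfl, hfX, hf0, hf'0]
    ring
  have hsplitfun : (fun s => f' s * f' s + f s * (ε^2*Real.exp (2*s) * f s))
      = (fun s => f' s^2 + ε^2*Real.exp (2*s) * f s^2) := by funext s; ring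
  rw [hsplitfun] at hEI
  have hqf2c : ContinuousOn (fun s => ε^2*Real.exp (2*s) * f s^2) (Icc 0 X) :=
    (cexp.continuousOn).mul (hfc.pow 2)
  have hE2 : ∫ s in (0:ℝ)..X, f' s^2
      = 2*α*c - ∫ s in (0:ℝ)..X, ε^2*Real.exp (2*s) * f s^2 := by
    have hadd := intervalIntegral.integral_add (hint (fun s => f' s^2) (hf'c.pow 2) 0 X le_rfl hX0 le_rfl)
      (hint _ hqf2c 0 X le_rfl hX0 le_rfl)
    rw [hEI] at hadd
    linarith
  have hqf2nn : 0 ≤ ∫ s in (0:ℝ)..X, ε^2*Real.exp (2*s) * f s^2 :=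
    intervalIntegral.integral_nonneg hX0 (fun u hu => by positivity)
  -- Step 12 : tail splitting
  have hadj : (∫ s in (0:ℝ)..(X-m), ε^2*Real.exp (2*s) * f s^2)
      + (∫ s in (X-m)..X, ε^2*Real.exp (2*s) * f s^2)
      = ∫ s in (0:ℝ)..X, ε^2*Real.exp (2*s) * f s^2 :=
    intervalIntegral.integral_add_adjacent_intervals
      (hint _ hqf2c 0 (X-m) le_rfl hy0 hyX) (hint _ hqf2c (X-m) X hy0 hyX le_rfl)
  have hI1 : (∫ s in (0:ℝ)..(X-m), ε^2*Real.exp (2*s) * f s^2)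
      ≤ 2*α^2*CT*Real.exp (-(2*m)) := by
    have hub : (∫ s in (0:ℝ)..(X-m), ε^2*Real.exp (2*s) * f s^2)
        ≤ ∫ s in (0:ℝ)..(X-m), ε^2*Real.exp (2*s) * (2*α)^2 := by
      apply intervalIntegral.integral_mono_on hy0 (hint _ hqf2c 0 (X-m) le_rfl hy0 hyX)
        (Continuous.intervalIntegrable (cexp.mul continuous_const) _ _)
      intro u hu
      have huI : u ∈ Icc 0 X := ⟨hu.1, hu.2.trans hyX⟩
      exact mul_le_mul_of_nonneg_left
        (pow_le_pow_left₀ (hpos u huI) (hfle u huI) 2) (by positivity)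
    rw [intervalIntegral.integral_mul_const, int_exp2] at hub
    have he0 : Real.exp (2*(0:ℝ)) = 1 := by norm_num
    rw [he0] at hub
    have e1 := ar5 (a := α) (sq_nonneg ε) (E := Real.exp (2*(X-m)))
    have e2 := mul_le_mul_of_nonneg_right hEm (by positivity : (0:ℝ) ≤ 2*α^2)
    have e3 : CT * Real.exp (-(2*m)) * (2*α^2) = 2*α^2*CT*Real.exp (-(2*m)) := by ring
    have e4 : ε^2*Real.exp (2*(X-m)) * (2*α^2) = (ε^2*Real.exp (2*(X-m)))*(2*α^2) := by ring
    linarith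
  have hI2 : (∫ s in (X-m)..X, ε^2*Real.exp (2*s) * f s^2)
      ≤ (c*(K₁+m))^2 * CT/2 := by
    have hub : (∫ s in (X-m)..X, ε^2*Real.exp (2*s) * f s^2)
        ≤ ∫ s in (X-m)..X, ε^2*Real.exp (2*s) * (f (X-m))^2 := by
      apply intervalIntegral.integral_mono_on hyX (hint _ hqf2c (X-m) X hy0 hyX le_rfl)
        (Continuous.intervalIntegrable (cexp.mul continuous_const) _ _)
      intro u hu
      have huI : u ∈ Icc 0 X := ⟨hy0.trans hu.1, hu.2⟩
      exact mul_le_mul_of_nonneg_left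
        (pow_le_pow_left₀ (hpos u huI) (hfmono (X-m) u hy0 hu.1 hu.2) 2) (by positivity)
    rw [intervalIntegral.integral_mul_const, int_exp2] at hub
    have hfA2 : (f (X-m))^2 ≤ (c*(K₁+m))^2 := pow_le_pow_left₀ hA0 hA 2
    have s0 : 0 ≤ ε^2/2*Real.exp (2*(X-m)) := by positivity
    have s1 : (ε^2/2*Real.exp (2*X) - ε^2/2*Real.exp (2*(X-m))) * (f (X-m))^2
        ≤ (ε^2*Real.exp (2*X))/2 * (f (X-m))^2 := by
      apply mul_le_mul_of_nonneg_right _ (sq_nonneg _)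
      linarith
    have s2 : (ε^2*Real.exp (2*X))/2 ≤ CT/2 := by linarith [hCT, hT2]
    have s3 : (ε^2*Real.exp (2*X))/2 * (f (X-m))^2 ≤ CT/2 * (f (X-m))^2 :=
      mul_le_mul_of_nonneg_right s2 (sq_nonneg _)
    have s4 : CT/2 * (f (X-m))^2 ≤ CT/2 * (c*(K₁+m))^2 :=
      mul_le_mul_of_nonneg_left hfA2 (by linarith)
    have s5 : CT/2*(c*(K₁+m))^2 = (c*(K₁+m))^2 * CT/2 := by ring
    linarith
  have hQ : (∫ s in (0:ℝ)..X, ε^2*Real.exp (2*s) * f s^2)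
      ≤ 2*α^2*CT*Real.exp (-(2*m)) + (c*(K₁+m))^2*CT/2 := by
    rw [← hadj]; exact add_le_add hI1 hI2
  refine ⟨hc0, hstep7, h10, by rw [hE2]; linarith [hqf2nn], by rw [hE2]; linarith [hQ]⟩
open Topology
noncomputable def Xf (L ε : ℝ) : ℝ := Real.arsinh (L/ε)
noncomputable def Mf (L ε : ℝ) : ℝ := Real.sqrt (Real.sqrt (Xf L ε))
noncomputable def K1 (L : ℝ) : ℝ := Real.exp 2/(2*L^2)
noncomputable def CTc (L : ℝ) : ℝ := (5*L/2)^2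
noncomputable def B0 (L : ℝ) : ℝ := |Real.log (2*L)| + |Real.log (5*L/2)|

lemma poly_exp_decay (B : ℝ) :
    Tendsto (fun u : ℝ => (u^4 + B)*Real.exp (-(2*u))) atTop (𝓝 0) := by
  have h2u : Tendsto (fun u : ℝ => 2*u) atTop atTop :=
    Tendsto.const_mul_atTop two_pos tendsto_id
  have h4 : Tendsto (fun u : ℝ => (2*u)^4 * Real.exp (-(2*u))) atTop (𝓝 0) :=
    (tendsto_pow_mul_exp_neg_atTop_nhds_zero 4).comp h2u
  have h0 : Tendsto (fun u : ℝ => Real.exp (-(2*u))) atTop (𝓝 0) :=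
    Real.tendsto_exp_neg_atTop_nhds_zero.comp h2u
  have hs := (h4.const_mul (1/16 : ℝ)).add (h0.const_mul B)
  have heq : (fun u : ℝ => 1/16*((2*u)^4 * Real.exp (-(2*u))) + B*Real.exp (-(2*u)))
      = fun u : ℝ => (u^4 + B)*Real.exp (-(2*u)) := by
    funext u; ring
  rw [heq] at hs
  simpa using hs

lemma ratio_tendsto_one {ι : Type*} {F : Filter ι} (n d : ι → ℝ) (C : ℝ)
    (hd : Tendsto d F atTop) (h : ∀ᶠ x in F, |n x - d x| ≤ C) :
    Tendsto (fun x => n x / d x) F (𝓝 1) := by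
  have hC : Tendsto (fun x => C / d x) F (𝓝 0) := tendsto_const_nhds.div_atTop hd
  have hlo : Tendsto (fun x => 1 - C / d x) F (𝓝 1) := by
    simpa using (tendsto_const_nhds (x := (1:ℝ))).sub hC
  have hhi : Tendsto (fun x => 1 + C / d x) F (𝓝 1) := by
    simpa using (tendsto_const_nhds (x := (1:ℝ))).add hC
  apply tendsto_of_tendsto_of_tendsto_of_le_of_le' hlo hhi
  · filter_upwards [h, hd.eventually_ge_atTop 1] with x hx hd1
    have hdpos : (0:ℝ) < d x := by linarith
    rw [abs_le] at hx
    have h1 : (d x - C)/d x ≤ n x / d x := (div_le_div_iff_of_pos_right hdpos).2 (by linarith)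
    have h2 : (d x - C)/d x = 1 - C/d x := by field_simp
    linarith
  · filter_upwards [h, hd.eventually_ge_atTop 1] with x hx hd1
    have hdpos : (0:ℝ) < d x := by linarith
    rw [abs_le] at hx
    have h1 : n x / d x ≤ (d x + C)/d x := (div_le_div_iff_of_pos_right hdpos).2 (by linarith)
    have h2 : (d x + C)/d x = 1 + C/d x := by field_simp
    linarith

section Limits
variable {L : ℝ}

lemma mf_facts {L ε : ℝ} (h16 : 16 ≤ Xf L ε) :
    2 ≤ Mf L ε ∧ (Mf L ε)^4 = Xf L ε ∧ Mf L ε ≤ Xf L ε/2 := m_facts h16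

lemma mf_nonneg (L ε : ℝ) : 0 ≤ Mf L ε := Real.sqrt_nonneg _

lemma hX_inf (hL : 0 < L) : Tendsto (Xf L) (𝓝[>](0:ℝ)) atTop := by
  have h1 : Tendsto (fun ε : ℝ => L/ε) (𝓝[>](0:ℝ)) atTop := by
    have h2 := (tendsto_inv_nhdsGT_zero (𝕜 := ℝ)).const_mul_atTop hL
    simpa [div_eq_mul_inv] using h2
  have harsinh : Tendsto Real.arsinh atTop atTop :=
    tendsto_atTop_atTop_of_monotone Real.arsinh_strictMono.monotone
      (fun b => ⟨Real.sinh b, (Real.arsinh_sinh b).ge⟩)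
  exact harsinh.comp h1

lemma hM_inf (hL : 0 < L) : Tendsto (Mf L) (𝓝[>](0:ℝ)) atTop := by
  rw [tendsto_atTop]
  intro b
  filter_upwards [(hX_inf hL).eventually_ge_atTop ((max b 0)^4)] with ε h
  exact le_trans (le_max_left b 0) (le_sqrt_sqrt (le_max_right b 0) h)

lemma hgen (hL : 0 < L) (C : ℝ) :
    Tendsto (fun ε => (Mf L ε + C)/(Xf L ε - Mf L ε)) (𝓝[>](0:ℝ)) (𝓝 0) := by
  apply tendsto_of_tendsto_of_tendsto_of_le_of_le' tendsto_const_nhds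
    ((tendsto_const_nhds (x := (4:ℝ))).div_atTop (hM_inf hL))
  · filter_upwards [(hX_inf hL).eventually_ge_atTop 16,
      (hM_inf hL).eventually_ge_atTop (|C|+1)] with ε h16 hmC
    obtain ⟨hm2, hm4, hm3⟩ := mf_facts h16
    exact div_nonneg (by linarith [neg_abs_le C]) (by linarith)
  · filter_upwards [(hX_inf hL).eventually_ge_atTop 16,
      (hM_inf hL).eventually_ge_atTop (|C|+1)] with ε h16 hmC
    obtain ⟨hm2, hm4, hm3⟩ := mf_facts h16
    have hm0 : (0:ℝ) ≤ Mf L ε := mf_nonneg L ε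
    rw [div_le_div_iff₀ (by linarith) (by linarith)]
    have h1 : Mf L ε + C ≤ 2*Mf L ε := by linarith [le_abs_self C]
    have h2 := mul_le_mul_of_nonneg_right h1 hm0
    nlinarith [hm4, hm2, h2, sq_nonneg (Mf L ε)]

lemma hT_eq (hL : 0 < L) {ε : ℝ} (hε : 0 < ε) :
    ε * Real.exp (Xf L ε) = L + Real.sqrt (ε^2 + L^2) := by
  have hEA : Real.exp (Real.arsinh (L/ε)) = L/ε + Real.sqrt (1 + (L/ε)^2) :=
    Real.exp_arsinh _
  have hsq : Real.sqrt (1 + (L/ε)^2) = Real.sqrt (ε^2 + L^2)/ε := by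
    rw [show 1 + (L/ε)^2 = (ε^2 + L^2)/ε^2 by field_simp,
      Real.sqrt_div (by positivity), Real.sqrt_sq hε.le]
  rw [Xf, hEA, hsq]
  field_simp

lemma hT_bounds (hL : 0 < L) {ε : ℝ} (hε : 0 < ε) (hεL : ε < L/2) :
    2*L ≤ ε * Real.exp (Xf L ε) ∧ ε * Real.exp (Xf L ε) ≤ 5*L/2 := by
  rw [hT_eq hL hε]
  constructor
  · have h1 : L ≤ Real.sqrt (ε^2 + L^2) := by
      calc L = Real.sqrt (L^2) := (Real.sqrt_sq hL.le).symm
      _ ≤ Real.sqrt (ε^2 + L^2) := Real.sqrt_le_sqrt (by nlinarith)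
    linarith
  · have h1 : Real.sqrt (ε^2 + L^2) ≤ L + ε := by
      calc Real.sqrt (ε^2 + L^2) ≤ Real.sqrt ((L+ε)^2) := Real.sqrt_le_sqrt (by nlinarith)
      _ = L + ε := Real.sqrt_sq (by positivity)
    linarith

lemma hCT_cond (hL : 0 < L) {ε : ℝ} (hε : 0 < ε) (hεL : ε < L/2) :
    (ε * Real.exp (Xf L ε))^2 ≤ CTc L := by
  obtain ⟨h1, h2⟩ := hT_bounds hL hε hεL
  rw [CTc]
  exact pow_le_pow_left₀ (by positivity) h2 2

lemma hCT_nonneg (hL : 0 < L) : 0 ≤ CTc L := by rw [CTc]; positivity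

lemma hK1_cond (hL : 0 < L) {ε : ℝ} (hε : 0 < ε) (hεL : ε < L/2) :
    2 * Real.exp 2 ≤ K1 L * (ε * Real.exp (Xf L ε))^2 := by
  obtain ⟨h1, h2⟩ := hT_bounds hL hε hεL
  have h3 : (2*L)^2 ≤ (ε * Real.exp (Xf L ε))^2 := pow_le_pow_left₀ (by positivity) h1 2
  have h4 := mul_le_mul_of_nonneg_left h3 (show (0:ℝ) ≤ K1 L by rw [K1]; positivity)
  have h5 : K1 L * (2*L)^2 = 2 * Real.exp 2 := by
    rw [K1]; field_simp
  linarith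

lemma hK1_nonneg (hL : 0 < L) : 0 ≤ K1 L := by rw [K1]; positivity

lemma hlogT_bound (hL : 0 < L) {ε : ℝ} (hε : 0 < ε) (hεL : ε < L/2) :
    |Real.log (ε*Real.exp (Xf L ε))| ≤ B0 L := by
  obtain ⟨h1, h2⟩ := hT_bounds hL hε hεL
  have hl1 : Real.log (2*L) ≤ Real.log (ε*Real.exp (Xf L ε)) :=
    Real.log_le_log (by positivity) h1
  have hl2 : Real.log (ε*Real.exp (Xf L ε)) ≤ Real.log (5*L/2) :=
    Real.log_le_log (by positivity) h2
  rw [B0, abs_le]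
  constructor
  · linarith [neg_abs_le (Real.log (2*L)), abs_nonneg (Real.log (5*L/2))]
  · linarith [le_abs_self (Real.log (5*L/2)), abs_nonneg (Real.log (2*L))]

lemma hlog_eq (hL : 0 < L) {ε : ℝ} (hε : 0 < ε) (hε1 : ε < 1) :
    |Real.log ε| = Xf L ε - Real.log (ε*Real.exp (Xf L ε)) := by
  rw [Real.log_mul hε.ne' (Real.exp_pos _).ne', Real.log_exp,
    abs_of_neg (Real.log_neg hε hε1)]
  ring

lemma ev_good (hL : 0 < L) : ∀ᶠ ε in 𝓝[>](0:ℝ),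
    0 < ε ∧ ε < L/2 ∧ ε < 1 ∧ 16 ≤ Xf L ε := by
  filter_upwards [eventually_mem_nhdsWithin,
    Ioo_mem_nhdsGT (show (0:ℝ) < min (L/2) 1 by positivity),
    (hX_inf hL).eventually_ge_atTop 16] with ε hε0 hsm h16
  exact ⟨hε0, lt_of_lt_of_le hsm.2 (min_le_left _ _),
    lt_of_lt_of_le hsm.2 (min_le_right _ _), h16⟩

lemma hP1 (hL : 0 < L) :
    Tendsto (fun ε => |Real.log ε|/(Xf L ε - Mf L ε)) (𝓝[>](0:ℝ)) (𝓝 1) := by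
  have hlo : Tendsto (fun ε => 1 + (Mf L ε + -(B0 L))/(Xf L ε - Mf L ε))
      (𝓝[>](0:ℝ)) (𝓝 1) := by
    simpa using (tendsto_const_nhds (x := (1:ℝ))).add (hgen hL (-(B0 L)))
  have hhi : Tendsto (fun ε => 1 + (Mf L ε + B0 L)/(Xf L ε - Mf L ε))
      (𝓝[>](0:ℝ)) (𝓝 1) := by
    simpa using (tendsto_const_nhds (x := (1:ℝ))).add (hgen hL (B0 L))
  have hkey : ∀ᶠ ε in 𝓝[>](0:ℝ),
      (1 + (Mf L ε + -(B0 L))/(Xf L ε - Mf L ε) ≤ |Real.log ε|/(Xf L ε - Mf L ε))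
      ∧ (|Real.log ε|/(Xf L ε - Mf L ε) ≤ 1 + (Mf L ε + B0 L)/(Xf L ε - Mf L ε)) := by
    filter_upwards [ev_good hL] with ε ⟨hε, hεL, hε1, h16⟩
    obtain ⟨hm2, hm4, hm3⟩ := mf_facts h16
    have hd : (0:ℝ) < Xf L ε - Mf L ε := by linarith
    have hlog := hlog_eq hL hε hε1
    have hlogB := abs_le.1 (hlogT_bound hL hε hεL)
    have hid : |Real.log ε|/(Xf L ε - Mf L ε)
        = 1 + (Mf L ε - Real.log (ε*Real.exp (Xf L ε)))/(Xf L ε - Mf L ε) := by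
      rw [hlog]
      field_simp
      ring
    rw [hid]
    constructor
    · have := (div_le_div_iff_of_pos_right hd).2
        (show Mf L ε + -(B0 L) ≤ Mf L ε - Real.log (ε*Real.exp (Xf L ε)) by linarith)
      linarith
    · have := (div_le_div_iff_of_pos_right hd).2
        (show Mf L ε - Real.log (ε*Real.exp (Xf L ε)) ≤ Mf L ε + B0 L by linarith)
      linarith
  exact tendsto_of_tendsto_of_tendsto_of_le_of_le' hlo hhi
    (hkey.mono fun ε h => h.1) (hkey.mono fun ε h => h.2)

lemma hP3 (hL : 0 < L) :
    Tendsto (fun ε => |Real.log ε|/(Xf L ε + K1 L)) (𝓝[>](0:ℝ)) (𝓝 1) := by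
  apply ratio_tendsto_one _ _ (B0 L + K1 L)
    (tendsto_atTop_add_const_right _ (K1 L) (hX_inf hL))
  filter_upwards [ev_good hL] with ε ⟨hε, hεL, hε1, h16⟩
  have hlog := hlog_eq hL hε hε1
  have hlogB := abs_le.1 (hlogT_bound hL hε hεL)
  have hK := hK1_nonneg hL
  have hdiff : |Real.log ε| - (Xf L ε + K1 L) = -(Real.log (ε*Real.exp (Xf L ε))) - K1 L := by
    rw [hlog]; ring
  rw [hdiff, abs_le]
  constructor
  · linarith [hlogB.2]
  · linarith [hlogB.1]

lemma hP2 (hL : 0 < L) :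
    Tendsto (fun ε => Real.exp (-(2*Mf L ε))) (𝓝[>](0:ℝ)) (𝓝 0) := by
  have h1 : Tendsto (fun ε => -(2*Mf L ε)) (𝓝[>](0:ℝ)) atBot :=
    tendsto_neg_atTop_atBot.comp (Tendsto.const_mul_atTop two_pos (hM_inf hL))
  exact Real.tendsto_exp_atBot.comp h1

lemma hP4 (hL : 0 < L) :
    Tendsto (fun ε => |Real.log ε| * Real.exp (-(2*Mf L ε))) (𝓝[>](0:ℝ)) (𝓝 0) := by
  have hup : Tendsto (fun ε => ((Mf L ε)^4 + B0 L) * Real.exp (-(2*Mf L ε)))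
      (𝓝[>](0:ℝ)) (𝓝 0) := (poly_exp_decay (B0 L)).comp (hM_inf hL)
  apply tendsto_of_tendsto_of_tendsto_of_le_of_le' tendsto_const_nhds hup
  · filter_upwards with ε
    positivity
  · filter_upwards [ev_good hL] with ε ⟨hε, hεL, hε1, h16⟩
    obtain ⟨hm2, hm4, hm3⟩ := mf_facts h16
    have hlog := hlog_eq hL hε hε1
    have hlogB := abs_le.1 (hlogT_bound hL hε hεL)
    have hΛle : |Real.log ε| ≤ (Mf L ε)^4 + B0 L := by
      rw [hlog, hm4]; linarith
    exact mul_le_mul_of_nonneg_right hΛle (Real.exp_pos _).le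

lemma hP5 (hL : 0 < L) :
    Tendsto (fun ε => (K1 L + Mf L ε)^2/(Xf L ε - Mf L ε)) (𝓝[>](0:ℝ)) (𝓝 0) := by
  apply tendsto_of_tendsto_of_tendsto_of_le_of_le' tendsto_const_nhds
    ((tendsto_const_nhds (x := (8:ℝ))).div_atTop (hM_inf hL))
  · filter_upwards [(hX_inf hL).eventually_ge_atTop 16] with ε h16
    obtain ⟨hm2, hm4, hm3⟩ := mf_facts h16
    exact div_nonneg (sq_nonneg _) (by linarith)
  · filter_upwards [(hX_inf hL).eventually_ge_atTop 16,
      (hM_inf hL).eventually_ge_atTop (K1 L + 1)] with ε h16 hmK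
    obtain ⟨hm2, hm4, hm3⟩ := mf_facts h16
    have hm0 : (0:ℝ) ≤ Mf L ε := mf_nonneg L ε
    rw [div_le_div_iff₀ (by linarith) (by linarith)]
    have h1 : K1 L + Mf L ε ≤ 2*Mf L ε := by linarith
    have h2 : (K1 L + Mf L ε)^2 ≤ (2*Mf L ε)^2 :=
      pow_le_pow_left₀ (by linarith [hK1_nonneg hL]) h1 2
    nlinarith [hm4, hm2, h2, sq_nonneg (Mf L ε)]

end Limits
lemma master (L α : ℝ) (hL : 0 < L) (hα : 0 < α)
    (a a' : ℝ → ℝ → ℝ)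
    (ha_deriv : ∀ ε : ℝ, 0 < ε → ε < L / 2 →
      ∀ ξ ∈ Set.Icc 0 (Real.arsinh (L / ε)),
        HasDerivWithinAt (a ε) (a' ε ξ) (Set.Icc 0 (Real.arsinh (L / ε))) ξ)
    (ha'_deriv : ∀ ε : ℝ, 0 < ε → ε < L / 2 →
      ∀ ξ ∈ Set.Icc 0 (Real.arsinh (L / ε)),
        HasDerivWithinAt (a' ε) (ε ^ 2 * Real.exp (2 * ξ) * a ε ξ)
          (Set.Icc 0 (Real.arsinh (L / ε))) ξ)
    (ha_bc0 : ∀ ε : ℝ, 0 < ε → ε < L / 2 → a ε 0 = 2 * α)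
    (ha_bc1 : ∀ ε : ℝ, 0 < ε → ε < L / 2 → a' ε (Real.arsinh (L / ε)) = 0) :
    Tendsto
      (fun ε : ℝ => |Real.log ε| * ∫ ξ in (0 : ℝ)..(Real.arsinh (L / ε)), (a' ε ξ) ^ 2)
      (nhdsWithin 0 (Set.Ioi 0)) (nhds (4 * α ^ 2)) := by
  have hRt : Tendsto (fun ε => 2*α + α/2*CTc L*Real.exp (-(2*Mf L ε)))
      (𝓝[>](0:ℝ)) (𝓝 (2*α)) := by
    have h := (tendsto_const_nhds (x := 2*α)).add ((hP2 hL).const_mul (α/2*CTc L))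
    simpa using h
  have hUt : Tendsto (fun ε => 2*α*(2*α + α/2*CTc L*Real.exp (-(2*Mf L ε)))
      *(|Real.log ε|/(Xf L ε - Mf L ε))) (𝓝[>](0:ℝ)) (𝓝 (4*α^2)) := by
    have h := ((tendsto_const_nhds (x := 2*α)).mul hRt).mul (hP1 hL)
    have h2 : 2*α*(2*α)*1 = 4*α^2 := by ring
    rw [h2] at h
    exact h
  have hLot : Tendsto (fun ε =>
      4*α^2*(|Real.log ε|/(Xf L ε + K1 L))
      - 2*α^2*CTc L*(|Real.log ε| * Real.exp (-(2*Mf L ε)))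
      - CTc L/2*(2*α + α/2*CTc L*Real.exp (-(2*Mf L ε)))^2
          *((K1 L + Mf L ε)^2/(Xf L ε - Mf L ε))*(|Real.log ε|/(Xf L ε - Mf L ε)))
      (𝓝[>](0:ℝ)) (𝓝 (4*α^2)) := by
    have h1 := (tendsto_const_nhds (x := 4*α^2)).mul (hP3 hL)
    have h2 := (tendsto_const_nhds (x := 2*α^2*CTc L)).mul (hP4 hL)
    have h3 := (((tendsto_const_nhds (x := CTc L/2)).mul (hRt.pow 2)).mul
      (hP5 hL)).mul (hP1 hL)
    have h := (h1.sub h2).sub h3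
    have heq : 4*α^2*1 - 2*α^2*CTc L*0 - CTc L/2*(2*α)^2*0*1 = 4*α^2 := by ring
    rw [heq] at h
    exact h
  apply tendsto_of_tendsto_of_tendsto_of_le_of_le' hLot hUt
  · -- lower bound
    filter_upwards [ev_good hL] with ε hgood
    obtain ⟨hε, hεL, hε1, h16⟩ := hgood
    simp only [Xf, Mf] at h16 ⊢
    obtain ⟨hm2, hm4, hm3⟩ := m_facts h16
    have hper := per_eps α ε (Real.arsinh (L/ε)) (CTc L) (K1 L) hα hε h16
      (hCT_cond hL hε hεL) (hK1_cond hL hε hεL) (hK1_nonneg hL)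
      (a ε) (a' ε) (ha_deriv ε hε hεL) (ha'_deriv ε hε hεL)
      (ha_bc0 ε hε hεL) (ha_bc1 ε hε hεL)
    obtain ⟨p1, p2, p3, p4, p5⟩ := hper
    set XX : ℝ := Real.arsinh (L/ε) with hXX
    set MM : ℝ := Real.sqrt (Real.sqrt XX) with hMM
    set Λ : ℝ := |Real.log ε| with hΛ
    set c : ℝ := -a' ε 0 with hc
    set E : ℝ := ∫ ξ in (0:ℝ)..XX, (a' ε ξ)^2 with hE
    set e2 : ℝ := Real.exp (-(2*MM)) with he2
    set RR : ℝ := 2*α + α/2*CTc L*e2 with hRR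
    have hΛ0 : 0 ≤ Λ := abs_nonneg _
    have hd : (0:ℝ) < XX - MM := by linarith
    have hdK : (0:ℝ) < XX + K1 L := by linarith [hK1_nonneg hL]
    have hCT0 : 0 ≤ CTc L := hCT_nonneg hL
    have hMM0 : (0:ℝ) ≤ MM := Real.sqrt_nonneg _
    have he20 : 0 < e2 := Real.exp_pos _
    have hRR0 : 0 ≤ RR := by
      rw [hRR]; positivity
    -- g1 : Λ * lower ≤ Λ * E
    have g1 := mul_le_mul_of_nonneg_left p5 hΛ0
    -- c lower bound
    have hc_lb : 2*α/(XX + K1 L) ≤ c := (div_le_iff₀ hdK).2 (by linarith)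
    have t1 := mul_le_mul_of_nonneg_left hc_lb
      (mul_nonneg (by linarith : (0:ℝ) ≤ 2*α) hΛ0)
    have e1 : 2*α*Λ*(2*α/(XX + K1 L)) = 4*α^2*(Λ/(XX + K1 L)) := by ring
    -- c upper bound
    have hc_ub : c ≤ RR/(XX - MM) := (le_div_iff₀ hd).2 p2
    have hcm : c*(K1 L + MM) ≤ RR/(XX - MM)*(K1 L + MM) :=
      mul_le_mul_of_nonneg_right hc_ub (by linarith [hK1_nonneg hL])
    have hcm2 : (c*(K1 L + MM))^2 ≤ (RR/(XX - MM)*(K1 L + MM))^2 :=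
      pow_le_pow_left₀ (mul_nonneg p1 (by linarith [hK1_nonneg hL])) hcm 2
    have t2 := mul_le_mul_of_nonneg_left hcm2
      (mul_nonneg (by linarith : (0:ℝ) ≤ CTc L/2) hΛ0)
    have e2' : CTc L/2*Λ*(RR/(XX - MM)*(K1 L + MM))^2
        = CTc L/2*RR^2*((K1 L + MM)^2/(XX - MM))*(Λ/(XX - MM)) := by
      field_simp
    refine le_trans ?_ g1
    have e3 : Λ*(2*α*c - 2*α^2*CTc L*e2 - (c*(K1 L + MM))^2*CTc L/2)
        = 2*α*Λ*c - 2*α^2*CTc L*(Λ*e2) - CTc L/2*Λ*(c*(K1 L + MM))^2 := by ring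
    rw [e3]
    linarith [t1, t2, e1, e2']
  · -- upper bound
    filter_upwards [ev_good hL] with ε hgood
    obtain ⟨hε, hεL, hε1, h16⟩ := hgood
    simp only [Xf, Mf] at h16 ⊢
    obtain ⟨hm2, hm4, hm3⟩ := m_facts h16
    have hper := per_eps α ε (Real.arsinh (L/ε)) (CTc L) (K1 L) hα hε h16
      (hCT_cond hL hε hεL) (hK1_cond hL hε hεL) (hK1_nonneg hL)
      (a ε) (a' ε) (ha_deriv ε hε hεL) (ha'_deriv ε hε hεL)
      (ha_bc0 ε hε hεL) (ha_bc1 ε hε hεL)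
    obtain ⟨p1, p2, p3, p4, p5⟩ := hper
    set XX : ℝ := Real.arsinh (L/ε) with hXX
    set MM : ℝ := Real.sqrt (Real.sqrt XX) with hMM
    set Λ : ℝ := |Real.log ε| with hΛ
    set c : ℝ := -a' ε 0 with hc
    set e2 : ℝ := Real.exp (-(2*MM)) with he2
    set RR : ℝ := 2*α + α/2*CTc L*e2 with hRR
    have hΛ0 : 0 ≤ Λ := abs_nonneg _
    have hd : (0:ℝ) < XX - MM := by linarith
    have hc_ub : c ≤ RR/(XX - MM) := (le_div_iff₀ hd).2 p2
    have g1 := mul_le_mul_of_nonneg_left p4 hΛ0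
    have t1 := mul_le_mul_of_nonneg_left hc_ub
      (mul_nonneg (by linarith : (0:ℝ) ≤ 2*α) hΛ0)
    apply le_trans g1
    calc Λ*(2*α*c) = 2*α*Λ*c := by ring
    _ ≤ 2*α*Λ*(RR/(XX - MM)) := t1
    _ = 2*α*RR*(Λ/(XX - MM)) := by ring


/-- Energy asymptotics for the zero Fourier mode of the half-ellipse problem: if, for
each `ε ∈ (0, L/2)`, `a ε` (with derivative `a' ε`) is the solution of
`a'' = ε² e^{2ξ} a` on `[0, ξ_ε]`, `ξ_ε = arcsinh(L/ε)`, with `a(0) = 2α` and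
`a'(ξ_ε) = 0`, then `∫₀^{ξ_ε} (a')² dξ = 4α²/|log ε| + o(1/|log ε|)` as `ε → 0⁺`,
i.e. `|log ε| · ∫₀^{ξ_ε} (a')² dξ → 4α²`. -/
theorem energy_asymptotics_zero_mode
    (L α : ℝ) (hL : 0 < L) (hα : α ≠ 0)
    (a a' : ℝ → ℝ → ℝ)
    (ha_deriv : ∀ ε : ℝ, 0 < ε → ε < L / 2 →
      ∀ ξ ∈ Set.Icc 0 (Real.arsinh (L / ε)),
        HasDerivWithinAt (a ε) (a' ε ξ) (Set.Icc 0 (Real.arsinh (L / ε))) ξ)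
    (ha'_deriv : ∀ ε : ℝ, 0 < ε → ε < L / 2 →
      ∀ ξ ∈ Set.Icc 0 (Real.arsinh (L / ε)),
        HasDerivWithinAt (a' ε) (ε ^ 2 * Real.exp (2 * ξ) * a ε ξ)
          (Set.Icc 0 (Real.arsinh (L / ε))) ξ)
    (ha_bc0 : ∀ ε : ℝ, 0 < ε → ε < L / 2 → a ε 0 = 2 * α)
    (ha_bc1 : ∀ ε : ℝ, 0 < ε → ε < L / 2 → a' ε (Real.arsinh (L / ε)) = 0) :
    Tendsto
      (fun ε : ℝ => |Real.log ε| * ∫ ξ in (0 : ℝ)..(Real.arsinh (L / ε)), (a' ε ξ) ^ 2)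
      (nhdsWithin 0 (Set.Ioi 0)) (nhds (4 * α ^ 2)) := by
  rcases hα.lt_or_gt with hneg | hpos
  · have hmas := master L (-α) hL (by linarith)
      (fun ε ξ => -(a ε ξ)) (fun ε ξ => -(a' ε ξ))
      (fun ε hε hεL ξ hξ => (ha_deriv ε hε hεL ξ hξ).neg)
      (fun ε hε hεL ξ hξ => by
        have h := (ha'_deriv ε hε hεL ξ hξ).neg
        show HasDerivWithinAt (fun ξ => -(a' ε ξ)) (ε^2*Real.exp (2*ξ)*(-(a ε ξ))) _ ξ
        refine h.congr_deriv ?_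
        ring)
      (fun ε hε hεL => by show -(a ε 0) = 2*(-α); rw [ha_bc0 ε hε hεL]; ring)
      (fun ε hε hεL => by
        show -(a' ε (Real.arsinh (L/ε))) = 0
        rw [ha_bc1 ε hε hεL]; ring)
    have hval : (4*(-α)^2 : ℝ) = 4*α^2 := by ring
    rw [hval] at hmas
    have hfun : (fun ε : ℝ => |Real.log ε|
          * ∫ ξ in (0:ℝ)..(Real.arsinh (L/ε)), (-(a' ε ξ))^2)
        = fun ε : ℝ => |Real.log ε|
          * ∫ ξ in (0:ℝ)..(Real.arsinh (L/ε)), (a' ε ξ)^2 := by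
      funext ε
      congr 1
      apply intervalIntegral.integral_congr
      intro ξ _
      ring
    rw [hfun] at hmas
    exact hmas
  · exact master L α hL hpos a a' ha_deriv ha'_deriv ha_bc0 ha_bc1
end

section
/- Let L > 0 and α ∈ ℝ ∖ {0}. For every ε ∈ (0, L/2), set ξ_ε = arcsinh(L/ε) and let a_ε : [0, ξ_ε] → ℝ be the unique twice continuously differentiable function with a_ε''(ξ) = ε² e^{2ξ} a_ε(ξ) for all ξ ∈ [0, ξ_ε], a_ε(0) = 2α, and a_ε'(ξ_ε) = 0. Then there exist C > 0 and ε₀ ∈ (0, L/2) such that ε² ∫₀^{ξ_ε} e^{2ξ} (a_ε(ξ))² dξ ≤ C/(log ε)² for every ε ∈ (0, ε₀). In particular, ε² ∫₀^{ξ_ε} e^{2ξ} (a_ε(ξ))² dξ = o( ∫₀^{ξ_ε} (a_ε'(ξ))² dξ ) as ε → 0⁺. -/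
open Real Set Filter Asymptotics intervalIntegral MeasureTheory

set_option maxHeartbeats 2000000

lemma aux_key (L ε X β : ℝ) (hL : 0 < L) (hε : 0 < ε) (hβ : 0 < β)
    (hX2 : 2 ≤ X) (hXk : Real.exp 2 / L ^ 2 ≤ X)
    (hlo : 2 * L ≤ ε * Real.exp X) (hhi : ε * Real.exp X ≤ 3 * L)
    (f f' : ℝ → ℝ)
    (hf : ∀ ξ ∈ Icc 0 X, HasDerivWithinAt f (f' ξ) (Icc 0 X) ξ)
    (hf' : ∀ ξ ∈ Icc 0 X, HasDerivWithinAt f' (ε ^ 2 * Real.exp (2 * ξ) * f ξ) (Icc 0 X) ξ)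
    (h0 : f 0 = β) (h1 : f' X = 0) :
    ε ^ 2 * (∫ ξ in (0:ℝ)..X, Real.exp (2 * ξ) * f ξ ^ 2)
      ≤ (9 * L ^ 2 / 2 + 9 * Real.exp 4 / (4 * L ^ 2)) * β ^ 2 / X ^ 2
    ∧ β ^ 2 / (4 * X) ≤ ∫ ξ in (0:ℝ)..X, f' ξ ^ 2 := by
  have hX0 : (0 : ℝ) ≤ X := by linarith
  have hXpos : (0 : ℝ) < X := by linarith
  have hmem0 : (0 : ℝ) ∈ Icc 0 X := ⟨le_rfl, hX0⟩
  have hmemX : X ∈ Icc (0 : ℝ) X := ⟨hX0, le_rfl⟩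
  have hfc : ContinuousOn f (Icc 0 X) := fun x hx => (hf x hx).continuousWithinAt
  have hf'c : ContinuousOn f' (Icc 0 X) := fun x hx => (hf' x hx).continuousWithinAt
  have hqc : Continuous fun t : ℝ => ε ^ 2 * Real.exp (2 * t) := by continuity
  -- HasDerivAt at interior points
  have hf_at : ∀ x ∈ Ioo (0 : ℝ) X, HasDerivAt f (f' x) x := fun x hx =>
    (hf x (Ioo_subset_Icc_self hx)).hasDerivAt (Icc_mem_nhds hx.1 hx.2)
  have hf'_at : ∀ x ∈ Ioo (0 : ℝ) X, HasDerivAt f' (ε ^ 2 * Real.exp (2 * x) * f x) x :=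
    fun x hx => (hf' x (Ioo_subset_Icc_self hx)).hasDerivAt (Icc_mem_nhds hx.1 hx.2)
  -- continuity of the energy integrand
  have hgc : ContinuousOn (fun t => f' t ^ 2 + ε ^ 2 * Real.exp (2 * t) * f t ^ 2) (Icc 0 X) :=
    (hf'c.pow 2).add (hqc.continuousOn.mul (hfc.pow 2))
  have hgint : ∀ u v : ℝ, u ∈ Icc (0:ℝ) X → v ∈ Icc (0:ℝ) X →
      IntervalIntegrable (fun t => f' t ^ 2 + ε ^ 2 * Real.exp (2 * t) * f t ^ 2) volume u v :=
    fun u v hu hv => (hgc.mono (uIcc_subset_Icc hu hv)).intervalIntegrable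
  -- energy identity
  have energy : ∀ s ∈ Icc (0:ℝ) X,
      (∫ t in s..X, (f' t ^ 2 + ε ^ 2 * Real.exp (2 * t) * f t ^ 2)) = -(f s * f' s) := by
    intro s hs
    have hsub : Icc s X ⊆ Icc 0 X := Icc_subset_Icc hs.1 le_rfl
    have h := integral_eq_sub_of_hasDeriv_right_of_le hs.2
      (f := fun t => f t * f' t)
      ((hfc.mono hsub).mul (hf'c.mono hsub))
      (fun t ht => by
        have htI : t ∈ Ioo (0:ℝ) X := ⟨lt_of_le_of_lt hs.1 ht.1, ht.2⟩
        have hm := (hf_at t htI).mul (hf'_at t htI)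
        have : HasDerivAt (fun t => f t * f' t)
            (f' t ^ 2 + ε ^ 2 * Real.exp (2 * t) * f t ^ 2) t := by
          exact hm.congr_deriv (by ring)
        exact this.hasDerivWithinAt)
      (hgint s X hs hmemX)
    rw [h]; simp [h1]
  -- nonnegativity of f
  have hf_nonneg : ∀ x ∈ Icc (0:ℝ) X, 0 ≤ f x := by
    by_contra hcon
    push_neg at hcon
    obtain ⟨ξ₁, hξ₁, hneg⟩ := hcon
    obtain ⟨s, hsmem, hfs⟩ := intermediate_value_Icc' hξ₁.1
      (hfc.mono (Icc_subset_Icc le_rfl hξ₁.2))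
      (show (0:ℝ) ∈ Icc (f ξ₁) (f 0) from ⟨hneg.le, by rw [h0]; exact hβ.le⟩)
    have hsX : s ∈ Icc (0:ℝ) X := ⟨hsmem.1, hsmem.2.trans hξ₁.2⟩
    have hsξ : s < ξ₁ := lt_of_le_of_ne hsmem.2 (by rintro rfl; rw [hfs] at hneg; linarith)
    have hE := energy s hsX
    rw [hfs, zero_mul, neg_zero] at hE
    -- find a small interval left of ξ₁ where f is strictly negative
    have hev : ∀ᶠ x in nhdsWithin ξ₁ (Icc (0:ℝ) X), f x < f ξ₁ / 2 :=
      (hfc ξ₁ hξ₁).eventually_lt_const (by linarith)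
    obtain ⟨U, hU, hUsub⟩ := hev.exists_mem
    obtain ⟨δ, hδ, hball⟩ := Metric.mem_nhdsWithin_iff.1 hU
    set c := max s (ξ₁ - δ / 2) with hc
    have hcξ : c < ξ₁ := max_lt hsξ (by linarith)
    have hcs : s ≤ c := le_max_left _ _
    have hc0 : (0:ℝ) ≤ c := hsX.1.trans hcs
    have hcmem : c ∈ Icc (0:ℝ) X := ⟨hc0, hcξ.le.trans hξ₁.2⟩
    have hpos : 0 < ∫ t in c..ξ₁, (f' t ^ 2 + ε ^ 2 * Real.exp (2 * t) * f t ^ 2) := by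
      apply intervalIntegral_pos_of_pos_on (hgint c ξ₁ hcmem hξ₁)
      · intro x hx
        have hxmem : x ∈ Icc (0:ℝ) X := ⟨hc0.trans hx.1.le, hx.2.le.trans hξ₁.2⟩
        have hxball : x ∈ Metric.ball ξ₁ δ := by
          rw [Metric.mem_ball, Real.dist_eq, abs_sub_lt_iff]
          constructor
          · linarith [hx.2]
          · have : ξ₁ - δ / 2 ≤ c := le_max_right _ _
            have := hx.1
            linarith
        have hfx : f x < f ξ₁ / 2 := hUsub x (hball ⟨hxball, hxmem⟩)
        have hfx2 : 0 < f x ^ 2 := by nlinarith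
        have : 0 < ε ^ 2 * Real.exp (2 * x) * f x ^ 2 := by positivity
        nlinarith [sq_nonneg (f' x)]
      · exact hcξ
    have hsplit : (∫ t in s..X, (f' t ^ 2 + ε ^ 2 * Real.exp (2 * t) * f t ^ 2))
        = (∫ t in s..c, (f' t ^ 2 + ε ^ 2 * Real.exp (2 * t) * f t ^ 2))
          + (∫ t in c..ξ₁, (f' t ^ 2 + ε ^ 2 * Real.exp (2 * t) * f t ^ 2))
          + (∫ t in ξ₁..X, (f' t ^ 2 + ε ^ 2 * Real.exp (2 * t) * f t ^ 2)) := by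
      rw [integral_add_adjacent_intervals (hgint s c hsX hcmem) (hgint c ξ₁ hcmem hξ₁),
        integral_add_adjacent_intervals (hgint s ξ₁ hsX hξ₁) (hgint ξ₁ X hξ₁ hmemX)]
    have hnn : ∀ (u v : ℝ), u ≤ v →
        0 ≤ ∫ t in u..v, (f' t ^ 2 + ε ^ 2 * Real.exp (2 * t) * f t ^ 2) := by
      intro u v huv
      apply intervalIntegral.integral_nonneg huv
      intro t _
      positivity
    have h1' := hnn s c hcs
    have h2' := hnn ξ₁ X hξ₁.2
    rw [hE] at hsplit
    linarith
  -- monotonicity of f'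
  have hf'mono : MonotoneOn f' (Icc 0 X) := by
    apply monotoneOn_of_hasDerivWithinAt_nonneg (convex_Icc 0 X) hf'c
    · intro x hx
      rw [interior_Icc] at hx ⊢
      exact (hf'_at x hx).hasDerivWithinAt
    · intro x hx
      rw [interior_Icc] at hx
      exact mul_nonneg (by positivity) (hf_nonneg x (Ioo_subset_Icc_self hx))
  have hf'nonpos : ∀ x ∈ Icc (0:ℝ) X, f' x ≤ 0 := by
    intro x hx
    have := hf'mono hx hmemX hx.2
    rwa [h1] at this
  have hfanti : AntitoneOn f (Icc 0 X) := by
    apply antitoneOn_of_hasDerivWithinAt_nonpos (convex_Icc 0 X) hfc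
    · intro x hx
      rw [interior_Icc] at hx ⊢
      exact (hf_at x hx).hasDerivWithinAt
    · intro x hx
      rw [interior_Icc] at hx
      exact hf'nonpos x (Ioo_subset_Icc_self hx)
  have hfub : ∀ x ∈ Icc (0:ℝ) X, f x ≤ β := fun x hx => h0 ▸ hfanti hmem0 hx hx.1
  have hfXnn : 0 ≤ f X := hf_nonneg X hmemX
  have hflb : ∀ x ∈ Icc (0:ℝ) X, f X ≤ f x := fun x hx => hfanti hx hmemX hx.2
  -- fundamental theorem of calculus for f and f'
  have ftc : ∀ u v : ℝ, u ∈ Icc (0:ℝ) X → v ∈ Icc (0:ℝ) X → u ≤ v →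
      (∫ t in u..v, f' t) = f v - f u := by
    intro u v hu hv huv
    have hsub : Icc u v ⊆ Icc 0 X := Icc_subset_Icc hu.1 hv.2
    apply integral_eq_sub_of_hasDeriv_right_of_le huv (hfc.mono hsub)
    · intro t ht
      have htI : t ∈ Ioo (0:ℝ) X := ⟨lt_of_le_of_lt hu.1 ht.1, lt_of_lt_of_le ht.2 hv.2⟩
      exact (hf_at t htI).hasDerivWithinAt
    · exact (hf'c.mono (uIcc_subset_Icc hu hv)).intervalIntegrable
  have ftc' : ∀ u v : ℝ, u ∈ Icc (0:ℝ) X → v ∈ Icc (0:ℝ) X → u ≤ v →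
      (∫ t in u..v, ε ^ 2 * Real.exp (2 * t) * f t) = f' v - f' u := by
    intro u v hu hv huv
    have hsub : Icc u v ⊆ Icc 0 X := Icc_subset_Icc hu.1 hv.2
    apply integral_eq_sub_of_hasDeriv_right_of_le huv (hf'c.mono hsub)
    · intro t ht
      have htI : t ∈ Ioo (0:ℝ) X := ⟨lt_of_le_of_lt hu.1 ht.1, lt_of_lt_of_le ht.2 hv.2⟩
      exact (hf'_at t htI).hasDerivWithinAt
    · exact ((hqc.continuousOn.mul hfc).mono (uIcc_subset_Icc hu hv)).intervalIntegrable
  -- the potential is bounded below by k on [X-1, X]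
  set k : ℝ := 4 * L ^ 2 / Real.exp 2 with hkdef
  have hk : 0 < k := by positivity
  have hexp2X : ε ^ 2 * Real.exp (2 * X) = (ε * Real.exp X) ^ 2 := by
    rw [mul_pow, two_mul, Real.exp_add]; ring
  have hqk : ∀ t ∈ Icc (X - 1) X, k ≤ ε ^ 2 * Real.exp (2 * t) := by
    intro t ht
    have e1 : ε ^ 2 * (Real.exp (2 * X) / Real.exp 2) ≤ ε ^ 2 * Real.exp (2 * t) := by
      rw [← Real.exp_sub]
      exact mul_le_mul_of_nonneg_left (Real.exp_le_exp.2 (by linarith [ht.1])) (sq_nonneg ε)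
    have e3 : (2 * L) ^ 2 ≤ (ε * Real.exp X) ^ 2 := by
      apply pow_le_pow_left₀ (by positivity) hlo
    have e4 : k ≤ ε ^ 2 * (Real.exp (2 * X) / Real.exp 2) := by
      rw [hkdef, mul_div_assoc' (ε^2), hexp2X]
      gcongr
      nlinarith
    linarith
  have hX1mem : X - 1 ∈ Icc (0:ℝ) X := ⟨by linarith, by linarith⟩
  -- step: f' (X-1) ≤ -(k * f X)
  have step8 : f' (X - 1) ≤ -(k * f X) := by
    have hint := ftc' (X - 1) X hX1mem hmemX (by linarith)
    rw [h1, zero_sub] at hint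
    have hmono : (∫ t in (X-1)..X, k * f X) ≤ ∫ t in (X-1)..X, ε ^ 2 * Real.exp (2 * t) * f t := by
      apply integral_mono_on (by linarith)
        (intervalIntegrable_const)
        (((hqc.continuousOn.mul hfc).mono (uIcc_subset_Icc hX1mem hmemX)).intervalIntegrable)
      intro t ht
      have htX : t ∈ Icc (0:ℝ) X := ⟨by linarith [ht.1], ht.2⟩
      exact mul_le_mul (hqk t ht) (hflb t htX) hfXnn (by positivity)
    rw [intervalIntegral.integral_const, smul_eq_mul] at hmono
    have : (X - (X - 1)) = (1:ℝ) := by ring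
    rw [this, one_mul] at hmono
    linarith
  -- step: f X ≤ 2 * β / (k * X)
  have step9 : f X ≤ 2 * β / (k * X) := by
    have h9a : ∀ t ∈ Icc (0:ℝ) (X - 1), f' t ≤ -(k * f X) := by
      intro t ht
      have htX : t ∈ Icc (0:ℝ) X := ⟨ht.1, ht.2.trans (by linarith)⟩
      exact (hf'mono htX hX1mem ht.2).trans step8
    have hint := ftc 0 (X - 1) hmem0 hX1mem (by linarith)
    rw [h0] at hint
    have hmono : (∫ t in (0:ℝ)..(X-1), f' t) ≤ ∫ t in (0:ℝ)..(X-1), -(k * f X) := by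
      apply integral_mono_on (by linarith)
        ((hf'c.mono (uIcc_subset_Icc hmem0 hX1mem)).intervalIntegrable)
        (intervalIntegrable_const)
      exact h9a
    rw [intervalIntegral.integral_const, smul_eq_mul, hint] at hmono
    have hfX1 : 0 ≤ f (X - 1) := hf_nonneg (X - 1) hX1mem
    rw [le_div_iff₀ (by positivity)]
    nlinarith
  -- chord bound from convexity
  have chord : ∀ ξ ∈ Icc (0:ℝ) X, f ξ * X ≤ β * (X - ξ) + X * f X := by
    intro ξ hξ
    rcases eq_or_lt_of_le hξ.2 with heq | hlt
    · rw [heq]; nlinarith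
    · have i1 : f ξ - β ≤ ξ * f' ξ := by
        have hint := ftc 0 ξ hmem0 hξ (hξ.1)
        rw [h0] at hint
        have hmono : (∫ t in (0:ℝ)..ξ, f' t) ≤ ∫ t in (0:ℝ)..ξ, f' ξ := by
          apply integral_mono_on hξ.1
            ((hf'c.mono (uIcc_subset_Icc hmem0 hξ)).intervalIntegrable)
            (intervalIntegrable_const)
          intro t ht
          exact hf'mono ⟨ht.1, ht.2.trans hξ.2⟩ hξ ht.2
        rw [intervalIntegral.integral_const, smul_eq_mul, hint, sub_zero] at hmono
        linarith
      have i2 : (X - ξ) * f' ξ ≤ f X - f ξ := by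
        have hint := ftc ξ X hξ hmemX hξ.2
        have hmono : (∫ t in ξ..X, f' ξ) ≤ ∫ t in ξ..X, f' t := by
          apply integral_mono_on hξ.2
            (intervalIntegrable_const)
            ((hf'c.mono (uIcc_subset_Icc hξ hmemX)).intervalIntegrable)
          intro t ht
          exact hf'mono hξ ⟨hξ.1.trans ht.1, ht.2⟩ ht.1
        rw [intervalIntegral.integral_const, smul_eq_mul, hint] at hmono
        linarith
      have hf'ξ : f' ξ ≤ 0 := hf'nonpos ξ hξ
      nlinarith [mul_le_mul_of_nonneg_right i1 (by linarith : (0:ℝ) ≤ X - ξ),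
        mul_le_mul_of_nonneg_left i2 hξ.1, mul_le_mul_of_nonneg_right hξ.2 hfXnn]
  -- integrability helper
  have huIcc : uIcc (0:ℝ) X = Icc 0 X := uIcc_of_le hX0
  have hiile : ∀ g : ℝ → ℝ, ContinuousOn g (Icc 0 X) → IntervalIntegrable g volume 0 X :=
    fun g hg => (hg.mono huIcc.subset).intervalIntegrable
  -- explicit integral bounds
  have hI1 : (∫ ξ in (0:ℝ)..X, Real.exp (2 * ξ) * (X - ξ) ^ 2) ≤ Real.exp (2 * X) / 4 := by
    have hF : ∀ t ∈ uIcc (0:ℝ) X, HasDerivAt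
        (fun t => Real.exp (2 * t) * ((X - t) ^ 2 / 2 + (X - t) / 2 + 1 / 4))
        (Real.exp (2 * t) * (X - t) ^ 2) t := by
      intro t _
      have he := ((hasDerivAt_id t).const_mul (2:ℝ)).exp
      have h1' := (hasDerivAt_id t).const_sub X
      have hp := (((h1'.pow 2).div_const 2).add (h1'.div_const 2)).add_const (1/4:ℝ)
      exact (he.mul hp).congr_deriv (by simp; ring)
    rw [integral_eq_sub_of_hasDerivAt hF
      (Continuous.intervalIntegrable (by continuity) 0 X)]
    simp only [sub_self]
    have h1 : Real.exp (2 * 0) = 1 := by norm_num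
    rw [h1]
    nlinarith [Real.exp_pos (2 * X), sq_nonneg X, hXpos]
  have hI2 : (∫ ξ in (0:ℝ)..X, Real.exp (2 * ξ)) ≤ Real.exp (2 * X) / 2 := by
    have hF : ∀ t ∈ uIcc (0:ℝ) X, HasDerivAt
        (fun t => Real.exp (2 * t) / 2) (Real.exp (2 * t)) t := by
      intro t _
      have he := (((hasDerivAt_id t).const_mul (2:ℝ)).exp).div_const 2
      exact he.congr_deriv (by simp)
    rw [integral_eq_sub_of_hasDerivAt hF
      (Continuous.intervalIntegrable (by continuity) 0 X)]
    have h1 : Real.exp (2 * 0) = 1 := by norm_num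
    rw [h1]
    nlinarith [Real.exp_pos (2 * X)]
  -- pointwise bound for weighted integrand
  have hIf2 : ContinuousOn (fun t => Real.exp (2 * t) * f t ^ 2) (Icc 0 X) :=
    (Real.continuous_exp.comp (continuous_const.mul continuous_id)).continuousOn.mul (hfc.pow 2)
  have hptM : ∀ ξ ∈ Icc (0:ℝ) X, X ^ 2 * (Real.exp (2 * ξ) * f ξ ^ 2)
      ≤ 2 * β ^ 2 * (Real.exp (2 * ξ) * (X - ξ) ^ 2) + 2 * X ^ 2 * f X ^ 2 * Real.exp (2 * ξ) := by
    intro ξ hξ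
    have hch := chord ξ hξ
    have hfξ := hf_nonneg ξ hξ
    have key2 : X ^ 2 * f ξ ^ 2 ≤ 2 * β ^ 2 * (X - ξ) ^ 2 + 2 * X ^ 2 * f X ^ 2 := by
      nlinarith [mul_self_le_mul_self (mul_nonneg hfξ hX0) hch,
        sq_nonneg (β * (X - ξ) - X * f X)]
    nlinarith [mul_le_mul_of_nonneg_left key2 (Real.exp_pos (2 * ξ)).le]
  have int1 : IntervalIntegrable (fun ξ : ℝ => 2 * β ^ 2 * (Real.exp (2 * ξ) * (X - ξ) ^ 2))
      volume 0 X := Continuous.intervalIntegrable (by fun_prop) 0 X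
  have int2 : IntervalIntegrable (fun ξ : ℝ => 2 * X ^ 2 * f X ^ 2 * Real.exp (2 * ξ))
      volume 0 X := Continuous.intervalIntegrable (by fun_prop) 0 X
  have intf2 : IntervalIntegrable (fun ξ : ℝ => X ^ 2 * (Real.exp (2 * ξ) * f ξ ^ 2)) volume 0 X :=
    hiile _ (continuousOn_const.mul hIf2)
  have hintM : X ^ 2 * (∫ ξ in (0:ℝ)..X, Real.exp (2 * ξ) * f ξ ^ 2)
      ≤ 2 * β ^ 2 * (∫ ξ in (0:ℝ)..X, Real.exp (2 * ξ) * (X - ξ) ^ 2)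
        + 2 * X ^ 2 * f X ^ 2 * (∫ ξ in (0:ℝ)..X, Real.exp (2 * ξ)) := by
    rw [← intervalIntegral.integral_const_mul, ← intervalIntegral.integral_const_mul,
      ← intervalIntegral.integral_const_mul, ← intervalIntegral.integral_add int1 int2]
    exact integral_mono_on hX0 intf2 (int1.add int2) hptM
  have h9L : ε ^ 2 * Real.exp (2 * X) ≤ 9 * L ^ 2 := by
    rw [hexp2X]
    nlinarith
  have hk0 : k ≠ 0 := ne_of_gt hk
  have hXne : X ≠ 0 := ne_of_gt hXpos
  have hLne : L ≠ 0 := ne_of_gt hL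
  have hXfX : X * f X ≤ 2 * β / k := by
    have h' : X * f X ≤ X * (2 * β / (k * X)) := mul_le_mul_of_nonneg_left step9 hX0
    have heq : X * (2 * β / (k * X)) = 2 * β / k := by
      field_simp
    linarith
  have hkval : (2 * β / k) ^ 2 * (9 * L ^ 2) = 9 * Real.exp 4 / (4 * L ^ 2) * β ^ 2 := by
    rw [hkdef, show (4:ℝ) = 2 + 2 by norm_num, Real.exp_add]
    have := Real.exp_ne_zero 2
    field_simp
    ring
  have hMX : ε ^ 2 * (∫ ξ in (0:ℝ)..X, Real.exp (2 * ξ) * f ξ ^ 2) * X ^ 2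
      ≤ (9 * L ^ 2 / 2 + 9 * Real.exp 4 / (4 * L ^ 2)) * β ^ 2 := by
    have c1 : X ^ 2 * (∫ ξ in (0:ℝ)..X, Real.exp (2 * ξ) * f ξ ^ 2)
        ≤ 2 * β ^ 2 * (Real.exp (2 * X) / 4) + 2 * X ^ 2 * f X ^ 2 * (Real.exp (2 * X) / 2) := by
      refine hintM.trans ?_
      gcongr
    have c2 : ε ^ 2 * (X ^ 2 * (∫ ξ in (0:ℝ)..X, Real.exp (2 * ξ) * f ξ ^ 2))
        ≤ ε ^ 2 * (2 * β ^ 2 * (Real.exp (2 * X) / 4)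
          + 2 * X ^ 2 * f X ^ 2 * (Real.exp (2 * X) / 2)) :=
      mul_le_mul_of_nonneg_left c1 (sq_nonneg ε)
    have c3 : (X * f X) ^ 2 * (ε ^ 2 * Real.exp (2 * X)) ≤ (2 * β / k) ^ 2 * (9 * L ^ 2) :=
      mul_le_mul (pow_le_pow_left₀ (mul_nonneg hX0 hfXnn) hXfX 2) h9L
        (by positivity) (by positivity)
    have c4 : β ^ 2 / 2 * (ε ^ 2 * Real.exp (2 * X)) ≤ β ^ 2 / 2 * (9 * L ^ 2) :=
      mul_le_mul_of_nonneg_left h9L (by positivity)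
    nlinarith [c2, c3, c4, hkval]
  -- lower bound on the Dirichlet energy
  set cc : ℝ := β / (2 * X) with hccdef
  have hptE : ∀ t ∈ Icc (0:ℝ) X, 2 * cc * (-(f' t)) - cc ^ 2 ≤ f' t ^ 2 := by
    intro t _
    nlinarith [sq_nonneg (f' t + cc)]
  have intE1a : IntervalIntegrable (fun t => 2 * cc * (-(f' t))) volume 0 X :=
    hiile _ (continuousOn_const.mul hf'c.neg)
  have intE1 : IntervalIntegrable (fun t => 2 * cc * (-(f' t)) - cc ^ 2) volume 0 X :=
    intE1a.sub intervalIntegrable_const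
  have intE2 : IntervalIntegrable (fun t => f' t ^ 2) volume 0 X := hiile _ (hf'c.pow 2)
  have hmonoE := integral_mono_on hX0 intE1 intE2 hptE
  have hcompE : (∫ t in (0:ℝ)..X, (2 * cc * (-(f' t)) - cc ^ 2))
      = 2 * cc * (β - f X) - cc ^ 2 * X := by
    rw [intervalIntegral.integral_sub intE1a intervalIntegrable_const,
      intervalIntegral.integral_const_mul, intervalIntegral.integral_neg,
      ftc 0 X hmem0 hmemX hX0, h0, intervalIntegral.integral_const, smul_eq_mul]
    ring
  have hfXhalf : f X ≤ β / 2 := by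
    have hkX : (4:ℝ) ≤ k * X := by
      have h' : k * (Real.exp 2 / L ^ 2) ≤ k * X := mul_le_mul_of_nonneg_left hXk hk.le
      have heq : k * (Real.exp 2 / L ^ 2) = 4 := by
        rw [hkdef]
        have := Real.exp_ne_zero 2
        field_simp
      linarith
    have h2 : 2 * β / (k * X) ≤ β / 2 := by
      rw [div_le_div_iff₀ (by nlinarith) (by norm_num)]
      nlinarith
    exact step9.trans h2
  have hfinalE : β ^ 2 / (4 * X) ≤ 2 * cc * (β - f X) - cc ^ 2 * X := by
    rw [hccdef]
    have expand : 2 * (β / (2 * X)) * (β - f X) - (β / (2 * X)) ^ 2 * X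
        = (β * (β - f X) - β ^ 2 / 4) / X := by
      field_simp
      ring
    rw [expand, show β ^ 2 / (4 * X) = (β ^ 2 / 4) / X by ring]
    gcongr
    nlinarith [mul_le_mul_of_nonneg_left hfXhalf hβ.le]
  constructor
  · rw [le_div_iff₀ (by positivity : (0:ℝ) < X ^ 2)]
    exact hMX
  · linarith

/-- The weighted `L²` norm of the zero Fourier mode of the half-ellipse problem is
`O(1/(log ε)²)`, hence negligible compared with its Dirichlet energy as `ε → 0⁺`:
if, for each `ε ∈ (0, L/2)`, `a ε` (with derivative `a' ε`) solves
`a'' = ε² e^{2ξ} a` on `[0, ξ_ε]`, `ξ_ε = arcsinh(L/ε)`, with `a(0) = 2α`,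
`a'(ξ_ε) = 0`, then `ε² ∫₀^{ξ_ε} e^{2ξ} a² dξ ≤ C/(log ε)²` for small `ε`, and
`ε² ∫₀^{ξ_ε} e^{2ξ} a² dξ = o(∫₀^{ξ_ε} (a')² dξ)` as `ε → 0⁺`. -/
theorem weighted_L2_negligible_zero_mode
    (L α : ℝ) (hL : 0 < L) (hα : α ≠ 0)
    (a a' : ℝ → ℝ → ℝ)
    (ha_deriv : ∀ ε : ℝ, 0 < ε → ε < L / 2 →
      ∀ ξ ∈ Set.Icc 0 (Real.arsinh (L / ε)),
        HasDerivWithinAt (a ε) (a' ε ξ) (Set.Icc 0 (Real.arsinh (L / ε))) ξ)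
    (ha'_deriv : ∀ ε : ℝ, 0 < ε → ε < L / 2 →
      ∀ ξ ∈ Set.Icc 0 (Real.arsinh (L / ε)),
        HasDerivWithinAt (a' ε) (ε ^ 2 * Real.exp (2 * ξ) * a ε ξ)
          (Set.Icc 0 (Real.arsinh (L / ε))) ξ)
    (ha_bc0 : ∀ ε : ℝ, 0 < ε → ε < L / 2 → a ε 0 = 2 * α)
    (ha_bc1 : ∀ ε : ℝ, 0 < ε → ε < L / 2 → a' ε (Real.arsinh (L / ε)) = 0) :
    (∃ C : ℝ, 0 < C ∧ ∃ ε₀ : ℝ, 0 < ε₀ ∧ ε₀ < L / 2 ∧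
      ∀ ε : ℝ, 0 < ε → ε < ε₀ →
        ε ^ 2 * ∫ ξ in (0 : ℝ)..(Real.arsinh (L / ε)),
            Real.exp (2 * ξ) * (a ε ξ) ^ 2
          ≤ C / (Real.log ε) ^ 2) ∧
    (fun ε : ℝ => ε ^ 2 * ∫ ξ in (0 : ℝ)..(Real.arsinh (L / ε)),
        Real.exp (2 * ξ) * (a ε ξ) ^ 2)
      =o[nhdsWithin 0 (Set.Ioi 0)]
    (fun ε : ℝ => ∫ ξ in (0 : ℝ)..(Real.arsinh (L / ε)), (a' ε ξ) ^ 2) := by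
  have hLne : L ≠ 0 := ne_of_gt hL
  set C₁ : ℝ := 9 * L ^ 2 / 2 + 9 * Real.exp 4 / (4 * L ^ 2) with hC₁def
  have hC₁ : 0 < C₁ := by rw [hC₁def]; positivity
  have habsα : 0 < |α| := abs_pos.2 hα
  set β : ℝ := 2 * |α| with hβdef
  have hβ : 0 < β := by rw [hβdef]; linarith
  set B : ℝ := 2 * |Real.log L| + 2 + Real.exp 2 / L ^ 2 + 1 with hBdef
  have hB : 0 < B := by rw [hBdef]; positivity
  set ε₀ : ℝ := min (L / 4) (Real.exp (-B)) with hε₀def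
  clear_value C₁ β B
  have hε₀pos : 0 < ε₀ := lt_min (by linarith) (Real.exp_pos _)
  have hε₀half : ε₀ < L / 2 := lt_of_le_of_lt (min_le_left _ _) (by linarith)
  have hfacts : ∀ ε : ℝ, 0 < ε → ε < ε₀ →
      (ε < L / 2 ∧ 2 ≤ Real.arsinh (L / ε) ∧ Real.exp 2 / L ^ 2 ≤ Real.arsinh (L / ε) ∧
       -Real.log ε ≤ 2 * Real.arsinh (L / ε) ∧ 0 < -Real.log ε ∧
       2 * L ≤ ε * Real.exp (Real.arsinh (L / ε)) ∧
       ε * Real.exp (Real.arsinh (L / ε)) ≤ 3 * L) := by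
    intro ε hε hεε₀
    have hεL4 : ε < L / 4 := lt_of_lt_of_le hεε₀ (min_le_left _ _)
    have hεL2 : ε < L / 2 := by linarith
    have hεne : ε ≠ 0 := ne_of_gt hε
    have hy : 0 < L / ε := div_pos hL hε
    have hexpX : Real.exp (Real.arsinh (L / ε)) = L / ε + Real.sqrt (1 + (L / ε) ^ 2) :=
      Real.exp_arsinh _
    have hsq1 : L / ε ≤ Real.sqrt (1 + (L / ε) ^ 2) := by
      calc L / ε = Real.sqrt ((L / ε) ^ 2) := (Real.sqrt_sq hy.le).symm
        _ ≤ Real.sqrt (1 + (L / ε) ^ 2) := Real.sqrt_le_sqrt (by linarith)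
    have hsq2 : Real.sqrt (1 + (L / ε) ^ 2) ≤ 1 + L / ε := by
      calc Real.sqrt (1 + (L / ε) ^ 2) ≤ Real.sqrt ((1 + L / ε) ^ 2) :=
            Real.sqrt_le_sqrt (by nlinarith)
        _ = 1 + L / ε := Real.sqrt_sq (by positivity)
    have hlo : 2 * L ≤ ε * Real.exp (Real.arsinh (L / ε)) := by
      have h' : ε * (L / ε + L / ε) ≤ ε * Real.exp (Real.arsinh (L / ε)) :=
        mul_le_mul_of_nonneg_left (by rw [hexpX]; linarith) hε.le
      have heq : ε * (L / ε + L / ε) = 2 * L := by field_simp; ring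
      linarith
    have hhi : ε * Real.exp (Real.arsinh (L / ε)) ≤ 3 * L := by
      have h' : ε * Real.exp (Real.arsinh (L / ε)) ≤ ε * (L / ε + (1 + L / ε)) :=
        mul_le_mul_of_nonneg_left (by rw [hexpX]; linarith) hε.le
      have heq : ε * (L / ε + (1 + L / ε)) = 2 * L + ε := by field_simp; ring
      linarith
    have hlogX : Real.log L - Real.log ε ≤ Real.arsinh (L / ε) := by
      have h1 : Real.log (L / ε) ≤ Real.arsinh (L / ε) := by
        rw [← Real.log_exp (Real.arsinh (L / ε))]
        apply Real.log_le_log hy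
        rw [hexpX]
        nlinarith [Real.sqrt_nonneg (1 + (L / ε) ^ 2)]
      rwa [Real.log_div hLne hεne] at h1
    have hεexp : ε < Real.exp (-B) := lt_of_lt_of_le hεε₀ (min_le_right _ _)
    have hlogε : Real.log ε < -B := by
      calc Real.log ε < Real.log (Real.exp (-B)) := Real.log_lt_log hε hεexp
        _ = -B := Real.log_exp _
    have habs2 : -|Real.log L| ≤ Real.log L := neg_abs_le _
    have hBval : B = 2 * |Real.log L| + 2 + Real.exp 2 / L ^ 2 + 1 := hBdef
    have heL2 : 0 < Real.exp 2 / L ^ 2 := by positivity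
    have habsnn : 0 ≤ |Real.log L| := abs_nonneg _
    have hBgt : B < -Real.log ε := by linarith
    refine ⟨hεL2, ?_, ?_, ?_, by linarith, hlo, hhi⟩
    · linarith
    · linarith
    · linarith
  have hmain : ∀ ε : ℝ, 0 < ε → ε < ε₀ →
      (ε ^ 2 * (∫ ξ in (0:ℝ)..(Real.arsinh (L / ε)), Real.exp (2 * ξ) * (a ε ξ) ^ 2)
          ≤ C₁ * β ^ 2 / (Real.arsinh (L / ε)) ^ 2
        ∧ β ^ 2 / (4 * Real.arsinh (L / ε))
          ≤ ∫ ξ in (0:ℝ)..(Real.arsinh (L / ε)), (a' ε ξ) ^ 2) := by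
    intro ε hε hεε₀
    obtain ⟨hεL2, hX2, hXk, hR2X, hR0, hlo, hhi⟩ := hfacts ε hε hεε₀
    rw [hC₁def]
    rcases hα.lt_or_gt with hαneg | hαpos
    · have hkey := aux_key L ε (Real.arsinh (L / ε)) β hL hε hβ hX2 hXk hlo hhi
        (fun ξ => -(a ε ξ)) (fun ξ => -(a' ε ξ))
        (fun ξ hξ => (ha_deriv ε hε hεL2 ξ hξ).neg)
        (fun ξ hξ => (ha'_deriv ε hε hεL2 ξ hξ).neg.congr_deriv (by ring))
        (by show -(a ε 0) = β; rw [ha_bc0 ε hε hεL2, hβdef, abs_of_neg hαneg]; ring)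
        (by show -(a' ε (Real.arsinh (L / ε))) = 0; rw [ha_bc1 ε hε hεL2]; ring)
      simpa [neg_sq] using hkey
    · have hkey := aux_key L ε (Real.arsinh (L / ε)) β hL hε hβ hX2 hXk hlo hhi
        (a ε) (a' ε)
        (ha_deriv ε hε hεL2) (ha'_deriv ε hε hεL2)
        (by rw [ha_bc0 ε hε hεL2, hβdef, abs_of_pos hαpos])
        (ha_bc1 ε hε hεL2)
      exact hkey
  constructor
  · refine ⟨4 * C₁ * β ^ 2, by nlinarith [mul_pos hC₁ (pow_pos hβ 2)], ε₀, hε₀pos, hε₀half, ?_⟩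
    intro ε hε hεε₀
    obtain ⟨hbound, _⟩ := hmain ε hε hεε₀
    obtain ⟨_, hX2, _, hR2X, hR0, _, _⟩ := hfacts ε hε hεε₀
    set X := Real.arsinh (L / ε) with hXdef
    have hXpos : (0:ℝ) < X := by linarith
    have hlogsq : (Real.log ε) ^ 2 ≤ 4 * X ^ 2 := by nlinarith
    have hlogpos : 0 < (Real.log ε) ^ 2 := by nlinarith
    refine hbound.trans ?_
    rw [div_le_div_iff₀ (by positivity) hlogpos]
    nlinarith [mul_le_mul_of_nonneg_left hlogsq (mul_nonneg hC₁.le (sq_nonneg β))]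
  · rw [Asymptotics.isLittleO_iff]
    intro c hc
    have hδpos : 0 < min ε₀ (Real.exp (-(8 * C₁ / c))) := lt_min hε₀pos (Real.exp_pos _)
    filter_upwards [Ioo_mem_nhdsGT_of_mem (Set.left_mem_Ico.2 hδpos)] with ε hεmem
    obtain ⟨hε0, hεδ⟩ := hεmem
    have hεε₀ : ε < ε₀ := lt_of_lt_of_le hεδ (min_le_left _ _)
    obtain ⟨hbound, hEbound⟩ := hmain ε hε0 hεε₀
    obtain ⟨_, hX2, _, hR2X, hR0, _, _⟩ := hfacts ε hε0 hεε₀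
    set X := Real.arsinh (L / ε) with hXdef
    have hXpos : (0:ℝ) < X := by linarith
    have hεsmall : ε < Real.exp (-(8 * C₁ / c)) := lt_of_lt_of_le hεδ (min_le_right _ _)
    have hlogsmall : Real.log ε < -(8 * C₁ / c) := by
      calc Real.log ε < Real.log (Real.exp (-(8 * C₁ / c))) := Real.log_lt_log hε0 hεsmall
        _ = -(8 * C₁ / c) := Real.log_exp _
    have hXc : 4 * C₁ / c ≤ X := by
      have h1 : 8 * C₁ / c < -Real.log ε := by linarith
      have h2 : 8 * C₁ / c ≤ 2 * X := by linarith
      have h3 : 4 * C₁ / c = (8 * C₁ / c) / 2 := by ring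
      linarith
    have hM0 : 0 ≤ ε ^ 2 * ∫ ξ in (0:ℝ)..X, Real.exp (2 * ξ) * (a ε ξ) ^ 2 :=
      mul_nonneg (sq_nonneg ε)
        (intervalIntegral.integral_nonneg (by linarith) (fun u _ => by positivity))
    have hE0 : 0 ≤ ∫ ξ in (0:ℝ)..X, (a' ε ξ) ^ 2 := by
      have hb : 0 ≤ β ^ 2 / (4 * X) := by positivity
      linarith
    simp only [Real.norm_eq_abs]
    rw [abs_of_nonneg hM0, abs_of_nonneg hE0]
    have h4C : 4 * C₁ ≤ X * c := (div_le_iff₀ hc).1 hXc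
    have hstep : C₁ * β ^ 2 / X ^ 2 ≤ c * (β ^ 2 / (4 * X)) := by
      rw [show c * (β ^ 2 / (4 * X)) = c * β ^ 2 / (4 * X) by ring,
        div_le_div_iff₀ (by positivity) (by positivity)]
      nlinarith [mul_le_mul_of_nonneg_right h4C (mul_nonneg (sq_nonneg β) hXpos.le)]
    calc ε ^ 2 * ∫ ξ in (0:ℝ)..X, Real.exp (2 * ξ) * (a ε ξ) ^ 2
        ≤ C₁ * β ^ 2 / X ^ 2 := hbound
      _ ≤ c * (β ^ 2 / (4 * X)) := hstep
      _ ≤ c * ∫ ξ in (0:ℝ)..X, (a' ε ξ) ^ 2 := mul_le_mul_of_nonneg_left hEbound hc.le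
end
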